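/- arXiv:2103.13489 — 11 statements merged into one kernel-verified Lean document; each statement's English description precedes it below -/
import Mathlib

section
/- Let A be a reduced real matrix with k rows and ℓ columns, and suppose k ≥ ℓ. Then |Ω(A)| ≤ 2^(ℓ−1). -/
set_option maxHeartbeats 1000000

/-- `OmegaM A` is the set of (0,1)-vectors `b` such that `A · b` is a (0,1)-vector. -/
def OmegaM {k l : ℕ} (A : Matrix (Fin k) (Fin l) ℝ) : Set (Fin l → ℝ) :=
  {b | (∀ j, b j = 0 ∨ b j = 1) ∧ ∀ i, A.mulVec b i = 0 ∨ A.mulVec b i = 1}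

/-- The weight of a vector: the number of its nonzero components. -/
noncomputable def wt {l : ℕ} (v : Fin l → ℝ) : ℕ := Set.ncard {j | v j ≠ 0}

/-- A real matrix is reduced if its rows are pairwise distinct and each row has
weight at least 2. -/
def ReducedMat {k l : ℕ} (A : Matrix (Fin k) (Fin l) ℝ) : Prop :=
  (∀ i₁ i₂ : Fin k, A i₁ = A i₂ → i₁ = i₂) ∧ ∀ i, 2 ≤ wt (A i)

namespace Omg
open Finset
attribute [local instance] Classical.propDecidable

noncomputable section

variable {N : ℕ}

def bR (b : Bool) : ℝ := if b then 1 else 0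

lemma bR_mem (b : Bool) : bR b = 0 ∨ bR b = 1 := by
  cases b <;> simp [bR]

lemma bR_inj {x y : Bool} (h : bR x = bR y) : x = y := by
  cases x <;> cases y <;> simp [bR] at h ⊢

def dotB (a : Fin N → ℝ) (b : Fin N → Bool) : ℝ := ∑ t, a t * bR (b t)

/-- target-pair membership -/
def pOK (x c : ℝ) : Prop := x = c ∨ x = c + 1

def Sat (a : Fin N → ℝ) (c : ℝ) (b : Fin N → Bool) : Prop := pOK (dotB a b) c

def wtF (a : Fin N → ℝ) : ℕ := (univ.filter (fun t => a t ≠ 0)).card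

def GOOD (a : Fin N → ℝ) (c : ℝ) : Prop :=
  2 ≤ wtF a ∨ ∃ t, ¬(pOK 0 c ∧ pOK (a t) c)

def Cyl (Fr : Finset (Fin N)) (φ : Fin N → Bool) : Finset (Fin N → Bool) :=
  univ.filter fun b => ∀ t, t ∉ Fr → b t = φ t

def Sol (I : Finset ℕ) (r : ℕ → Fin N → ℝ) (c : ℕ → ℝ) (Fr : Finset (Fin N))
    (φ : Fin N → Bool) : Finset (Fin N → Bool) :=
  (Cyl Fr φ).filter fun b => ∀ i ∈ I, Sat (r i) (c i) b

lemma Sol_subset_Cyl {I : Finset ℕ} {r : ℕ → Fin N → ℝ} {c : ℕ → ℝ}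
    {Fr : Finset (Fin N)} {φ : Fin N → Bool} : Sol I r c Fr φ ⊆ Cyl Fr φ :=
  filter_subset _ _

lemma mem_Sol {I : Finset ℕ} {r : ℕ → Fin N → ℝ} {c : ℕ → ℝ}
    {Fr : Finset (Fin N)} {φ : Fin N → Bool} {b : Fin N → Bool} :
    b ∈ Sol I r c Fr φ ↔ ((∀ t, t ∉ Fr → b t = φ t) ∧ ∀ i ∈ I, Sat (r i) (c i) b) := by
  simp [Sol, Cyl]

lemma card_Cyl (Fr : Finset (Fin N)) (φ : Fin N → Bool) :
    (Cyl Fr φ).card = 2 ^ Fr.card := by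
  classical
  have : (Cyl Fr φ).card = Fintype.card ({ t // t ∈ Fr } → Bool) := by
    apply Finset.card_bij (fun b _ => fun t : {t // t ∈ Fr} => b t.1)
    · intro a ha; exact Finset.mem_univ _
    · intro b₁ h₁ b₂ h₂ h
      funext t
      by_cases ht : t ∈ Fr
      · exact congrFun h ⟨t, ht⟩
      · simp only [Cyl, mem_filter] at h₁ h₂
        rw [h₁.2 t ht, h₂.2 t ht]
    · intro g _
      refine ⟨fun t => if h : t ∈ Fr then g ⟨t, h⟩ else φ t, ?_, ?_⟩
      · simp only [Cyl, mem_filter, mem_univ, true_and]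
        intro t ht; simp [ht]
      · funext t; simp [t.2]
  rw [this]
  simp

/-- Determination lemma: if members of S are determined by coordinates outside D,
then `S.card ≤ 2 ^ (Fr.card - D.card)`. -/
lemma det_card {S : Finset (Fin N → Bool)} {Fr D : Finset (Fin N)} {φ : Fin N → Bool}
    (hS : S ⊆ Cyl Fr φ) (hD : D ⊆ Fr)
    (h : ∀ b ∈ S, ∀ b' ∈ S, (∀ t, t ∉ D → b t = b' t) → b = b') :
    S.card ≤ 2 ^ (Fr.card - D.card) := by
  classical
  have key : S.card ≤ (Cyl (Fr \ D) (fun t => if t ∈ D then false else φ t)).card := by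
    apply Finset.card_le_card_of_injOn (fun b t => if t ∈ D then false else b t)
    · intro b hb
      simp only [Cyl, mem_filter, mem_univ, true_and, Finset.coe_filter, Set.mem_setOf_eq]
      intro t ht
      by_cases htD : t ∈ D
      · simp [htD]
      · have htF : t ∉ Fr := by
          intro hF; exact ht (Finset.mem_sdiff.2 ⟨hF, htD⟩)
        have := (Finset.mem_filter.1 (hS hb)).2 t htF
        simp [htD, this]
    · intro b₁ h₁ b₂ h₂ heq
      apply h b₁ h₁ b₂ h₂
      intro t ht
      have := congrFun heq t
      simpa [ht] using this
  calc S.card ≤ _ := key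
    _ = 2 ^ (Fr \ D).card := card_Cyl _ _
    _ = 2 ^ (Fr.card - D.card) := by rw [Finset.card_sdiff_of_subset hD]

lemma card_Sol_le {I : Finset ℕ} {r : ℕ → Fin N → ℝ} {c : ℕ → ℝ}
    {Fr : Finset (Fin N)} {φ : Fin N → Bool} :
    (Sol I r c Fr φ).card ≤ 2 ^ Fr.card := by
  calc (Sol I r c Fr φ).card ≤ (Cyl Fr φ).card := Finset.card_le_card Sol_subset_Cyl
    _ = 2 ^ Fr.card := card_Cyl _ _

/-- dot decomposition at a coordinate -/
lemma dot_update (a : Fin N → ℝ) (b : Fin N → Bool) (j : Fin N) :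
    dotB a b = dotB (Function.update a j 0) b + a j * bR (b j) := by
  classical
  unfold dotB
  rw [← Finset.sum_erase_add (univ) _ (mem_univ j),
      ← Finset.sum_erase_add (univ) (fun t => Function.update a j 0 t * bR (b t)) (mem_univ j)]
  have he : ∑ t ∈ univ.erase j, Function.update a j 0 t * bR (b t)
      = ∑ t ∈ univ.erase j, a t * bR (b t) := by
    apply Finset.sum_congr rfl
    intro t ht
    rw [Function.update_of_ne (Finset.ne_of_mem_erase ht)]
  rw [he]
  simp only [Function.update_self]
  ring

lemma dotB_neg (a : Fin N → ℝ) (b : Fin N → Bool) : dotB (-a) b = -dotB a b := by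
  unfold dotB
  rw [← Finset.sum_neg_distrib]
  apply Finset.sum_congr rfl
  intro t _
  simp

/-- pOK for negated vector -/
lemma pOK_neg {x c : ℝ} : pOK (-x) c ↔ pOK x (-c - 1) := by
  unfold pOK; constructor <;> rintro (h | h) <;> [right; left; right; left] <;> linarith

/-- two different aligned targets intersect in at most one point -/
lemma pOK_two {x y c c' : ℝ} (hcc : c ≠ c') (hx : pOK x c) (hx' : pOK x c')
    (hy : pOK y c) (hy' : pOK y c') : x = y := by
  rcases hx with h1 | h1 <;> rcases hx' with h2 | h2 <;> rcases hy with h3 | h3 <;>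
    rcases hy' with h4 | h4 <;> first | linarith | (exfalso; exact hcc (by linarith))

/-- targets at distance ≥ 2 are disjoint -/
lemma pOK_far {x c c' : ℝ} (h : c' = c + 2 ∨ c = c' + 2) (hx : pOK x c) (hx' : pOK x c') :
    False := by
  rcases hx with h1 | h1 <;> rcases hx' with h2 | h2 <;> rcases h with h3 | h3 <;> linarith

end
end Omg
-- appended to base
namespace Omg
open Finset
attribute [local instance] Classical.propDecidable
noncomputable section
variable {N : ℕ}

lemma wtF_eq_zero {a : Fin N → ℝ} (h : wtF a = 0) : ∀ t, a t = 0 := by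
  intro t
  by_contra ht
  have hmem : t ∈ univ.filter (fun t => a t ≠ 0) := by simp [ht]
  unfold wtF at h
  rw [Finset.card_eq_zero] at h
  simp [h] at hmem

lemma dotB_zero {a : Fin N → ℝ} (h : ∀ t, a t = 0) (b : Fin N → Bool) : dotB a b = 0 := by
  unfold dotB
  apply Finset.sum_eq_zero
  intro t _
  simp [h t]

lemma wt_single {a : Fin N → ℝ} (h : wtF a ≤ 1) {t : Fin N} (ht : a t ≠ 0) :
    ∀ s, s ≠ t → a s = 0 := by
  intro s hs
  by_contra hsa
  have hsub : ({s, t} : Finset (Fin N)) ⊆ univ.filter (fun u => a u ≠ 0) := by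
    intro u hu
    simp only [Finset.mem_insert, Finset.mem_singleton] at hu
    rcases hu with rfl | rfl <;> simp [hsa, ht]
  have : 2 ≤ wtF a := by
    calc 2 = ({s, t} : Finset (Fin N)).card := by rw [Finset.card_insert_of_notMem (by simp [hs]), Finset.card_singleton]
      _ ≤ _ := Finset.card_le_card hsub
  omega

lemma dot_single {a : Fin N → ℝ} (h : wtF a ≤ 1) {t : Fin N} (ht : a t ≠ 0)
    (b : Fin N → Bool) : dotB a b = a t * bR (b t) := by
  unfold dotB
  apply Finset.sum_eq_single
  · intro s _ hs
    rw [wt_single h ht s hs]; ring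
  · intro h'; simp at h'

lemma dot_diff_support {w : Fin N → ℝ} {b b' : Fin N → Bool} {D : Finset (Fin N)}
    (h : ∀ t, t ∉ D → b t = b' t) :
    dotB w b - dotB w b' = ∑ t ∈ D, w t * (bR (b t) - bR (b' t)) := by
  unfold dotB
  rw [← Finset.sum_sub_distrib]
  rw [← Finset.sum_subset (Finset.subset_univ D)]
  · apply Finset.sum_congr rfl; intro t _; ring
  · intro t _ htD
    rw [h t htD]; ring

/-- Flat bound from a weight ≤ 1 GOOD constraint. -/
lemma flat_wt1 {I : Finset ℕ} {r : ℕ → Fin N → ℝ} {c : ℕ → ℝ} {Fr : Finset (Fin N)}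
    {φ : Fin N → Bool} {i : ℕ} (hi : i ∈ I)
    (hsupp : ∀ t, t ∉ Fr → r i t = 0)
    (hG : GOOD (r i) (c i)) (hw : wtF (r i) ≤ 1) :
    (Sol I r c Fr φ).card ≤ 2 ^ (Fr.card - 1) := by
  classical
  by_cases hz : wtF (r i) = 0
  · -- unsat: S = ∅
    have h0 : ¬ pOK 0 (c i) := by
      rcases hG with hG | ⟨t, hG⟩
      · omega
      · have := wtF_eq_zero hz t
        intro hp; exact hG ⟨hp, by rw [this]; exact hp⟩
    have : Sol I r c Fr φ = ∅ := by
      rw [Finset.eq_empty_iff_forall_notMem]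
      intro b hb
      have hs := (mem_Sol.1 hb).2 i hi
      unfold Sat at hs
      rw [dotB_zero (wtF_eq_zero hz)] at hs
      exact h0 hs
    simp [this]
  · -- weight exactly 1 : determined coordinate
    have h1 : wtF (r i) = 1 := by omega
    have hex : ∃ t, r i t ≠ 0 := by
      by_contra h
      push_neg at h
      have : wtF (r i) = 0 := by
        unfold wtF
        rw [Finset.card_eq_zero]; ext t; simp [h t]
      omega
    obtain ⟨t, ht⟩ := hex
    have htF : t ∈ Fr := by
      by_contra h; exact ht (hsupp t h)
    have hDsub : ({t} : Finset (Fin N)) ⊆ Fr := by simpa using htF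
    have := det_card (S := Sol I r c Fr φ) Sol_subset_Cyl hDsub ?_
    · simpa using this
    · intro b hb b' hb' hagree
      by_cases hbt : b t = b' t
      · funext s
        by_cases hst : s = t
        · rw [hst]; exact hbt
        · exact hagree s (by simp [hst])
      · exfalso
        have hsb := (mem_Sol.1 hb).2 i hi
        have hsb' := (mem_Sol.1 hb').2 i hi
        unfold Sat at hsb hsb'
        rw [dot_single hw ht] at hsb hsb'
        -- values of the pair {0, r i t} both satisfy pOK
        have hvals : pOK 0 (c i) ∧ pOK (r i t) (c i) := by
          cases hb1 : b t
          · cases hb2 : b' t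
            · exact absurd (by rw [hb1, hb2]) hbt
            · rw [hb1] at hsb; rw [hb2] at hsb'
              exact ⟨by simpa [bR] using hsb, by simpa [bR] using hsb'⟩
          · cases hb2 : b' t
            · rw [hb1] at hsb; rw [hb2] at hsb'
              exact ⟨by simpa [bR] using hsb', by simpa [bR] using hsb⟩
            · exact absurd (by rw [hb1, hb2]) hbt
        rcases hG with hG | ⟨t₀, hG⟩
        · omega
        · by_cases ht₀ : r i t₀ = 0
          · exact hG ⟨hvals.1, by rw [ht₀]; exact hvals.1⟩
          · have : t₀ = t := by
              by_contra hne
              exact ht₀ (wt_single hw ht t₀ hne)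
            rw [this] at hG
            exact hG hvals

/-- Flat bound from a "doubly constrained direction": all members have dotB w b in two
different aligned pairs. -/
lemma flat_pair {S : Finset (Fin N → Bool)} {Fr : Finset (Fin N)} {φ : Fin N → Bool}
    (hS : S ⊆ Cyl Fr φ) {w : Fin N → ℝ} {t : Fin N} (htF : t ∈ Fr) (htw : w t ≠ 0)
    {c₁ c₂ : ℝ} (hne : c₁ ≠ c₂)
    (h : ∀ b ∈ S, pOK (dotB w b) c₁ ∧ pOK (dotB w b) c₂) :
    S.card ≤ 2 ^ (Fr.card - 1) := by
  have hDsub : ({t} : Finset (Fin N)) ⊆ Fr := by simpa using htF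
  have := det_card hS hDsub ?_
  · simpa using this
  · intro b hb b' hb' hagree
    have hx := h b hb
    have hx' := h b' hb'
    have heq : dotB w b = dotB w b' := pOK_two hne hx.1 hx.2 hx'.1 hx'.2
    have hdiff := dot_diff_support (w := w) (D := ({t} : Finset (Fin N)))
      (b := b) (b' := b') (fun s hs => hagree s (by simpa using hs))
    rw [heq] at hdiff
    simp only [Finset.sum_singleton, sub_self] at hdiff
    have : bR (b t) = bR (b' t) := by
      have h2 : w t * (bR (b t) - bR (b' t)) = 0 := hdiff.symm
      rcases mul_eq_zero.1 h2 with h3 | h3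
      · exact absurd h3 htw
      · linarith
    have hbt : b t = b' t := bR_inj this
    funext s
    by_cases hst : s = t
    · rw [hst]; exact hbt
    · exact hagree s (by simp [hst])

/-- split of the solution count at coordinate j -/
lemma Sol_split (S : Finset (Fin N → Bool)) (j : Fin N) :
    S.card = (S.filter (fun b => b j = false)).card + (S.filter (fun b => b j = true)).card := by
  rw [← Finset.card_filter_add_card_filter_not (p := fun b => b j = false)]
  congr 1
  apply Finset.card_bij (fun b _ => b)
  · intro b hb
    simp only [Finset.mem_filter] at hb ⊢
    exact ⟨hb.1, by simpa using hb.2⟩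
  · intro b₁ h₁ b₂ h₂ h; exact h
  · intro b hb
    refine ⟨b, ?_, rfl⟩
    simp only [Finset.mem_filter] at hb ⊢
    exact ⟨hb.1, by simpa using hb.2⟩

/-- the half of a solution set is a solution set of the descended system -/
lemma half_eq {I : Finset ℕ} {r : ℕ → Fin N → ℝ} {c : ℕ → ℝ} {Fr : Finset (Fin N)}
    {φ : Fin N → Bool} {j : Fin N} (hj : j ∈ Fr) (ε : Bool) :
    (Sol I r c Fr φ).filter (fun b => b j = ε)
      = Sol I (fun i => Function.update (r i) j 0) (fun i => c i - r i j * bR ε)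
          (Fr.erase j) (Function.update φ j ε) := by
  ext b
  simp only [Finset.mem_filter, mem_Sol]
  constructor
  · rintro ⟨⟨hcyl, hsat⟩, hbj⟩
    refine ⟨?_, ?_⟩
    · intro t ht
      by_cases htj : t = j
      · subst htj; simp [Function.update_self, hbj]
      · rw [Function.update_of_ne htj]
        exact hcyl t (by intro hF; exact ht (Finset.mem_erase.2 ⟨htj, hF⟩))
    · intro i hi
      have := hsat i hi
      unfold Sat at this ⊢
      rw [dot_update (r i) b j, hbj] at this
      unfold pOK at this ⊢
      rcases this with h | h
      · left; linarith
      · right; linarith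
  · rintro ⟨hcyl, hsat⟩
    have hbj : b j = ε := by
      have := hcyl j (by simp)
      simpa [Function.update_self] using this
    refine ⟨⟨?_, ?_⟩, hbj⟩
    · intro t ht
      have htj : t ≠ j := by
        intro h; subst h; exact ht hj
      have := hcyl t (by simp [htj, ht])
      rwa [Function.update_of_ne htj] at this
    · intro i hi
      have := hsat i hi
      unfold Sat at this ⊢
      rw [dot_update (r i) b j, hbj]
      unfold pOK at this ⊢
      rcases this with h | h
      · left; linarith
      · right; linarith

end
end Omg
namespace Omg
open Finset
attribute [local instance] Classical.propDecidable
noncomputable section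
variable {N : ℕ}

/-- Flat bound when some entry is outside {-1,0,1} -/
lemma flat_bigentry {I : Finset ℕ} {r : ℕ → Fin N → ℝ} {c : ℕ → ℝ} {Fr : Finset (Fin N)}
    {φ : Fin N → Bool} {i : ℕ} (hi : i ∈ I) (hsupp : ∀ t, t ∉ Fr → r i t = 0)
    {t : Fin N} (hbig : ¬(r i t = -1 ∨ r i t = 0 ∨ r i t = 1)) :
    (Sol I r c Fr φ).card ≤ 2 ^ (Fr.card - 1) := by
  push_neg at hbig
  obtain ⟨h1, h0, h2⟩ := hbig
  have htF : t ∈ Fr := by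
    by_contra h; exact h0 (hsupp t h)
  have hDsub : ({t} : Finset (Fin N)) ⊆ Fr := by simpa using htF
  have := det_card (S := Sol I r c Fr φ) Sol_subset_Cyl hDsub ?_
  · simpa using this
  · intro b hb b' hb' hagree
    by_cases hbt : b t = b' t
    · funext s
      by_cases hst : s = t
      · rw [hst]; exact hbt
      · exact hagree s (by simp [hst])
    · exfalso
      have hsb := (mem_Sol.1 hb).2 i hi
      have hsb' := (mem_Sol.1 hb').2 i hi
      unfold Sat at hsb hsb'
      have hdiff := dot_diff_support (w := r i) (D := ({t} : Finset (Fin N)))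
        (b := b) (b' := b') (fun s hs => hagree s (by simpa using hs))
      simp only [Finset.sum_singleton] at hdiff
      have hbr : bR (b t) - bR (b' t) = 1 ∨ bR (b t) - bR (b' t) = -1 := by
        cases hb1 : b t <;> cases hb2 : b' t
        · exact absurd (hb1.trans hb2.symm) hbt
        · right; norm_num [bR]
        · left; norm_num [bR]
        · exact absurd (hb1.trans hb2.symm) hbt
      unfold pOK at hsb hsb'
      rcases hbr with h | h <;> rw [h] at hdiff <;>
        rcases hsb with h3 | h3 <;> rcases hsb' with h4 | h4 <;>
        first
          | exact h0 (by linarith)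
          | exact h1 (by linarith)
          | exact h2 (by linarith)

/-- Flat bound from two constraints with equal (or opposite) vectors. -/
lemma flat_samevec {I : Finset ℕ} {r : ℕ → Fin N → ℝ} {c : ℕ → ℝ} {Fr : Finset (Fin N)}
    {φ : Fin N → Bool} {i i' : ℕ} (hi : i ∈ I) (hi' : i' ∈ I)
    (hsupp : ∀ t, t ∉ Fr → r i t = 0) (hw : 2 ≤ wtF (r i))
    (hrel : r i = r i' ∨ r i = -r i')
    (hsh : (r i = r i' → c i ≠ c i') ∧ (r i = -r i' → c i ≠ -c i' - 1)) :
    (Sol I r c Fr φ).card ≤ 2 ^ (Fr.card - 1) := by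
  have hex : ∃ t, r i t ≠ 0 := by
    by_contra h
    push_neg at h
    have : wtF (r i) = 0 := by
      unfold wtF; rw [Finset.card_eq_zero]; ext u; simp [h u]
    omega
  obtain ⟨t, ht⟩ := hex
  have htF : t ∈ Fr := by
    by_contra h; exact ht (hsupp t h)
  rcases hrel with hrel | hrel
  · apply flat_pair (w := r i) (t := t) Sol_subset_Cyl htF ht (hsh.1 hrel)
    intro b hb
    have h1 := (mem_Sol.1 hb).2 i hi
    have h2 := (mem_Sol.1 hb).2 i' hi'
    unfold Sat at h1 h2
    rw [← hrel] at h2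
    exact ⟨h1, h2⟩
  · apply flat_pair (w := r i) (t := t) Sol_subset_Cyl htF ht (hsh.2 hrel)
    intro b hb
    have h1 := (mem_Sol.1 hb).2 i hi
    have h2 := (mem_Sol.1 hb).2 i' hi'
    unfold Sat at h1 h2
    have : r i' = -r i := by
      rw [hrel]; funext u; simp
    rw [this, dotB_neg] at h2
    rw [pOK_neg] at h2
    exact ⟨h1, h2⟩

/-! ### gshift machinery for the split at a column -/

section Split
variable (r : ℕ → Fin N → ℝ) (c : ℕ → ℝ) (j : Fin N)

/-- descended vector -/
def dv (i : ℕ) : Fin N → ℝ := Function.update (r i) j 0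

/-- descended shift at half ε -/
def dsh (i : ℕ) (ε : Bool) : ℝ := c i - r i j * bR ε

/-- relation to a base vector -/
def RelW (w : Fin N → ℝ) (i : ℕ) : Prop := dv r j i = w ∨ dv r j i = -w

/-- normalized shift relative to base w : intercept -/
def gA (w : Fin N → ℝ) (i : ℕ) : ℝ := if dv r j i = w then c i else -(c i) - 1

/-- normalized slope relative to base w -/
def gM (w : Fin N → ℝ) (i : ℕ) : ℝ := if dv r j i = w then -(r i j) else r i j

/-- normalized shift of constraint i at half ε, relative to base w -/
def gsh (w : Fin N → ℝ) (i : ℕ) (ε : Bool) : ℝ := gA r c j w i + gM r j w i * bR ε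

lemma gsh_eq (w : Fin N → ℝ) (i : ℕ) (ε : Bool) :
    (dv r j i = w → gsh r c j w i ε = dsh r c j i ε) ∧
    (dv r j i ≠ w → gsh r c j w i ε = -(dsh r c j i ε) - 1) := by
  constructor <;> intro h <;> unfold gsh gA gM dsh <;> simp [h] <;> ring

/-- every member of a half-solution-set has its w-dot in the gshift target -/
lemma gsh_sat {I : Finset ℕ} {Fr : Finset (Fin N)} {φ : Fin N → Bool}
    {w : Fin N → ℝ} {i : ℕ} (hi : i ∈ I) (hrel : RelW r j w i) (ε : Bool)
    {b : Fin N → Bool}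
    (hb : b ∈ Sol I (dv r j) (fun i' => dsh r c j i' ε) Fr φ) :
    pOK (dotB w b) (gsh r c j w i ε) := by
  have hs := (mem_Sol.1 hb).2 i hi
  unfold Sat at hs
  by_cases h : dv r j i = w
  · rw [(gsh_eq r c j w i ε).1 h]
    rw [h] at hs
    exact hs
  · rw [(gsh_eq r c j w i ε).2 h]
    rcases hrel with h' | h'
    · exact absurd h' h
    · rw [h'] at hs
      rw [dotB_neg, pOK_neg] at hs
      exact hs

end Split
end
end Omg
namespace Omg
open Finset
attribute [local instance] Classical.propDecidable
noncomputable section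
variable {N : ℕ}

lemma wtF_le_card {a : Fin N → ℝ} {Fr : Finset (Fin N)} (h : ∀ t, t ∉ Fr → a t = 0) :
    wtF a ≤ Fr.card := by
  unfold wtF
  apply Finset.card_le_card
  intro t ht
  simp only [Finset.mem_filter] at ht
  by_contra htF
  exact ht.2 (h t htF)

lemma wtF_pos_exists {a : Fin N → ℝ} (h : 1 ≤ wtF a) : ∃ t, a t ≠ 0 := by
  by_contra hc
  push_neg at hc
  have : wtF a = 0 := by
    unfold wtF; rw [Finset.card_eq_zero]; ext u; simp [hc u]
  omega

lemma dv_of_zero {r : ℕ → Fin N → ℝ} {j : Fin N} {i : ℕ} (h : r i j = 0) :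
    dv r j i = r i := by
  funext t
  unfold dv
  by_cases ht : t = j
  · subst ht; rw [Function.update_self, h]
  · rw [Function.update_of_ne ht]

lemma wtF_dv {r : ℕ → Fin N → ℝ} {j : Fin N} {i : ℕ} :
    wtF (r i) ≤ wtF (dv r j i) + 1 := by
  unfold wtF
  have : (univ.filter (fun t => r i t ≠ 0)) ⊆ insert j (univ.filter (fun t => dv r j i t ≠ 0)) := by
    intro t ht
    simp only [Finset.mem_filter] at ht
    by_cases htj : t = j
    · simp [htj]
    · apply Finset.mem_insert_of_mem
      simp only [Finset.mem_filter, Finset.mem_univ, true_and]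
      unfold dv
      rw [Function.update_of_ne htj]
      exact ht.2
  calc (univ.filter (fun t => r i t ≠ 0)).card ≤ _ := Finset.card_le_card this
    _ ≤ _ + 1 := Finset.card_insert_le _ _

lemma dv_ext_same {r : ℕ → Fin N → ℝ} {j : Fin N} {i i' : ℕ}
    (h : dv r j i = dv r j i') (hj : r i j = r i' j) : r i = r i' := by
  funext t
  by_cases ht : t = j
  · subst ht; exact hj
  · have := congrFun h t
    unfold dv at this
    rwa [Function.update_of_ne ht, Function.update_of_ne ht] at this

lemma dv_ext_anti {r : ℕ → Fin N → ℝ} {j : Fin N} {i i' : ℕ}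
    (h : dv r j i = -dv r j i') (hj : r i j = -(r i' j)) : r i = -r i' := by
  funext t
  by_cases ht : t = j
  · subst ht; simpa using hj
  · have := congrFun h t
    unfold dv at this
    simp only [Pi.neg_apply] at this ⊢
    rwa [Function.update_of_ne ht, Function.update_of_ne ht] at this

lemma slope_ne {r : ℕ → Fin N → ℝ} (c : ℕ → ℝ) {j : Fin N} {w : Fin N → ℝ} {i i' : ℕ}
    (h1 : RelW r j w i) (h2 : RelW r j w i')
    (hne : r i ≠ r i') (hanti : r i ≠ -r i') :
    gM r j w i ≠ gM r j w i' := by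
  intro heq
  unfold gM at heq
  by_cases e1 : dv r j i = w <;> by_cases e2 : dv r j i' = w <;>
    simp only [e1, e2, if_true, if_false] at heq
  · exact hne (dv_ext_same (e1.trans e2.symm) (by linarith))
  · have e2' : dv r j i' = -w := h2.resolve_left e2
    have : dv r j i = -dv r j i' := by rw [e2', e1]; funext t; simp
    exact hanti (dv_ext_anti this (by linarith))
  · have e1' : dv r j i = -w := h1.resolve_left e1
    have : dv r j i = -dv r j i' := by rw [e1', e2]
    exact hanti (dv_ext_anti this (by linarith))
  · have e1' : dv r j i = -w := h1.resolve_left e1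
    have e2' : dv r j i' = -w := h2.resolve_left e2
    exact hne (dv_ext_same (e1'.trans e2'.symm) (by linarith))

lemma gsh_not_both {r : ℕ → Fin N → ℝ} {c : ℕ → ℝ} {j : Fin N} {w : Fin N → ℝ} {i i' : ℕ}
    (hM : gM r j w i ≠ gM r j w i')
    (h0 : gsh r c j w i false = gsh r c j w i' false) :
    gsh r c j w i true ≠ gsh r c j w i' true := by
  unfold gsh at h0 ⊢
  intro h1
  norm_num [bR] at h0 h1
  exact hM (by linarith)

/-- vacuousness determines the shift (for vectors with a nonzero entry) -/
lemma vac_unique {v : Fin N → ℝ} {e₀ e₁ : ℝ} (h0 : ¬GOOD v e₀) (h1 : ¬GOOD v e₁)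
    (hnz : ∃ t, v t ≠ 0) : e₀ = e₁ := by
  unfold GOOD at h0 h1
  push_neg at h0 h1
  obtain ⟨t, ht⟩ := hnz
  have a0 := h0.2 t
  have a1 := h1.2 t
  rcases a0.1 with p1 | p1 <;> rcases a0.2 with p2 | p2 <;>
    rcases a1.1 with p3 | p3 <;> rcases a1.2 with p4 | p4 <;>
    first | linarith | (exact absurd (by linarith : v t = 0) ht)

/-- cheap trivial bound -/
lemma done_of_flat {I : Finset ℕ} {r : ℕ → Fin N → ℝ} {c : ℕ → ℝ} {Fr : Finset (Fin N)}
    {φ : Fin N → Bool} (h : (Sol I r c Fr φ).card ≤ 2 ^ (Fr.card - 1)) :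
    2 ^ I.card * (Sol I r c Fr φ).card ≤ 2 ^ (Fr.card - 1) * (2 ^ I.card + 1) := by
  calc 2 ^ I.card * (Sol I r c Fr φ).card ≤ 2 ^ I.card * 2 ^ (Fr.card - 1) :=
        Nat.mul_le_mul_left _ h
    _ = 2 ^ (Fr.card - 1) * 2 ^ I.card := Nat.mul_comm _ _
    _ ≤ 2 ^ (Fr.card - 1) * (2 ^ I.card + 1) := Nat.mul_le_mul_left _ (by omega)

end
end Omg
namespace Omg
open Finset
attribute [local instance] Classical.propDecidable
noncomputable section
variable {N : ℕ}

/-- the half solution set -/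
def SolH (I : Finset ℕ) (r : ℕ → Fin N → ℝ) (c : ℕ → ℝ) (Fr : Finset (Fin N))
    (φ : Fin N → Bool) (j : Fin N) (ε : Bool) : Finset (Fin N → Bool) :=
  Sol I (dv r j) (fun i => dsh r c j i ε) (Fr.erase j) (Function.update φ j ε)

lemma supp_half {I : Finset ℕ} {r : ℕ → Fin N → ℝ} {Fr : Finset (Fin N)} {j : Fin N}
    (hsupp : ∀ i ∈ I, ∀ t, t ∉ Fr → r i t = 0) :
    ∀ i ∈ I, ∀ t, t ∉ Fr.erase j → dv r j i t = 0 := by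
  intro i hi t ht
  unfold dv
  by_cases htj : t = j
  · subst htj; rw [Function.update_self]
  · rw [Function.update_of_ne htj]
    exact hsupp i hi t (by intro hF; exact ht (Finset.mem_erase.2 ⟨htj, hF⟩))

lemma dv_wt1 {r : ℕ → Fin N → ℝ} {j : Fin N} {i : ℕ} (hw : 2 ≤ wtF (r i)) :
    1 ≤ wtF (dv r j i) := by
  have := wtF_dv (r := r) (j := j) (i := i)
  omega

/-- identity of descended constraints at half ε -/
def IdA (r : ℕ → Fin N → ℝ) (c : ℕ → ℝ) (j : Fin N) (ε : Bool) (i i' : ℕ) : Prop :=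
  (dv r j i = dv r j i' ∧ dsh r c j i ε = dsh r c j i' ε) ∨
  (dv r j i = -dv r j i' ∧ dsh r c j i ε = -(dsh r c j i' ε) - 1)

/-- at a non-small half, there is no weight ≤1 GOOD descended constraint -/
lemma nosmall_nowt1 {I : Finset ℕ} {r : ℕ → Fin N → ℝ} {c : ℕ → ℝ} {Fr : Finset (Fin N)}
    {φ : Fin N → Bool} {j : Fin N} {ε : Bool} {f : ℕ} (hF : Fr.card = f + 2) (hj : j ∈ Fr)
    (hsupp : ∀ i ∈ I, ∀ t, t ∉ Fr → r i t = 0)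
    (hbig : ¬ (SolH I r c Fr φ j ε).card ≤ 2 ^ f) :
    ∀ i ∈ I, ¬(wtF (dv r j i) ≤ 1 ∧ GOOD (dv r j i) (dsh r c j i ε)) := by
  rintro i hi ⟨hw, hG⟩
  apply hbig
  have := flat_wt1 (I := I) (r := dv r j) (c := fun i' => dsh r c j i' ε)
    (Fr := Fr.erase j) (φ := Function.update φ j ε) hi
    (fun t ht => supp_half hsupp i hi t ht) hG hw
  have hc : (Fr.erase j).card = f + 1 := by
    rw [Finset.card_erase_of_mem hj, hF]; omega
  rw [hc] at this
  simpa [SolH] using this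

/-- at a non-small half, related descended constraints must be identical -/
lemma nosmall_idA {I : Finset ℕ} {r : ℕ → Fin N → ℝ} {c : ℕ → ℝ} {Fr : Finset (Fin N)}
    {φ : Fin N → Bool} {j : Fin N} {ε : Bool} {f : ℕ} (hF : Fr.card = f + 2) (hj : j ∈ Fr)
    (hsupp : ∀ i ∈ I, ∀ t, t ∉ Fr → r i t = 0)
    (hbig : ¬ (SolH I r c Fr φ j ε).card ≤ 2 ^ f)
    {i i' : ℕ} (hi : i ∈ I) (hi' : i' ∈ I)
    (hw1 : 1 ≤ wtF (dv r j i))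
    (hrel : dv r j i = dv r j i' ∨ dv r j i = -dv r j i') :
    IdA r c j ε i i' := by
  by_contra hId
  apply hbig
  obtain ⟨t, ht⟩ := wtF_pos_exists hw1
  have htE : t ∈ Fr.erase j := by
    by_contra h
    exact ht (supp_half hsupp i hi t h)
  have hcard : (Fr.erase j).card = f + 1 := by
    rw [Finset.card_erase_of_mem hj, hF]; omega
  unfold IdA at hId
  push_neg at hId
  -- the two target shifts differ
  rcases hrel with hrel | hrel
  · have hne : dsh r c j i ε ≠ dsh r c j i' ε := hId.1 hrel
    have := flat_pair (S := SolH I r c Fr φ j ε) (Fr := Fr.erase j)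
      (φ := Function.update φ j ε) (w := dv r j i) (t := t)
      Sol_subset_Cyl htE ht hne ?_
    · rw [hcard] at this; simpa using this
    · intro b hb
      have h1 := (mem_Sol.1 hb).2 i hi
      have h2 := (mem_Sol.1 hb).2 i' hi'
      unfold Sat at h1 h2
      rw [← hrel] at h2
      exact ⟨h1, h2⟩
  · have hne : dsh r c j i ε ≠ -(dsh r c j i' ε) - 1 := hId.2 hrel
    have := flat_pair (S := SolH I r c Fr φ j ε) (Fr := Fr.erase j)
      (φ := Function.update φ j ε) (w := dv r j i) (t := t)
      Sol_subset_Cyl htE ht hne ?_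
    · rw [hcard] at this; simpa using this
    · intro b hb
      have h1 := (mem_Sol.1 hb).2 i hi
      have h2 := (mem_Sol.1 hb).2 i' hi'
      unfold Sat at h1 h2
      have hv : dv r j i' = -(dv r j i) := by
        rw [hrel]; funext u; simp
      rw [hv, dotB_neg, pOK_neg] at h2
      exact ⟨h1, h2⟩

end
end Omg
namespace Omg
open Finset
attribute [local instance] Classical.propDecidable
noncomputable section
variable {N : ℕ}

lemma IdA_gsh {r : ℕ → Fin N → ℝ} {c : ℕ → ℝ} {j : Fin N} {ε : Bool} {i i' : ℕ}
    (hw1 : 1 ≤ wtF (dv r j i)) (hId : IdA r c j ε i i') :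
    RelW r j (dv r j i) i' ∧ gsh r c j (dv r j i) i ε = gsh r c j (dv r j i) i' ε := by
  obtain ⟨t, ht⟩ := wtF_pos_exists hw1
  have hgi : gsh r c j (dv r j i) i ε = dsh r c j i ε := (gsh_eq r c j _ i ε).1 rfl
  rcases hId with ⟨hv, hs⟩ | ⟨hv, hs⟩
  · refine ⟨Or.inl hv.symm, ?_⟩
    rw [hgi, (gsh_eq r c j _ i' ε).1 hv.symm, hs]
  · have hv' : dv r j i' = -(dv r j i) := by
      rw [hv]; funext u; simp
    have hcond : dv r j i' ≠ dv r j i := by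
      intro h
      rw [h] at hv
      have := congrFun hv t
      simp only [Pi.neg_apply] at this
      exact ht (by linarith)
    refine ⟨Or.inr hv', ?_⟩
    rw [hgi, (gsh_eq r c j _ i' ε).2 hcond, hs]

lemma IdA_both {r : ℕ → Fin N → ℝ} {c : ℕ → ℝ} {j : Fin N} {i i' : ℕ}
    (hw1 : 1 ≤ wtF (dv r j i)) (hne : r i ≠ r i') (hanti : r i ≠ -r i')
    (h0 : IdA r c j false i i') (h1 : IdA r c j true i i') : False := by
  have b0 := IdA_gsh hw1 h0
  have b1 := IdA_gsh hw1 h1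
  exact gsh_not_both (slope_ne c (Or.inl rfl) b0.1 hne hanti) b0.2 b1.2


end
end Omg
namespace Omg
open Finset
attribute [local instance] Classical.propDecidable
noncomputable section
variable {N : ℕ}

lemma Sol_mono {I₁ I₂ : Finset ℕ} {r : ℕ → Fin N → ℝ} {c : ℕ → ℝ} {Fr : Finset (Fin N)}
    {φ : Fin N → Bool} (h : I₁ ⊆ I₂) : Sol I₂ r c Fr φ ⊆ Sol I₁ r c Fr φ := by
  intro b hb
  rw [mem_Sol] at hb ⊢
  exact ⟨hb.1, fun i hi => hb.2 i (h hi)⟩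

lemma IdA_symm {r : ℕ → Fin N → ℝ} {c : ℕ → ℝ} {j : Fin N} {ε : Bool} {i i' : ℕ}
    (h : IdA r c j ε i i') : IdA r c j ε i' i := by
  rcases h with ⟨hv, hs⟩ | ⟨hv, hs⟩
  · exact Or.inl ⟨hv.symm, hs.symm⟩
  · refine Or.inr ⟨?_, by linarith⟩
    rw [hv]; funext u; simp

/-- agreement of a coordinate forced by a weight ≤ 1 GOOD constraint -/
lemma wt1_agree {a : Fin N → ℝ} {cc : ℝ} (hG : GOOD a cc) (hw : wtF a ≤ 1)
    {t : Fin N} (ht : a t ≠ 0) {b b' : Fin N → Bool}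
    (hs : Sat a cc b) (hs' : Sat a cc b') : b t = b' t := by
  by_contra hbt
  unfold Sat at hs hs'
  rw [dot_single hw ht] at hs hs'
  have hvals : pOK 0 cc ∧ pOK (a t) cc := by
    cases hb1 : b t
    · cases hb2 : b' t
      · exact absurd (hb1.trans hb2.symm) hbt
      · rw [hb1] at hs; rw [hb2] at hs'
        exact ⟨by simpa [bR] using hs, by simpa [bR] using hs'⟩
    · cases hb2 : b' t
      · rw [hb1] at hs; rw [hb2] at hs'
        exact ⟨by simpa [bR] using hs', by simpa [bR] using hs⟩
      · exact absurd (hb1.trans hb2.symm) hbt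
  rcases hG with hG | ⟨t₀, hG⟩
  · omega
  · by_cases ht₀ : a t₀ = 0
    · exact hG ⟨hvals.1, by rw [ht₀]; exact hvals.1⟩
    · have : t₀ = t := by
        by_contra hne
        exact ht₀ (wt_single hw ht t₀ hne)
      rw [this] at hG
      exact hG hvals

/-- three pairwise distinct elements of {-1,0,1} contain a pair at distance 2 -/
lemma tri_far {x y z : ℝ} (hx : x = -1 ∨ x = 0 ∨ x = 1) (hy : y = -1 ∨ y = 0 ∨ y = 1)
    (hz : z = -1 ∨ z = 0 ∨ z = 1) (hxy : x ≠ y) (hxz : x ≠ z) (hyz : y ≠ z) :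
    (x - y = 2 ∨ y - x = 2) ∨ (x - z = 2 ∨ z - x = 2) ∨ (y - z = 2 ∨ z - y = 2) := by
  rcases hx with h | h | h <;> subst h <;>
    rcases hy with h | h | h <;> subst h <;>
    rcases hz with h | h | h <;> subst h <;>
    first
      | (exact absurd rfl hxy)
      | (exact absurd rfl hxz)
      | (exact absurd rfl hyz)
      | norm_num

lemma gsh_B_of_A {r : ℕ → Fin N → ℝ} {c : ℕ → ℝ} {j : Fin N} {w : Fin N → ℝ} {p q : ℕ}
    {A B : Bool} (hAB : B = !A)
    (hA : gsh r c j w p A = gsh r c j w q A) :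
    gsh r c j w p B - gsh r c j w q B
      = (gM r j w p - gM r j w q) * (bR B - bR A) := by
  subst hAB
  unfold gsh at hA ⊢
  cases A <;> norm_num [bR] at hA ⊢ <;> linarith

/-- the slope is always in {-1,0,1} when entries are -/
lemma gM_mem {r : ℕ → Fin N → ℝ} {j : Fin N} {w : Fin N → ℝ} {i : ℕ}
    (h : r i j = -1 ∨ r i j = 0 ∨ r i j = 1) :
    gM r j w i = -1 ∨ gM r j w i = 0 ∨ gM r j w i = 1 := by
  unfold gM
  by_cases hc : dv r j i = w
  · rw [if_pos hc]
    rcases h with h | h | h <;> rw [h] <;> norm_num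
  · rw [if_neg hc]
    exact h

/-- 2x2 minor existence for non-proportional sign vectors -/
lemma minor_exists {w₁ w₂ : Fin N → ℝ}
    (he₁ : ∀ t, w₁ t = -1 ∨ w₁ t = 0 ∨ w₁ t = 1)
    (he₂ : ∀ t, w₂ t = -1 ∨ w₂ t = 0 ∨ w₂ t = 1)
    (hnz₁ : ∃ t, w₁ t ≠ 0) (hnz₂ : ∃ t, w₂ t ≠ 0)
    (hne : w₁ ≠ w₂) (hanti : w₁ ≠ -w₂) :
    ∃ t₁ t₂, w₁ t₁ * w₂ t₂ ≠ w₁ t₂ * w₂ t₁ := by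
  by_contra hc
  push_neg at hc
  obtain ⟨t₀, ht₀⟩ := hnz₁
  by_cases h20 : w₂ t₀ = 0
  · -- then w₂ = 0 : contradiction
    obtain ⟨s, hs⟩ := hnz₂
    have := hc t₀ s
    rw [h20] at this
    have : w₁ t₀ * w₂ s = 0 := by linarith [this]
    rcases mul_eq_zero.1 this with h | h
    · exact ht₀ h
    · exact hs h
  · -- w₂ = λ w₁ with λ = w₂ t₀ / w₁ t₀ ∈ {±1}
    have hprop : ∀ t, w₁ t₀ * w₂ t = w₁ t * w₂ t₀ := fun t => hc t₀ t
    rcases he₁ t₀ with h1 | h1 | h1 <;> rcases he₂ t₀ with h2 | h2 | h2 <;>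
      (try (exact absurd h1 ht₀)) <;> (try (exact absurd h2 h20))
    · -- w₁ t₀ = -1, w₂ t₀ = -1 : w₂ = w₁
      apply hne
      funext t
      have := hprop t
      rw [h1, h2] at this
      linarith
    · -- w₁ t₀ = -1, w₂ t₀ = 1 : w₂ = -w₁
      apply hanti
      funext t
      have := hprop t
      rw [h1, h2] at this
      simp only [Pi.neg_apply]
      linarith
    · -- w₁ t₀ = 1, w₂ t₀ = -1 : w₂ = -w₁
      apply hanti
      funext t
      have := hprop t
      rw [h1, h2] at this
      simp only [Pi.neg_apply]
      linarith
    · -- w₁ t₀ = 1, w₂ t₀ = 1 : w₂ = w₁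
      apply hne
      funext t
      have := hprop t
      rw [h1, h2] at this
      linarith

end
end Omg
namespace Omg
open Finset
attribute [local instance] Classical.propDecidable
noncomputable section
variable {N : ℕ}

lemma bR_diff {A B : Bool} (hAB : B = !A) : bR B - bR A = 1 ∨ bR B - bR A = -1 := by
  subst hAB; cases A <;> norm_num [bR]

/-- two related constraints identical at A whose slopes differ by 2 kill the other half -/
lemma far_false {I : Finset ℕ} {r : ℕ → Fin N → ℝ} {c : ℕ → ℝ} {Fr : Finset (Fin N)}
    {φ : Fin N → Bool} {j : Fin N} {A B : Bool} (hAB : B = !A) {p q : ℕ}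
    (hp : p ∈ I) (hq : q ∈ I) {w : Fin N → ℝ}
    (hRp : RelW r j w p) (hRq : RelW r j w q)
    (hA : gsh r c j w p A = gsh r c j w q A)
    (hMd : gM r j w p - gM r j w q = 2 ∨ gM r j w q - gM r j w p = 2)
    {b : Fin N → Bool} (hb : b ∈ SolH I r c Fr φ j B) : False := by
  have h1 := gsh_sat r c j hp hRp B hb
  have h2 := gsh_sat r c j hq hRq B hb
  have hd := gsh_B_of_A hAB hA
  have hbr := bR_diff hAB
  apply pOK_far (x := dotB w b) (c := gsh r c j w p B) (c' := gsh r c j w q B) ?_ h1 h2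
  rcases hMd with h | h <;> rcases hbr with h' | h' <;> rw [h'] at hd <;>
    [right; left; left; right] <;> linarith

/-- a triple of mutually identical-at-A constraints kills the other half -/
lemma tripleF {I : Finset ℕ} {r : ℕ → Fin N → ℝ} {c : ℕ → ℝ} {Fr : Finset (Fin N)}
    {φ : Fin N → Bool} {j : Fin N} {A B : Bool} (hAB : B = !A) {p q s : ℕ}
    (hp : p ∈ I) (hq : q ∈ I) (hs : s ∈ I)
    (hpq : p ≠ q) (hps : p ≠ s) (hqs : q ≠ s)
    (hent : ∀ i ∈ I, ∀ t, r i t = -1 ∨ r i t = 0 ∨ r i t = 1)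
    (hvd : ∀ i ∈ I, ∀ i' ∈ I, i ≠ i' → r i ≠ r i' ∧ r i ≠ -r i')
    (hw1 : 1 ≤ wtF (dv r j p))
    (hIq : IdA r c j A p q) (hIs : IdA r c j A p s)
    {b : Fin N → Bool} (hb : b ∈ SolH I r c Fr φ j B) : False := by
  set w := dv r j p with hw
  have bq := IdA_gsh hw1 hIq
  have bs := IdA_gsh hw1 hIs
  have hRp : RelW r j w p := Or.inl rfl
  have mpq : gM r j w p ≠ gM r j w q :=
    slope_ne c hRp bq.1 (hvd p hp q hq hpq).1 (hvd p hp q hq hpq).2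
  have mps : gM r j w p ≠ gM r j w s :=
    slope_ne c hRp bs.1 (hvd p hp s hs hps).1 (hvd p hp s hs hps).2
  have mqs : gM r j w q ≠ gM r j w s :=
    slope_ne c bq.1 bs.1 (hvd q hq s hs hqs).1 (hvd q hq s hs hqs).2
  have e1 := gM_mem (w := w) (hent p hp j)
  have e2 := gM_mem (w := w) (hent q hq j)
  have e3 := gM_mem (w := w) (hent s hs j)
  rcases tri_far e1 e2 e3 mpq mps mqs with h | h | h
  · exact far_false hAB hp hq hRp bq.1 bq.2 (by tauto) hb
  · exact far_false hAB hp hs hRp bs.1 bs.2 (by tauto) hb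
  · exact far_false hAB hq hs bq.1 bs.1 (bq.2.symm.trans bs.2) (by tauto) hb

/-- the dot with the common direction of a merged pair is constant on the other half -/
lemma merged_const {I : Finset ℕ} {r : ℕ → Fin N → ℝ} {c : ℕ → ℝ} {Fr : Finset (Fin N)}
    {φ : Fin N → Bool} {j : Fin N} {A B : Bool} (hAB : B = !A) {p q : ℕ}
    (hp : p ∈ I) (hq : q ∈ I) (hpq : q ≠ p)
    (hvd : ∀ i ∈ I, ∀ i' ∈ I, i ≠ i' → r i ≠ r i' ∧ r i ≠ -r i')
    (hw1 : 1 ≤ wtF (dv r j q))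
    (hId : IdA r c j A q p)
    {b b' : Fin N → Bool} (hb : b ∈ SolH I r c Fr φ j B) (hb' : b' ∈ SolH I r c Fr φ j B) :
    dotB (dv r j q) b = dotB (dv r j q) b' := by
  set w := dv r j q with hw
  have bp := IdA_gsh hw1 hId
  have hRq : RelW r j w q := Or.inl rfl
  have hM : gM r j w q ≠ gM r j w p :=
    slope_ne c hRq bp.1 (hvd q hq p hp hpq).1 (hvd q hq p hp hpq).2
  have hd := gsh_B_of_A hAB bp.2
  have hbr := bR_diff hAB
  have hne : gsh r c j w q B ≠ gsh r c j w p B := by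
    intro h
    rw [h] at hd
    rcases hbr with h' | h' <;> rw [h'] at hd <;>
      (apply hM; linarith)
  exact pOK_two hne (gsh_sat r c j hq hRq B hb) (gsh_sat r c j hp bp.1 B hb)
    (gsh_sat r c j hq hRq B hb') (gsh_sat r c j hp bp.1 B hb')

/-! ### numeric lemmas -/

lemma numKey {P Q : ℕ} (hP : 1 ≤ P) (hQ : 1 ≤ Q) : P + Q ≤ P * Q + 1 := by nlinarith

lemma numL1 {P Q SA SB : ℕ} (hA : Q * SA ≤ P * (Q + 1)) (hB : SB ≤ P) :
    Q * (SA + SB) ≤ 2 * P * (Q + 1) := by nlinarith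

lemma numL2 {P Q G SA SB : ℕ} (hP : 1 ≤ P) (hQ : 1 ≤ Q)
    (hA : Q * SA ≤ P * G * (Q + 1)) (hB : SB ≤ G) :
    2 * Q * P * (SA + SB) ≤ 2 * (P * G) * (2 * Q * P + 1) := by
  have hkey := numKey hP hQ
  have h1 : 2 * Q * P * SA ≤ 2 * P * (P * G * (Q + 1)) := by nlinarith
  have h2 : 2 * Q * P * SB ≤ 2 * Q * P * G := by nlinarith
  nlinarith [Nat.mul_le_mul_left (2 * P * G) hkey]

lemma numL3 {P Q SA SB : ℕ} (hA : Q * SA ≤ P * (Q + 1)) (hB : SB ≤ P) :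
    2 * Q * (SA + SB) ≤ 2 * P * (2 * Q + 1) := by nlinarith

lemma numL4 {Ph Q SA SB : ℕ} (hQ : 1 ≤ Q) (hA : Q * SA ≤ 2 * Ph * (Q + 1)) (hB : SB ≤ Ph) :
    4 * Q * (SA + SB) ≤ 2 * (2 * Ph) * (4 * Q + 1) := by nlinarith

lemma numL5 {Px G Q SA SB : ℕ} (hQ : 2 ≤ Q) (hPx : 1 ≤ Px) (hG : 1 ≤ G)
    (hA : Q * SA ≤ 2 * Px * G * (Q + 1)) (hB : SB ≤ G) :
    8 * Q * Px * (SA + SB) ≤ 4 * (Px * G) * (8 * Q * Px + 1) := by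
  have h1 : 8 * Q * Px * SA ≤ 8 * Px * (2 * Px * G * (Q + 1)) := by nlinarith
  have h2 : 8 * Q * Px * SB ≤ 8 * Q * Px * G := Nat.mul_le_mul_left _ hB
  have hb1 : Px * Px * G * 2 ≤ Px * Px * G * Q := Nat.mul_le_mul_left _ hQ
  have hb2 : Q * Px * G * 1 ≤ Q * Px * G * Px := Nat.mul_le_mul_left _ hPx
  nlinarith

lemma numL6 {R G Q SA SB : ℕ} (hQ : 2 ≤ Q) (hR : 1 ≤ R) (hG : 1 ≤ G)
    (hA : Q * SA ≤ 2 * G * (Q + 1)) (hB : SB ≤ G) :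
    R * Q * (SA + SB) ≤ 4 * G * (R * Q + 1) := by
  have h1 : R * Q * SA ≤ R * (2 * G * (Q + 1)) := by nlinarith
  have h2 : R * Q * SB ≤ R * Q * G := Nat.mul_le_mul_left _ hB
  have hb1 : R * G * 2 ≤ R * G * Q := Nat.mul_le_mul_left _ hQ
  nlinarith

end
end Omg
namespace Omg
open Finset
attribute [local instance] Classical.propDecidable
noncomputable section
variable {N : ℕ}

lemma dv_ent {r : ℕ → Fin N → ℝ} {j : Fin N} {i : ℕ}
    (h : ∀ t, r i t = -1 ∨ r i t = 0 ∨ r i t = 1) :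
    ∀ u, dv r j i u = -1 ∨ dv r j i u = 0 ∨ dv r j i u = 1 := by
  intro u
  unfold dv
  by_cases hu : u = j
  · subst hu; rw [Function.update_self]; tauto
  · rw [Function.update_of_ne hu]; exact h u

lemma gM_ne_zero {r : ℕ → Fin N → ℝ} {j : Fin N} {w : Fin N → ℝ} {i : ℕ}
    (h : r i j ≠ 0) : gM r j w i ≠ 0 := by
  unfold gM
  by_cases hc : dv r j i = w <;> simp [hc, h]

lemma branch2 {Fr : Finset (Fin N)} {φ : Fin N → Bool} {I : Finset ℕ}
    {r : ℕ → Fin N → ℝ} {c : ℕ → ℝ} {j : Fin N} (hj : j ∈ Fr) {f : ℕ}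
    (hF : Fr.card = f + 2)
    (hsupp : ∀ i ∈ I, ∀ t, t ∉ Fr → r i t = 0)
    (hwt2 : ∀ i ∈ I, 2 ≤ wtF (r i))
    (hent : ∀ i ∈ I, ∀ t, r i t = -1 ∨ r i t = 0 ∨ r i t = 1)
    (hvd : ∀ i ∈ I, ∀ i' ∈ I, i ≠ i' → r i ≠ r i' ∧ r i ≠ -r i')
    (hindep : ∀ i ∈ I, ∀ i' ∈ I, i ≠ i' →
      ((r i, c i) ≠ (r i', c i') ∧ (r i, c i) ≠ (-r i', -c i' - 1)))
    (A B : Bool) (hAB : B = !A)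
    (hIH : ∀ (I' : Finset ℕ) (r' : ℕ → Fin N → ℝ) (c' : ℕ → ℝ),
      (∀ i ∈ I', ∀ t, t ∉ Fr.erase j → r' i t = 0) →
      (∀ i ∈ I', GOOD (r' i) (c' i)) →
      (∀ i ∈ I', ∀ i' ∈ I', i ≠ i' →
        ((r' i, c' i) ≠ (r' i', c' i') ∧ (r' i, c' i) ≠ (-r' i', -c' i' - 1))) →
      2 ^ I'.card * (Sol I' r' c' (Fr.erase j) (Function.update φ j A)).card
        ≤ 2 ^ f * (2 ^ I'.card + 1))
    (hbigA : ¬ (SolH I r c Fr φ j A).card ≤ 2 ^ f)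
    (hsmallB : (SolH I r c Fr φ j B).card ≤ 2 ^ f) :
    2 ^ I.card * ((SolH I r c Fr φ j A).card + (SolH I r c Fr φ j B).card)
      ≤ 2 ^ (f + 1) * (2 ^ I.card + 1) := by
  classical
  have hcard : (Fr.erase j).card = f + 1 := by
    rw [Finset.card_erase_of_mem hj, hF]; omega
  -- trivial if the B-half is empty
  by_cases hSBe : SolH I r c Fr φ j B = ∅
  · rw [hSBe]
    simp only [Finset.card_empty, Nat.add_zero]
    have hSAb : (SolH I r c Fr φ j A).card ≤ 2 ^ (f + 1) := by
      have := card_Sol_le (I := I) (r := dv r j) (c := fun i => dsh r c j i A)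
        (Fr := Fr.erase j) (φ := Function.update φ j A)
      rwa [hcard] at this
    calc 2 ^ I.card * (SolH I r c Fr φ j A).card
        ≤ 2 ^ I.card * 2 ^ (f + 1) := Nat.mul_le_mul_left _ hSAb
      _ = 2 ^ (f + 1) * 2 ^ I.card := Nat.mul_comm _ _
      _ ≤ _ := Nat.mul_le_mul_left _ (by omega)
  obtain ⟨b₀, hb₀⟩ := Finset.nonempty_iff_ne_empty.2 hSBe
  have hdw1 : ∀ i ∈ I, 1 ≤ wtF (dv r j i) := fun i hi => dv_wt1 (hwt2 i hi)
  have hnw1A := nosmall_nowt1 hF hj hsupp hbigA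
  have hidA : ∀ i ∈ I, ∀ i' ∈ I, i ≠ i' →
      (dv r j i = dv r j i' ∨ dv r j i = -dv r j i') → IdA r c j A i i' :=
    fun i hi i' hi' hne hrel => nosmall_idA hF hj hsupp hbigA hi hi' (hdw1 i hi) hrel
  -- triple impossibility
  have htrip : ∀ p ∈ I, ∀ q ∈ I, ∀ s ∈ I, p ≠ q → p ≠ s → q ≠ s →
      IdA r c j A p q → IdA r c j A p s → False := by
    intro p hp q hq s hs h1 h2 h3 hIq hIs
    exact tripleF hAB hp hq hs h1 h2 h3 hent hvd (hdw1 p hp) hIq hIs hb₀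
  -- vacuous rows at A
  set VA := I.filter (fun i => ¬ GOOD (dv r j i) (dsh r c j i A)) with hVA
  have hVAI : VA ⊆ I := Finset.filter_subset _ _
  have hVAmem : ∀ i, i ∈ VA → (i ∈ I ∧ ¬ GOOD (dv r j i) (dsh r c j i A)) := by
    intro i hi; rw [hVA, Finset.mem_filter] at hi; exact hi
  have hVAw : ∀ i ∈ VA, wtF (dv r j i) = 1 := by
    intro i hiV
    have h := hVAmem i hiV
    have h2 : ¬ 2 ≤ wtF (dv r j i) := fun h2 => h.2 (Or.inl h2)
    have := hdw1 i h.1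
    omega
  have hVAj : ∀ i ∈ VA, r i j ≠ 0 := by
    intro i hiV hj0
    have h := hVAmem i hiV
    have hw := hVAw i hiV
    rw [dv_of_zero hj0] at hw
    have := hwt2 i h.1
    omega
  have hVAB : ∀ i ∈ VA, GOOD (dv r j i) (dsh r c j i B) := by
    intro i hiV
    by_contra hng
    have h := hVAmem i hiV
    have heq := vac_unique h.2 hng (wtF_pos_exists (hdw1 i h.1))
    unfold dsh at heq
    apply hVAj i hiV
    have hbr : bR A ≠ bR B := by subst hAB; cases A <;> norm_num [bR]
    have hmul : r i j * bR A = r i j * bR B := by linarith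
    by_contra hrj
    exact hbr (mul_left_cancel₀ hrj hmul)
  -- no related pairs inside VA
  have hVAnr : ∀ i ∈ VA, ∀ i' ∈ VA, i ≠ i' →
      ¬(dv r j i = dv r j i' ∨ dv r j i = -dv r j i') := by
    intro i hiV i' hiV' hne hrel
    have hi := (hVAmem i hiV).1
    have hi' := (hVAmem i' hiV').1
    have hId := hidA i hi i' hi' hne hrel
    have bb := IdA_gsh (hdw1 i hi) hId
    have hM : gM r j (dv r j i) i ≠ gM r j (dv r j i) i' :=
      slope_ne c (Or.inl rfl) bb.1 (hvd i hi i' hi' hne).1 (hvd i hi i' hi' hne).2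
    have hMi := gM_mem (w := dv r j i) (hent i hi j)
    have hMi' := gM_mem (w := dv r j i) (hent i' hi' j)
    have hz := gM_ne_zero (w := dv r j i) (hVAj i hiV)
    have hz' := gM_ne_zero (w := dv r j i) (hVAj i' hiV')
    have hMd : gM r j (dv r j i) i - gM r j (dv r j i) i' = 2 ∨
        gM r j (dv r j i) i' - gM r j (dv r j i) i = 2 := by
      rcases hMi with h1 | h1 | h1 <;> rcases hMi' with h2 | h2 | h2 <;>
        first
          | (exact absurd h1 hz)
          | (exact absurd h2 hz')
          | (exact absurd (h1.trans h2.symm) hM)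
          | (left; linarith)
          | (right; linarith)
    exact far_false hAB hi hi' (Or.inl rfl) bb.1 bb.2 hMd hb₀
  -- support coordinate of weight-1 descendants
  set pc : ℕ → Fin N := fun i => if h : ∃ t, dv r j i t ≠ 0 then h.choose else j with hpc
  have hpcs : ∀ i ∈ VA, dv r j i (pc i) ≠ 0 := by
    intro i hiV
    have hex : ∃ t, dv r j i t ≠ 0 := wtF_pos_exists (hdw1 i (hVAmem i hiV).1)
    rw [hpc]
    simp only [hex, dif_pos]
    exact hex.choose_spec
  have hpcinj : ∀ i ∈ VA, ∀ i' ∈ VA, pc i = pc i' → i = i' := by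
    intro i hiV i' hiV' hpe
    by_contra hne
    apply hVAnr i hiV i' hiV' hne
    -- both weight-1 vectors supported at the same coordinate with ±1 entries
    have h1 := hpcs i hiV
    have h2 := hpcs i' hiV'
    rw [← hpe] at h2
    set t := pc i
    have hw := hVAw i hiV
    have hw' := hVAw i' hiV'
    have hzero : ∀ u, u ≠ t → dv r j i u = 0 := fun u hu => wt_single (by omega) h1 u hu
    have hzero' : ∀ u, u ≠ t → dv r j i' u = 0 := fun u hu => wt_single (by omega) h2 u hu
    have he1 := dv_ent (j := j) (hent i (hVAmem i hiV).1) t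
    have he2 := dv_ent (j := j) (hent i' (hVAmem i' hiV').1) t
    have hcases : dv r j i t = dv r j i' t ∨ dv r j i t = -(dv r j i' t) := by
      rcases he1 with h | h | h <;> rcases he2 with h' | h' | h' <;>
        first
          | (exact absurd h h1)
          | (exact absurd h' h2)
          | (left; linarith)
          | (right; linarith)
    rcases hcases with hc | hc
    · left
      funext u
      by_cases hu : u = t
      · subst hu; exact hc
      · rw [hzero u hu, hzero' u hu]
    · right
      funext u
      simp only [Pi.neg_apply]
      by_cases hu : u = t
      · subst hu; exact hc
      · rw [hzero u hu, hzero' u hu]; ring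
  -- rows that remain good at A
  set I' := I \ VA with hI'
  have hI'I : I' ⊆ I := Finset.sdiff_subset
  have hI'G : ∀ i ∈ I', GOOD (dv r j i) (dsh r c j i A) := by
    intro i hiI'
    rw [hI', Finset.mem_sdiff] at hiI'
    by_contra h
    exact hiI'.2 (by rw [hVA]; exact Finset.mem_filter.2 ⟨hiI'.1, h⟩)
  have hI'w : ∀ i ∈ I', 2 ≤ wtF (dv r j i) := by
    intro i hiI'
    by_contra h
    exact (hnw1A i (hI'I hiI')) ⟨by omega, hI'G i hiI'⟩
  -- dropped rows (one per merged pair)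
  set Drop := I'.filter (fun i => ∃ i' ∈ I', i' ≠ i ∧ IdA r c j A i' i ∧ i' < i) with hDrop
  have hDropI' : Drop ⊆ I' := Finset.filter_subset _ _
  set IA := I' \ Drop with hIA
  have hIAI' : IA ⊆ I' := Finset.sdiff_subset
  have hIAI : IA ⊆ I := hIAI'.trans hI'I
  -- no identical pairs within IA
  have hIAid : ∀ i ∈ IA, ∀ i' ∈ IA, i ≠ i' → ¬ IdA r c j A i i' := by
    intro i hiA i' hi'A hne hId
    have hiA' : i ∈ I' ∧ i ∉ Drop := by rw [hIA, Finset.mem_sdiff] at hiA; exact hiA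
    have hi'A' : i' ∈ I' ∧ i' ∉ Drop := by rw [hIA, Finset.mem_sdiff] at hi'A; exact hi'A
    rcases Nat.lt_or_ge i i' with hlt | hge
    · apply hi'A'.2
      rw [hDrop, Finset.mem_filter]
      exact ⟨hi'A'.1, i, hiA'.1, hne, hId, hlt⟩
    · have hlt : i' < i := by omega
      apply hiA'.2
      rw [hDrop, Finset.mem_filter]
      exact ⟨hiA'.1, i', hi'A'.1, hne.symm, IdA_symm hId, hlt⟩
  -- counting
  have hVle : VA.card ≤ I.card := Finset.card_le_card hVAI
  have hI'c : I'.card = I.card - VA.card := by rw [hI']; exact Finset.card_sdiff_of_subset hVAI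
  have hDle : Drop.card ≤ I'.card := Finset.card_le_card hDropI'
  have hIAc : IA.card = I'.card - Drop.card := by rw [hIA]; exact Finset.card_sdiff_of_subset hDropI'
  have hmeq : I.card = VA.card + Drop.card + IA.card := by omega
  -- partner map
  have hpart : ∀ i ∈ Drop, ∃ p, p ∈ IA ∧ p ≠ i ∧ IdA r c j A p i := by
    intro i hiD
    rw [hDrop, Finset.mem_filter] at hiD
    obtain ⟨hiI', p, hpI', hpne, hpId, hplt⟩ := hiD
    refine ⟨p, ?_, hpne, hpId⟩
    rw [hIA, Finset.mem_sdiff]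
    refine ⟨hpI', fun hpD => ?_⟩
    rw [hDrop, Finset.mem_filter] at hpD
    obtain ⟨_, q, hqI', hqne, hqId, hqlt⟩ := hpD
    by_cases hqi : q = i
    · subst hqi
      omega
    · exact htrip p (hI'I hpI') i (hI'I hiI') q (hI'I hqI') hpne (Ne.symm hqne)
        (Ne.symm hqi) hpId (IdA_symm hqId)
  set PF : ℕ → ℕ := fun i => if h : ∃ p, p ∈ IA ∧ p ≠ i ∧ IdA r c j A p i
    then h.choose else 0 with hPF
  have hPFs : ∀ i ∈ Drop, PF i ∈ IA ∧ PF i ≠ i ∧ IdA r c j A (PF i) i := by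
    intro i hiD
    have hex := hpart i hiD
    rw [hPF]
    simp only [hex, dif_pos]
    exact hex.choose_spec
  have hCle : Drop.card ≤ IA.card := by
    apply Finset.card_le_card_of_injOn PF
    · intro i hiD; exact (hPFs i hiD).1
    · intro i1 h1 i2 h2 hPe
      by_contra hne
      have p1 := hPFs i1 h1
      have p2 := hPFs i2 h2
      rw [hPe] at p1
      exact htrip (PF i2) (hIAI p2.1) i1 (hI'I (hDropI' h1)) i2 (hI'I (hDropI' h2))
        p1.2.1 p2.2.1 hne p1.2.2 p2.2.2
  -- IH applied to IA
  have hIAindep : ∀ i ∈ IA, ∀ i' ∈ IA, i ≠ i' →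
      ((dv r j i, dsh r c j i A) ≠ (dv r j i', dsh r c j i' A) ∧
       (dv r j i, dsh r c j i A) ≠ (-(dv r j i'), -(dsh r c j i' A) - 1)) := by
    intro i hiA i' hi'A hne
    constructor
    · intro h
      exact hIAid i hiA i' hi'A hne (Or.inl ⟨congrArg Prod.fst h, congrArg Prod.snd h⟩)
    · intro h
      exact hIAid i hiA i' hi'A hne (Or.inr ⟨congrArg Prod.fst h, congrArg Prod.snd h⟩)
  have hA2 : 2 ^ IA.card * (SolH I r c Fr φ j A).card ≤ 2 ^ f * (2 ^ IA.card + 1) := by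
    have hmono : (SolH I r c Fr φ j A).card
        ≤ (Sol IA (dv r j) (fun i => dsh r c j i A) (Fr.erase j)
            (Function.update φ j A)).card :=
      Finset.card_le_card (Sol_mono hIAI)
    have hIHr := hIH IA (dv r j) (fun i => dsh r c j i A)
      (fun i hi => supp_half hsupp i (hIAI hi))
      (fun i hi => hI'G i (hIAI' hi))
      hIAindep
    calc 2 ^ IA.card * (SolH I r c Fr φ j A).card
        ≤ 2 ^ IA.card * (Sol IA (dv r j) (fun i => dsh r c j i A) (Fr.erase j)
            (Function.update φ j A)).card := Nat.mul_le_mul_left _ hmono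
      _ ≤ _ := hIHr
  -- forced coordinates agree on SB
  have hforce : ∀ i ∈ VA, ∀ b ∈ SolH I r c Fr φ j B, ∀ b' ∈ SolH I r c Fr φ j B,
      b (pc i) = b' (pc i) := by
    intro i hiV b hb b' hb'
    have hw : wtF (dv r j i) ≤ 1 := by rw [hVAw i hiV]
    exact wt1_agree (hVAB i hiV) hw (hpcs i hiV)
      ((mem_Sol.1 hb).2 i (hVAmem i hiV).1) ((mem_Sol.1 hb').2 i (hVAmem i hiV).1)
  -- the forced coordinate set
  set T := VA.image pc with hT
  have hTcard : T.card = VA.card := by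
    rw [hT]
    apply Finset.card_image_of_injOn
    intro i hi i' hi' h
    exact hpcinj i hi i' hi' h
  have hTsub : T ⊆ Fr.erase j := by
    intro t ht
    rw [hT, Finset.mem_image] at ht
    obtain ⟨i, hiV, rfl⟩ := ht
    by_contra h
    exact hpcs i hiV (supp_half hsupp i (hVAmem i hiV).1 _ h)
  -- generic determination bound via forced coordinates
  have hdetT : (SolH I r c Fr φ j B).card ≤ 2 ^ (f + 1 - T.card) := by
    have := det_card (S := SolH I r c Fr φ j B) (D := T) Sol_subset_Cyl hTsub ?_
    · rwa [hcard] at this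
    · intro b hb b' hb' hagree
      funext t
      by_cases htT : t ∈ T
      · rw [hT, Finset.mem_image] at htT
        obtain ⟨i, hiV, rfl⟩ := htT
        exact hforce i hiV b hb b' hb'
      · exact hagree t htT
  have hTfle : T.card ≤ f + 1 := by
    have := Finset.card_le_card hTsub
    omega
  have hQ1 : (1:ℕ) ≤ 2 ^ IA.card := Nat.one_le_two_pow
  -- case analysis on the number of merged pairs
  by_cases hD0 : Drop = ∅
  · by_cases hV0 : VA = ∅
    · -- C = 0, V = 0
      have hIAeq : IA.card = I.card := by
        have : VA.card = 0 := by rw [hV0]; rfl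
        have : Drop.card = 0 := by rw [hD0]; rfl
        omega
      rw [← hIAeq]
      have e2 : (2:ℕ) ^ (f + 1) = 2 * 2 ^ f := by rw [pow_succ]; ring
      rw [e2]
      exact numL1 hA2 hsmallB
    · -- C = 0, V ≥ 1
      have hV1 : 1 ≤ VA.card := Finset.card_pos.2 (Finset.nonempty_iff_ne_empty.2 hV0)
      have hC0 : Drop.card = 0 := by rw [hD0]; rfl
      obtain ⟨x, hx⟩ : ∃ x, VA.card = x + 1 := ⟨VA.card - 1, by omega⟩
      have hxf : x ≤ f := by omega
      obtain ⟨g, hg⟩ : ∃ g, f = x + g := ⟨f - x, by omega⟩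
      have hBle : (SolH I r c Fr φ j B).card ≤ 2 ^ g := by
        have : f + 1 - T.card = g := by omega
        rwa [this] at hdetT
      have e1 : (2:ℕ) ^ I.card = 2 * 2 ^ IA.card * 2 ^ x := by
        rw [show I.card = IA.card + x + 1 by omega, pow_add, pow_add, pow_one]
        ring
      have e2 : (2:ℕ) ^ (f + 1) = 2 * (2 ^ x * 2 ^ g) := by
        rw [show f + 1 = x + g + 1 by omega, pow_add, pow_add, pow_one]
        ring
      have hA2' : 2 ^ IA.card * (SolH I r c Fr φ j A).card
          ≤ 2 ^ x * 2 ^ g * (2 ^ IA.card + 1) := by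
        have e3 : (2:ℕ) ^ f = 2 ^ x * 2 ^ g := by rw [hg, pow_add]
        rwa [e3] at hA2
      rw [e1, e2]
      exact numL2 Nat.one_le_two_pow hQ1 hA2' hBle
  -- Drop nonempty
  have hD1 : 1 ≤ Drop.card := Finset.card_pos.2 (Finset.nonempty_iff_ne_empty.2 hD0)
  have hmA1 : 1 ≤ IA.card := le_trans hD1 hCle
  have hQ2 : (2:ℕ) ≤ 2 ^ IA.card := by
    calc (2:ℕ) = 2 ^ 1 := by norm_num
      _ ≤ 2 ^ IA.card := Nat.pow_le_pow_right (by norm_num) hmA1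
  -- merged-pair dot constancy
  have hmc : ∀ p ∈ Drop, ∀ b ∈ SolH I r c Fr φ j B, ∀ b' ∈ SolH I r c Fr φ j B,
      dotB (dv r j (PF p)) b = dotB (dv r j (PF p)) b' := by
    intro p hpD b hb b' hb'
    have hp := hPFs p hpD
    exact merged_const hAB (hI'I (hDropI' hpD)) (hIAI hp.1) hp.2.1 hvd
      (hdw1 _ (hIAI hp.1)) hp.2.2 hb hb'
  by_cases hC1 : Drop.card = 1
  · obtain ⟨d₀, hd₀⟩ := Finset.card_eq_one.1 hC1
    have hd₀D : d₀ ∈ Drop := by rw [hd₀]; exact Finset.mem_singleton_self _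
    have hq₀ := hPFs d₀ hd₀D
    have hwq : 2 ≤ wtF (dv r j (PF d₀)) := hI'w _ (hIAI' hq₀.1)
    by_cases hV0 : VA = ∅
    · -- C = 1, V = 0
      have hIAeq : I.card = IA.card + 1 := by
        have : VA.card = 0 := by rw [hV0]; rfl
        omega
      have e1 : (2:ℕ) ^ I.card = 2 * 2 ^ IA.card := by
        rw [hIAeq, pow_succ]; ring
      have e2 : (2:ℕ) ^ (f + 1) = 2 * 2 ^ f := by rw [pow_succ]; ring
      rw [e1, e2]
      exact numL3 hA2 hsmallB
    · by_cases hV1 : VA.card = 1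
      · -- C = 1, V = 1
        have hsupw : ¬ (univ.filter (fun t => dv r j (PF d₀) t ≠ 0)) ⊆ T := by
          intro hsubT
          have := Finset.card_le_card hsubT
          rw [hTcard, hV1] at this
          unfold wtF at hwq
          omega
        obtain ⟨ts, htsf, htsT⟩ := Finset.not_subset.1 hsupw
        have htsw : dv r j (PF d₀) ts ≠ 0 := by
          simpa using (Finset.mem_filter.1 htsf).2
        have htsF : ts ∈ Fr.erase j := by
          by_contra h
          exact htsw (supp_half hsupp _ (hIAI hq₀.1) _ h)
        set D := insert ts T with hD
        have hDcard : D.card = 2 := by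
          rw [hD, Finset.card_insert_of_notMem htsT, hTcard, hV1]
        have hDsub : D ⊆ Fr.erase j := by
          rw [hD]
          exact Finset.insert_subset htsF hTsub
        have hfle2 : 2 ≤ f + 1 := by
          have := Finset.card_le_card hDsub
          omega
        have hinj : ∀ b ∈ SolH I r c Fr φ j B, ∀ b' ∈ SolH I r c Fr φ j B,
            (∀ t, t ∉ D → b t = b' t) → b = b' := by
          intro b hb b' hb' hagree
          have hag : ∀ t, t ≠ ts → b t = b' t := by
            intro t hts
            by_cases htT : t ∈ T
            · rw [hT, Finset.mem_image] at htT
              obtain ⟨i, hiV, rfl⟩ := htT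
              exact hforce i hiV b hb b' hb'
            · exact hagree t (by rw [hD]; simp [hts, htT])
          have hdot := hmc d₀ hd₀D b hb b' hb'
          have hδ := dot_diff_support (w := dv r j (PF d₀)) (b := b) (b' := b')
            (D := ({ts} : Finset (Fin N))) (fun u hu => hag u (by simpa using hu))
          rw [hdot, sub_self] at hδ
          simp only [Finset.sum_singleton] at hδ
          have hts' : bR (b ts) = bR (b' ts) := by
            rcases mul_eq_zero.1 hδ.symm with h | h
            · exact absurd h htsw
            · linarith
          have htseq : b ts = b' ts := bR_inj hts'
          funext t
          by_cases ht : t = ts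
          · rw [ht]; exact htseq
          · exact hag t ht
        have hBle : (SolH I r c Fr φ j B).card ≤ 2 ^ (f + 1 - 2) := by
          have h := det_card (S := SolH I r c Fr φ j B) Sol_subset_Cyl hDsub hinj
          rwa [hcard, hDcard] at h
        obtain ⟨f', hf'⟩ : ∃ f', f = f' + 1 := ⟨f - 1, by omega⟩
        have e1 : (2:ℕ) ^ I.card = 4 * 2 ^ IA.card := by
          rw [show I.card = IA.card + 2 by omega, pow_add]
          ring
        have e2 : (2:ℕ) ^ (f + 1) = 2 * (2 * 2 ^ f') := by
          rw [hf', pow_add, pow_add, pow_one]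
          ring
        have hA2' : 2 ^ IA.card * (SolH I r c Fr φ j A).card
            ≤ 2 * 2 ^ f' * (2 ^ IA.card + 1) := by
          have e3 : (2:ℕ) ^ f = 2 * 2 ^ f' := by
            rw [hf', pow_add, pow_one]; ring
          rwa [e3] at hA2
        have hBle' : (SolH I r c Fr φ j B).card ≤ 2 ^ f' := by
          have : f + 1 - 2 = f' := by omega
          rwa [this] at hBle
        rw [e1, e2]
        exact numL4 hQ1 hA2' hBle'
      · -- C = 1, V ≥ 2
        have hV2 : 2 ≤ VA.card := by
          have : VA.card ≠ 0 := fun h => hV0 (Finset.card_eq_zero.1 h)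
          omega
        obtain ⟨x, hx⟩ : ∃ x, VA.card = x + 2 := ⟨VA.card - 2, by omega⟩
        have hxf : x + 1 ≤ f := by omega
        obtain ⟨g, hg⟩ : ∃ g, f = x + 1 + g := ⟨f - x - 1, by omega⟩
        have hBle : (SolH I r c Fr φ j B).card ≤ 2 ^ g := by
          have : f + 1 - T.card = g := by omega
          rwa [this] at hdetT
        have e1 : (2:ℕ) ^ I.card = 8 * 2 ^ IA.card * 2 ^ x := by
          rw [show I.card = IA.card + x + 3 by omega, pow_add, pow_add,
            show (2:ℕ) ^ 3 = 8 by norm_num]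
          ring
        have e2 : (2:ℕ) ^ (f + 1) = 4 * (2 ^ x * 2 ^ g) := by
          rw [show f + 1 = x + g + 2 by omega, pow_add, pow_add,
            show (2:ℕ) ^ 2 = 4 by norm_num]
          ring
        have hA2' : 2 ^ IA.card * (SolH I r c Fr φ j A).card
            ≤ 2 * 2 ^ x * 2 ^ g * (2 ^ IA.card + 1) := by
          have e3 : (2:ℕ) ^ f = 2 * 2 ^ x * 2 ^ g := by
            rw [hg, pow_add, pow_add, pow_one]; ring
          rwa [e3] at hA2
        rw [e1, e2]
        exact numL5 hQ2 Nat.one_le_two_pow Nat.one_le_two_pow hA2' hBle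
  -- C ≥ 2 : two merged pairs, 2x2 minor determination
  have hC2 : 2 ≤ Drop.card := by
    have : Drop.card ≠ 0 := fun h => hD0 (Finset.card_eq_zero.1 h)
    omega
  obtain ⟨d₁, hd₁, d₂, hd₂, hdne⟩ := Finset.one_lt_card.1 hC2
  have hp₁ := hPFs d₁ hd₁
  have hp₂ := hPFs d₂ hd₂
  set q₁ := PF d₁ with hq₁d
  set q₂ := PF d₂ with hq₂d
  have hqne : q₁ ≠ q₂ := by
    intro h
    exact htrip q₁ (hIAI hp₁.1) d₁ (hI'I (hDropI' hd₁)) d₂ (hI'I (hDropI' hd₂))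
      hp₁.2.1 (h ▸ hp₂.2.1) hdne hp₁.2.2 (h ▸ hp₂.2.2)
  set w₁ := dv r j q₁ with hw₁
  set w₂ := dv r j q₂ with hw₂
  have hw₁2 : 2 ≤ wtF w₁ := hI'w _ (hIAI' hp₁.1)
  have hw₂2 : 2 ≤ wtF w₂ := hI'w _ (hIAI' hp₂.1)
  have hwrel : w₁ ≠ w₂ ∧ w₁ ≠ -w₂ := by
    constructor <;> intro h <;>
      exact hIAid q₁ hp₁.1 q₂ hp₂.1 hqne
        (hidA q₁ (hIAI hp₁.1) q₂ (hIAI hp₂.1) hqne (by rw [← hw₁, ← hw₂]; tauto))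
  obtain ⟨t₁, t₂, hmin⟩ := minor_exists (w₁ := w₁) (w₂ := w₂)
    (dv_ent (hent q₁ (hIAI hp₁.1))) (dv_ent (hent q₂ (hIAI hp₂.1)))
    (wtF_pos_exists (by omega)) (wtF_pos_exists (by omega)) hwrel.1 hwrel.2
  have ht12 : t₁ ≠ t₂ := by
    intro h
    rw [h] at hmin
    exact hmin rfl
  have ht₁F : t₁ ∈ Fr.erase j := by
    by_contra h
    have z1 : w₁ t₁ = 0 := supp_half hsupp _ (hIAI hp₁.1) _ h
    have z2 : w₂ t₁ = 0 := supp_half hsupp _ (hIAI hp₂.1) _ h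
    apply hmin
    rw [z1, z2]
    ring
  have ht₂F : t₂ ∈ Fr.erase j := by
    by_contra h
    have z1 : w₁ t₂ = 0 := supp_half hsupp _ (hIAI hp₁.1) _ h
    have z2 : w₂ t₂ = 0 := supp_half hsupp _ (hIAI hp₂.1) _ h
    apply hmin
    rw [z1, z2]
    ring
  set D := ({t₁, t₂} : Finset (Fin N)) with hD
  have hDcard : D.card = 2 := by
    rw [hD, Finset.card_insert_of_notMem (by simpa using ht12), Finset.card_singleton]
  have hDsub : D ⊆ Fr.erase j := by
    rw [hD]
    intro t ht
    rcases Finset.mem_insert.1 ht with h | h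
    · rwa [h]
    · rw [Finset.mem_singleton.1 h]; exact ht₂F
  have hinj : ∀ b ∈ SolH I r c Fr φ j B, ∀ b' ∈ SolH I r c Fr φ j B,
      (∀ t, t ∉ D → b t = b' t) → b = b' := by
    intro b hb b' hb' hagree
    have hdot₁ := hmc d₁ hd₁ b hb b' hb'
    have hdot₂ := hmc d₂ hd₂ b hb b' hb'
    have hδ₁ := dot_diff_support (w := w₁) (b := b) (b' := b') (D := D) hagree
    have hδ₂ := dot_diff_support (w := w₂) (b := b) (b' := b') (D := D) hagree
    rw [← hq₁d, ← hw₁] at hdot₁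
    rw [← hq₂d, ← hw₂] at hdot₂
    rw [hdot₁, sub_self] at hδ₁
    rw [hdot₂, sub_self] at hδ₂
    rw [hD] at hδ₁ hδ₂
    rw [Finset.sum_insert (by simpa using ht12), Finset.sum_singleton] at hδ₁ hδ₂
    set X := bR (b t₁) - bR (b' t₁) with hX
    set Y := bR (b t₂) - bR (b' t₂) with hY
    have hXz : X = 0 := by
      have hkey : (w₁ t₁ * w₂ t₂ - w₁ t₂ * w₂ t₁) * X = 0 := by
        linear_combination w₂ t₂ * hδ₁.symm - w₁ t₂ * hδ₂.symm
      rcases mul_eq_zero.1 hkey with h | h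
      · exact absurd (by linarith : w₁ t₁ * w₂ t₂ = w₁ t₂ * w₂ t₁) hmin
      · exact h
    have hYz : Y = 0 := by
      have hkey : (w₁ t₁ * w₂ t₂ - w₁ t₂ * w₂ t₁) * Y = 0 := by
        linear_combination w₁ t₁ * hδ₂.symm - w₂ t₁ * hδ₁.symm
      rcases mul_eq_zero.1 hkey with h | h
      · exact absurd (by linarith : w₁ t₁ * w₂ t₂ = w₁ t₂ * w₂ t₁) hmin
      · exact h
    have hb1 : b t₁ = b' t₁ := bR_inj (by rw [hX] at hXz; linarith)
    have hb2 : b t₂ = b' t₂ := bR_inj (by rw [hY] at hYz; linarith)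
    funext t
    by_cases h1 : t = t₁
    · rw [h1]; exact hb1
    by_cases h2 : t = t₂
    · rw [h2]; exact hb2
    · exact hagree t (by rw [hD]; simp [h1, h2])
  have hfle2 : 2 ≤ f + 1 := by
    have h1 := Finset.card_le_card hDsub
    omega
  have hBle : (SolH I r c Fr φ j B).card ≤ 2 ^ (f + 1 - 2) := by
    have h := det_card (S := SolH I r c Fr φ j B) Sol_subset_Cyl hDsub hinj
    rwa [hcard, hDcard] at h
  obtain ⟨f', hf'⟩ : ∃ f', f = f' + 1 := ⟨f - 1, by omega⟩
  have hBle' : (SolH I r c Fr φ j B).card ≤ 2 ^ f' := by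
    have : f + 1 - 2 = f' := by omega
    rwa [this] at hBle
  have e1 : (2:ℕ) ^ I.card = 2 ^ (VA.card + Drop.card) * 2 ^ IA.card := by
    rw [show I.card = (VA.card + Drop.card) + IA.card by omega, pow_add]
  have e2 : (2:ℕ) ^ (f + 1) = 4 * 2 ^ f' := by
    rw [hf', show f' + 1 + 1 = f' + 2 by omega, pow_add,
      show (2:ℕ) ^ 2 = 4 by norm_num]
    ring
  have hA2' : 2 ^ IA.card * (SolH I r c Fr φ j A).card
      ≤ 2 * 2 ^ f' * (2 ^ IA.card + 1) := by
    have e3 : (2:ℕ) ^ f = 2 * 2 ^ f' := by rw [hf', pow_add, pow_one]; ring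
    rwa [e3] at hA2
  rw [e1, e2]
  exact numL6 hQ2 Nat.one_le_two_pow Nat.one_le_two_pow hA2' hBle'

end
end Omg
namespace Omg
open Finset
attribute [local instance] Classical.propDecidable
noncomputable section
variable {N : ℕ}

lemma pow_le_two_mul_pred (F : ℕ) : 2 ^ F ≤ 2 ^ (F - 1) * 2 := by
  cases F with
  | zero => norm_num
  | succ n => simp [pow_succ]

theorem main_bound {N : ℕ} (F : ℕ) : ∀ (Fr : Finset (Fin N)) (φ : Fin N → Bool)
    (I : Finset ℕ) (r : ℕ → Fin N → ℝ) (c : ℕ → ℝ), Fr.card = F →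
    (∀ i ∈ I, ∀ t, t ∉ Fr → r i t = 0) →
    (∀ i ∈ I, GOOD (r i) (c i)) →
    (∀ i ∈ I, ∀ i' ∈ I, i ≠ i' →
      ((r i, c i) ≠ (r i', c i') ∧ (r i, c i) ≠ (-r i', -c i' - 1))) →
    2 ^ I.card * (Sol I r c Fr φ).card ≤ 2 ^ (Fr.card - 1) * (2 ^ I.card + 1) := by
  induction F using Nat.strong_induction_on with
  | _ F IH =>
  intro Fr φ I r c hF hsupp hgood hindep
  -- Case C0 : some constraint has weight ≤ 1
  by_cases hC0 : ∃ i ∈ I, wtF (r i) ≤ 1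
  · obtain ⟨i, hi, hw⟩ := hC0
    exact done_of_flat (flat_wt1 hi (hsupp i hi) (hgood i hi) hw)
  push_neg at hC0
  have hwt2 : ∀ i ∈ I, 2 ≤ wtF (r i) := hC0
  -- tiny F
  by_cases hF2 : F < 2
  · have hIe : I = ∅ := by
      rw [Finset.eq_empty_iff_forall_notMem]
      intro i hi
      have h1 := hwt2 i hi
      have h2 := wtF_le_card (hsupp i hi)
      omega
    subst hIe
    simp only [Finset.card_empty, pow_zero, one_mul]
    calc (Sol ∅ r c Fr φ).card ≤ 2 ^ Fr.card := card_Sol_le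
      _ ≤ 2 ^ (Fr.card - 1) * 2 := pow_le_two_mul_pred _
      _ = 2 ^ (Fr.card - 1) * (2 ^ 0 + 1) := by norm_num
  -- Case C1 : some big entry
  by_cases hC1 : ∃ i ∈ I, ∃ t, ¬(r i t = -1 ∨ r i t = 0 ∨ r i t = 1)
  · obtain ⟨i, hi, t, hbig⟩ := hC1
    exact done_of_flat (flat_bigentry hi (hsupp i hi) hbig)
  push_neg at hC1
  have hent : ∀ i ∈ I, ∀ t, r i t = -1 ∨ r i t = 0 ∨ r i t = 1 := by
    intro i hi t
    have := hC1 i hi t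
    tauto
  -- Case C2 : two related original vectors
  by_cases hC2 : ∃ i ∈ I, ∃ i' ∈ I, i ≠ i' ∧ (r i = r i' ∨ r i = -r i')
  · obtain ⟨i, hi, i', hi', hne, hrel⟩ := hC2
    apply done_of_flat
    apply flat_samevec hi hi' (hsupp i hi) (hwt2 i hi) hrel
    constructor
    · intro hv hc
      exact (hindep i hi i' hi' hne).1 (by rw [hv, hc])
    · intro hv hc
      exact (hindep i hi i' hi' hne).2 (by rw [hv, hc])
  push_neg at hC2
  have hvd : ∀ i ∈ I, ∀ i' ∈ I, i ≠ i' → r i ≠ r i' ∧ r i ≠ -r i' := by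
    intro i hi i' hi' hne
    have := hC2 i hi i' hi' hne
    tauto
  -- split at a coordinate j
  obtain ⟨f, hf⟩ : ∃ f, F = f + 2 := ⟨F - 2, by omega⟩
  subst hf
  have hjex : ∃ j, j ∈ Fr := by
    have : 0 < Fr.card := by omega
    exact Finset.card_pos.1 this
  obtain ⟨j, hj⟩ := hjex
  have hsplit : (Sol I r c Fr φ).card =
      (SolH I r c Fr φ j false).card + (SolH I r c Fr φ j true).card := by
    rw [Sol_split _ j, half_eq hj false, half_eq hj true]
    rfl
  have hcard : (Fr.erase j).card = f + 1 := by
    rw [Finset.card_erase_of_mem hj, hF]; omega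
  have hsupp' : ∀ (ε : Bool), ∀ i ∈ I, ∀ t, t ∉ Fr.erase j → dv r j i t = 0 :=
    fun ε => supp_half hsupp
  by_cases hs0 : (SolH I r c Fr φ j false).card ≤ 2 ^ f <;>
    by_cases hs1 : (SolH I r c Fr φ j true).card ≤ 2 ^ f
  · -- both small
    apply done_of_flat
    rw [hsplit, hF]
    have : f + 2 - 1 = f + 1 := by omega
    rw [this, pow_succ]
    omega
  · -- false small, true big : A = true, B = false
    rw [hsplit, hF]
    have h2 : f + 2 - 1 = f + 1 := by omega
    rw [h2]
    have := branch2 hj hF hsupp hwt2 hent hvd hindep true false (by rfl)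
      (fun I' r' c' h1 h2 h3 => by
        have := IH (f + 1) (by omega) (Fr.erase j) (Function.update φ j true) I' r' c'
          hcard h1 h2 h3
        rwa [hcard] at this)
      hs1 hs0
    rw [Nat.add_comm ((SolH I r c Fr φ j false).card) ((SolH I r c Fr φ j true).card)]
    exact this
  · -- false big, true small : A = false, B = true
    rw [hsplit, hF]
    have h2 : f + 2 - 1 = f + 1 := by omega
    rw [h2]
    have := branch2 hj hF hsupp hwt2 hent hvd hindep false true (by rfl)
      (fun I' r' c' h1 h2 h3 => by
        have := IH (f + 1) (by omega) (Fr.erase j) (Function.update φ j false) I' r' c'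
          hcard h1 h2 h3
        rwa [hcard] at this)
      hs0 hs1
    exact this
  · -- both big
    have hwd2 : ∀ i ∈ I, 2 ≤ wtF (dv r j i) := by
      intro i hi
      by_contra hlt
      have hw1 : wtF (dv r j i) ≤ 1 := by omega
      have g0 := nosmall_nowt1 hF hj hsupp hs0 i hi
      have g1 := nosmall_nowt1 hF hj hsupp hs1 i hi
      have ng0 : ¬GOOD (dv r j i) (dsh r c j i false) := fun h => g0 ⟨hw1, h⟩
      have ng1 : ¬GOOD (dv r j i) (dsh r c j i true) := fun h => g1 ⟨hw1, h⟩
      have hnz : ∃ t, dv r j i t ≠ 0 := wtF_pos_exists (dv_wt1 (hwt2 i hi))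
      have := vac_unique ng0 ng1 hnz
      unfold dsh at this
      have hj0 : r i j = 0 := by
        norm_num [bR] at this
        linarith
      rw [dv_of_zero hj0] at hw1
      have := hwt2 i hi
      omega
    have hrel' : ∀ i ∈ I, ∀ i' ∈ I, i ≠ i' →
        dv r j i ≠ dv r j i' ∧ dv r j i ≠ -dv r j i' := by
      intro i hi i' hi' hne
      constructor <;> intro hv
      · have h0 := nosmall_idA hF hj hsupp hs0 hi hi' (dv_wt1 (hwt2 i hi)) (Or.inl hv)
        have h1 := nosmall_idA hF hj hsupp hs1 hi hi' (dv_wt1 (hwt2 i hi)) (Or.inl hv)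
        exact IdA_both (dv_wt1 (hwt2 i hi)) (hvd i hi i' hi' hne).1
          (hvd i hi i' hi' hne).2 h0 h1
      · have h0 := nosmall_idA hF hj hsupp hs0 hi hi' (dv_wt1 (hwt2 i hi)) (Or.inr hv)
        have h1 := nosmall_idA hF hj hsupp hs1 hi hi' (dv_wt1 (hwt2 i hi)) (Or.inr hv)
        exact IdA_both (dv_wt1 (hwt2 i hi)) (hvd i hi i' hi' hne).1
          (hvd i hi i' hi' hne).2 h0 h1
    have hIHs : ∀ ε : Bool, 2 ^ I.card * (SolH I r c Fr φ j ε).card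
        ≤ 2 ^ f * (2 ^ I.card + 1) := by
      intro ε
      have := IH (f + 1) (by omega) (Fr.erase j) (Function.update φ j ε) I
        (dv r j) (fun i => dsh r c j i ε) hcard (hsupp' ε)
        (fun i hi => Or.inl (hwd2 i hi))
        (fun i hi i' hi' hne => by
          constructor
          · intro h
            exact (hrel' i hi i' hi' hne).1 (congrArg Prod.fst h)
          · intro h
            exact (hrel' i hi i' hi' hne).2 (congrArg Prod.fst h))
      rwa [hcard] at this
    rw [hsplit, hF]
    have h2 : f + 2 - 1 = f + 1 := by omega
    rw [h2]
    have e0 := hIHs false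
    have e1 := hIHs true
    rw [Nat.mul_add, pow_succ]
    have hg : 2 ^ f * 2 * (2 ^ I.card + 1)
        = 2 ^ f * (2 ^ I.card + 1) + 2 ^ f * (2 ^ I.card + 1) := by ring
    omega

end
end Omg
namespace Omg
open Finset
attribute [local instance] Classical.propDecidable
noncomputable section

lemma wt_eq_wtF {l : ℕ} (v : Fin l → ℝ) : wt v = wtF v := by
  unfold wt wtF
  rw [← Set.ncard_coe_finset]
  congr 1
  ext t; simp

def toR {l : ℕ} (b : Fin l → Bool) : Fin l → ℝ := fun j => bR (b j)

end
end Omg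

theorem omega_card_le_of_reduced_of_rows_ge_cols
    {k l : ℕ} (A : Matrix (Fin k) (Fin l) ℝ)
    (hA : ReducedMat A) (hkl : l ≤ k) :
    (OmegaM A).ncard ≤ 2 ^ (l - 1) := by
  classical
  rcases Nat.eq_zero_or_pos l with hl0 | hlpos
  · -- l = 0 : the ambient type is a subsingleton
    subst hl0
    have hsub : (OmegaM A).Subsingleton := by
      intro x _ y _
      funext i
      exact absurd i.2 (by omega)
    rcases hsub.eq_empty_or_singleton with h | ⟨a, h⟩ <;> rw [h] <;> simp
  · -- l ≥ 1
    set r : ℕ → Fin l → ℝ := fun n => if h : n < k then A ⟨n, h⟩ else 0 with hr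
    set c : ℕ → ℝ := fun _ => 0 with hc
    set I : Finset ℕ := Finset.range k with hI
    set S : Finset (Fin l → Bool) :=
      Omg.Sol I r c Finset.univ (fun _ => false) with hS
    have hrow : ∀ n (hn : n < k), r n = A ⟨n, hn⟩ := by
      intro n hn; simp [hr, hn]
    -- Omega is covered by the image of S
    have hsub : OmegaM A ⊆ ↑(S.image Omg.toR) := by
      intro x hx
      obtain ⟨hx01, hximg⟩ := hx
      refine Finset.mem_coe.2 (Finset.mem_image.2 ⟨fun j => decide (x j = 1), ?_, ?_⟩)
      · rw [hS, Omg.mem_Sol]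
        refine ⟨fun t ht => absurd (Finset.mem_univ t) ht, ?_⟩
        intro i hi
        rw [hI, Finset.mem_range] at hi
        have hdot : Omg.dotB (r i) (fun j => decide (x j = 1)) = A.mulVec x ⟨i, hi⟩ := by
          rw [hrow i hi]
          unfold Omg.dotB
          simp only [Matrix.mulVec, dotProduct]
          apply Finset.sum_congr rfl
          intro j _
          have he : Omg.bR (decide (x j = 1)) = x j := by
            rcases hx01 j with h | h <;> rw [h] <;> norm_num [Omg.bR]
          rw [he]
        unfold Omg.Sat Omg.pOK
        rw [hdot, hc]
        simpa using hximg ⟨i, hi⟩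
      · funext j
        unfold Omg.toR
        rcases hx01 j with h | h <;> simp [Omg.bR, h]
    have h1 : (OmegaM A).ncard ≤ S.card := by
      have h2 := Set.ncard_le_ncard hsub (Finset.finite_toSet _)
      rw [Set.ncard_coe_finset] at h2
      exact le_trans h2 (Finset.card_image_le)
    -- main bound
    have hmain := Omg.main_bound (N := l) (Finset.univ.card) Finset.univ (fun _ => false)
      I r c rfl
      (by intro i hi t ht; exact absurd (Finset.mem_univ t) ht)
      (by
        intro i hi
        rw [hI, Finset.mem_range] at hi
        left
        rw [hrow i hi, ← Omg.wt_eq_wtF]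
        exact hA.2 _)
      (by
        intro i hi i' hi' hne
        rw [hI, Finset.mem_range] at hi hi'
        constructor
        · intro h
          have hfst := congrArg Prod.fst h
          simp only at hfst
          rw [hrow i hi, hrow i' hi'] at hfst
          exact hne (by
            have := hA.1 ⟨i, hi⟩ ⟨i', hi'⟩ hfst
            simpa using congrArg Fin.val this)
        · intro h
          have hsnd := congrArg Prod.snd h
          simp only [hc] at hsnd
          norm_num at hsnd)
    have hIc : I.card = k := by rw [hI, Finset.card_range]
    rw [hIc, Finset.card_fin, ← hS] at hmain
    -- conclude S.card ≤ 2 ^ (l - 1)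
    have hfin : S.card ≤ 2 ^ (l - 1) := by
      by_contra hcon
      push_neg at hcon
      have hge : 2 ^ (l - 1) + 1 ≤ S.card := hcon
      have e1 : 2 ^ k * (2 ^ (l - 1) + 1) = 2 ^ k * 2 ^ (l - 1) + 2 ^ k := by ring
      have e2 : 2 ^ (l - 1) * (2 ^ k + 1) = 2 ^ k * 2 ^ (l - 1) + 2 ^ (l - 1) := by ring
      have h3 : 2 ^ k * (2 ^ (l - 1) + 1) ≤ 2 ^ k * S.card := Nat.mul_le_mul_left _ hge
      have h4 : 2 ^ l ≤ 2 ^ k := Nat.pow_le_pow_right (by norm_num) hkl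
      have h5 : 2 ^ (l - 1) < 2 ^ l := Nat.pow_lt_pow_right (by norm_num) (by omega)
      omega
    exact le_trans h1 hfin
end

section
/- Let v be a vector of length ℓ all of whose entries are 1 or −1, and suppose exactly k of its entries equal 1. Then |Ω(v)| = C(ℓ+1, k), the binomial coefficient ℓ+1 choose k; in particular |Ω(v)| ≤ C(ℓ+1, ⌊(ℓ+1)/2⌋). -/
open scoped symmDiff


/-- `OmegaV v` is the set of (0,1)-vectors `b` such that the inner product
`v · b` lies in `{0, 1}`. -/
def OmegaV {l : ℕ} (v : Fin l → ℝ) : Set (Fin l → ℝ) :=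
  {b | (∀ j, b j = 0 ∨ b j = 1) ∧ (∑ i, v i * b i = 0 ∨ ∑ i, v i * b i = 1)}

theorem omega_card_of_pm_one_vector
    {l k : ℕ} (v : Fin l → ℝ)
    (hv : ∀ i, v i = 1 ∨ v i = -1)
    (hk : Set.ncard {i | v i = 1} = k) :
    (OmegaV v).ncard = Nat.choose (l + 1) k ∧
      (OmegaV v).ncard ≤ Nat.choose (l + 1) ((l + 1) / 2) := by
  classical
  set P : Finset (Fin l) := Finset.univ.filter (fun i => v i = 1) with hP
  have hPcard : P.card = k := by
    rw [← hk, Set.ncard_eq_toFinset_card']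
    congr 1
    ext i; simp [hP]
  -- sum over a finset
  have hsum : ∀ S : Finset (Fin l),
      ∑ i ∈ S, v i = ((S ∩ P).card : ℝ) - ((S \ P).card : ℝ) := by
    intro S
    have h1 : S ∩ P ∪ S \ P = S := by rw [Finset.union_comm, Finset.sdiff_union_inter]
    have hdisj : Disjoint (S ∩ P) (S \ P) := (Finset.disjoint_sdiff_inter S P).symm
    conv_lhs => rw [← h1, Finset.sum_union hdisj]
    have h2 : ∑ i ∈ S ∩ P, v i = ((S ∩ P).card : ℝ) := by
      rw [Finset.sum_congr rfl (fun i hi => ?_), Finset.sum_const, nsmul_eq_mul, mul_one]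
      exact (Finset.mem_filter.1 (Finset.mem_inter.1 hi).2).2
    have h3 : ∑ i ∈ S \ P, v i = -((S \ P).card : ℝ) := by
      rw [Finset.sum_congr rfl (fun i hi => ?_), Finset.sum_const, nsmul_eq_mul, mul_neg_one]
      rcases hv i with h | h
      · exact absurd (Finset.mem_filter.2 ⟨Finset.mem_univ i, h⟩)
          (Finset.mem_sdiff.1 hi).2
      · exact h
    rw [h2, h3]
    ring
  -- the finset of admissible index sets
  set B : Finset (Finset (Fin l)) := Finset.univ.filter
    (fun S => (S ∩ P).card = (S \ P).card ∨ (S ∩ P).card = (S \ P).card + 1) with hB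
  have hcond : ∀ S : Finset (Fin l),
      ((∑ i ∈ S, v i = 0 ∨ ∑ i ∈ S, v i = 1)) ↔ S ∈ B := by
    intro S
    rw [hB, Finset.mem_filter]
    simp only [Finset.mem_univ, true_and]
    rw [hsum S]
    constructor
    · rintro (h | h)
      · left; exact_mod_cast sub_eq_zero.1 h
      · right
        have h' : ((S ∩ P).card : ℝ) = ((S \ P).card : ℝ) + 1 := by linarith
        exact_mod_cast h'
    · rintro (h | h)
      · left; rw [h]; ring
      · right; rw [h]; push_cast; ring
  set e : Finset (Fin l) → (Fin l → ℝ) := fun S i => if i ∈ S then 1 else 0 with he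
  have heinj : Function.Injective e := by
    intro S T h
    ext i
    have h2 := congrFun h i
    by_cases hi : i ∈ S <;> by_cases hj : i ∈ T <;>
      simp [he, hi, hj] at h2 ⊢ <;> tauto
  have himg : OmegaV v = e '' ↑B := by
    ext b
    constructor
    · rintro ⟨hb1, hb2⟩
      set S := Finset.univ.filter (fun i => b i = 1) with hS
      have hbe : e S = b := by
        funext i
        rcases hb1 i with h | h <;> simp [he, hS, h]
      have hsum2 : ∑ i, v i * b i = ∑ i ∈ S, v i := by
        rw [hS, Finset.sum_filter]
        apply Finset.sum_congr rfl
        intro i _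
        rcases hb1 i with h | h <;> simp [h]
      refine ⟨S, ?_, hbe⟩
      rw [Finset.mem_coe, ← hcond, ← hsum2]
      exact hb2
    · rintro ⟨S, hS, rfl⟩
      refine ⟨fun j => ?_, ?_⟩
      · by_cases h : j ∈ S <;> simp [he, h]
      · have hsum2 : ∑ i, v i * e S i = ∑ i ∈ S, v i := by
          have h3 : ∀ i, v i * e S i = if i ∈ S then v i else 0 := by
            intro i; by_cases h : i ∈ S <;> simp [he, h]
          rw [Finset.sum_congr rfl (fun i _ => h3 i), Finset.sum_ite_mem,
            Finset.univ_inter]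
        rw [hsum2, hcond]
        exact hS
  have hcard1 : (OmegaV v).ncard = B.card := by
    rw [himg, Set.ncard_image_of_injective _ heinj, Set.ncard_coe_finset]
  -- helper: decompose a finset of options
  have hT_decomp : ∀ T : Finset (Option (Fin l)),
      T = (Finset.eraseNone T).image some ∪ (if none ∈ T then {none} else ∅) := by
    intro T; ext x
    cases x with
    | none => by_cases h : none ∈ T <;> simp [h]
    | some a => by_cases h : none ∈ T <;> simp [h, Finset.mem_eraseNone]
  have hBcard : B.card = Nat.choose (l + 1) k := by
    have hpow : (Finset.powersetCard k (Finset.univ : Finset (Option (Fin l)))).card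
        = (l + 1).choose k := by
      rw [Finset.card_powersetCard, Finset.card_univ, Fintype.card_option, Fintype.card_fin]
    rw [← hpow]
    apply Finset.card_bij'
      (fun a _ => ((P ∆ a).image some) ∪
        (if (a ∩ P).card = (a \ P).card + 1 then {none} else ∅))
      (fun T _ => P ∆ Finset.eraseNone T)
    · -- maps to powersetCard
      intro a ha
      rw [Finset.mem_powersetCard_univ]
      have hd : Disjoint (P \ a) (a \ P) := disjoint_sdiff_sdiff
      have hsymm : P ∆ a = P \ a ∪ a \ P := by
        simp [symmDiff_def, Finset.sup_eq_union]
      have hc1 : (P ∆ a).card = (P \ a).card + (a \ P).card := by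
        rw [hsymm, Finset.card_union_of_disjoint hd]
      have hc2 : (P \ a).card + (P ∩ a).card = k := by
        rw [Finset.card_sdiff_add_card_inter, hPcard]
      have hc3 : ((P ∆ a).image some).card = (P ∆ a).card :=
        Finset.card_image_of_injective _ (Option.some_injective _)
      rw [hB, Finset.mem_filter] at ha
      have hic : P ∩ a = a ∩ P := Finset.inter_comm P a
      by_cases hcnd : (a ∩ P).card = (a \ P).card + 1
      · rw [if_pos hcnd]
        have hdis2 : Disjoint ((P ∆ a).image some) ({none} : Finset (Option (Fin l))) := by
          rw [Finset.disjoint_left]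
          rintro x hx
          simp only [Finset.mem_image] at hx
          obtain ⟨y, _, rfl⟩ := hx
          simp
        rw [Finset.card_union_of_disjoint hdis2, hc3, hc1, Finset.card_singleton]
        rw [hic] at hc2
        omega
      · rcases ha.2 with hq | hq
        · rw [if_neg hcnd, Finset.union_empty, hc3, hc1]
          rw [hic] at hc2
          omega
        · exact absurd hq hcnd
    · -- maps back to B
      intro T hT
      rw [Finset.mem_powersetCard_univ] at hT
      set E := Finset.eraseNone T with hE
      have h1 : (P ∆ E) ∩ P = P \ E := by
        ext x; simp only [Finset.mem_symmDiff, Finset.mem_inter, Finset.mem_sdiff]; tauto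
      have h2 : (P ∆ E) \ P = E \ P := by
        ext x; simp only [Finset.mem_symmDiff, Finset.mem_inter, Finset.mem_sdiff]; tauto
      have hc2 : (P \ E).card + (P ∩ E).card = k := by
        rw [Finset.card_sdiff_add_card_inter, hPcard]
      have hc4 : (E \ P).card + (E ∩ P).card = E.card :=
        Finset.card_sdiff_add_card_inter E P
      have hic : P ∩ E = E ∩ P := Finset.inter_comm P E
      have hTcard : E.card + (if none ∈ T then 1 else 0) = k := by
        have hdec := hT_decomp T
        have hdis2 : Disjoint (E.image some) (if none ∈ T then {none} else ∅) := by
          rw [Finset.disjoint_left]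
          rintro x hx
          simp only [Finset.mem_image] at hx
          obtain ⟨y, _, rfl⟩ := hx
          by_cases h : none ∈ T <;> simp [h]
        have := congrArg Finset.card hdec
        rw [Finset.card_union_of_disjoint hdis2,
          Finset.card_image_of_injective _ (Option.some_injective _), hT] at this
        by_cases h : none ∈ T
        · rw [if_pos h] at this ⊢; rw [Finset.card_singleton] at this; omega
        · rw [if_neg h] at this ⊢; rw [Finset.card_empty] at this; omega
      rw [hB, Finset.mem_filter]
      refine ⟨Finset.mem_univ _, ?_⟩
      rw [h1, h2]
      rw [hic] at hc2
      by_cases h : none ∈ T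
      · right; rw [if_pos h] at hTcard; omega
      · left; rw [if_neg h] at hTcard; omega
    · -- left inverse
      intro a ha
      have herase : Finset.eraseNone (((P ∆ a).image some) ∪
          (if (a ∩ P).card = (a \ P).card + 1 then {none} else ∅)) = P ∆ a := by
        rw [Finset.eraseNone_union, Finset.eraseNone_image_some]
        by_cases h : (a ∩ P).card = (a \ P).card + 1 <;>
          simp [h]
      rw [herase, symmDiff_symmDiff_cancel_left]
    · -- right inverse
      intro T hT
      rw [Finset.mem_powersetCard_univ] at hT
      set E := Finset.eraseNone T with hE
      have hcancel : P ∆ (P ∆ E) = E := symmDiff_symmDiff_cancel_left (a := P) (b := E)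
      have h1 : (P ∆ E) ∩ P = P \ E := by
        ext x; simp only [Finset.mem_symmDiff, Finset.mem_inter, Finset.mem_sdiff]; tauto
      have h2 : (P ∆ E) \ P = E \ P := by
        ext x; simp only [Finset.mem_symmDiff, Finset.mem_inter, Finset.mem_sdiff]; tauto
      have hc2 : (P \ E).card + (P ∩ E).card = k := by
        rw [Finset.card_sdiff_add_card_inter, hPcard]
      have hc4 : (E \ P).card + (E ∩ P).card = E.card :=
        Finset.card_sdiff_add_card_inter E P
      have hic : P ∩ E = E ∩ P := Finset.inter_comm P E
      have hTcard : E.card + (if none ∈ T then 1 else 0) = k := by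
        have hdec := hT_decomp T
        have hdis2 : Disjoint (E.image some) (if none ∈ T then {none} else ∅) := by
          rw [Finset.disjoint_left]
          rintro x hx
          simp only [Finset.mem_image] at hx
          obtain ⟨y, _, rfl⟩ := hx
          by_cases h : none ∈ T <;> simp [h]
        have := congrArg Finset.card hdec
        rw [Finset.card_union_of_disjoint hdis2,
          Finset.card_image_of_injective _ (Option.some_injective _), hT] at this
        by_cases h : none ∈ T
        · rw [if_pos h] at this ⊢; rw [Finset.card_singleton] at this; omega
        · rw [if_neg h] at this ⊢; rw [Finset.card_empty] at this; omega
      have hcnd : (((P ∆ E) ∩ P).card = ((P ∆ E) \ P).card + 1) ↔ none ∈ T := by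
        rw [h1, h2]
        rw [hic] at hc2
        by_cases h : none ∈ T
        · rw [if_pos h] at hTcard; simp [h]; omega
        · rw [if_neg h] at hTcard; simp [h]; omega
      rw [hcancel]
      by_cases h : none ∈ T
      · rw [if_pos (hcnd.2 h)]
        conv_rhs => rw [hT_decomp T]
        rw [if_pos h, ← hE]
      · rw [if_neg (fun hc => h (hcnd.1 hc)), Finset.union_empty]
        conv_rhs => rw [hT_decomp T]
        rw [if_neg h, Finset.union_empty]
  refine ⟨by rw [hcard1, hBcard], ?_⟩
  rw [hcard1, hBcard]
  exact Nat.choose_le_middle k (l + 1)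
end

section
/- Let k ≥ 1 and let A be a real k×(k+2) matrix such that: every entry in the first two columns of A lies in {1,−1}; for 1 ≤ i ≤ k−1 the entry in row i and column i+2 lies in {1,−1}; the entry in row k and column k+2 lies in {0,1,−1}; and all other entries in columns 3 through k+2 are 0. Then |Ω(A)| ≤ 2^(k+1) + 2. -/
open scoped Classical

/-- embed Bool into ℝ as 0/1 -/
private def bval : Bool → ℝ := fun b => if b then 1 else 0

private lemma bval_injective : Function.Injective bval := by
  intro a b h; cases a <;> cases b <;> simp [bval] at h ⊢

/-- per-row condition -/
private def RowCond {k : ℕ} (A : Matrix (Fin k) (Fin (k + 2)) ℝ) (i : Fin k)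
    (p q t : Bool) : Prop :=
  A i ⟨0, by omega⟩ * bval p + A i ⟨1, by omega⟩ * bval q
      + A i ⟨i.val + 2, Nat.add_lt_add_right i.isLt 2⟩ * bval t = 0 ∨
  A i ⟨0, by omega⟩ * bval p + A i ⟨1, by omega⟩ * bval q
      + A i ⟨i.val + 2, Nat.add_lt_add_right i.isLt 2⟩ * bval t = 1

private lemma bcard_le_two (P : Bool → Prop) : Nat.card {t // P t} ≤ 2 := by
  have : Nat.card {t // P t} ≤ Nat.card Bool :=
    Nat.card_le_card_of_injective _ Subtype.val_injective
  simpa using this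

private lemma bcard_le_one {P : Bool → Prop} (h : ¬ P false ∨ ¬ P true) :
    Nat.card {t // P t} ≤ 1 := by
  have hs : Subsingleton {t // P t} := by
    constructor
    rintro ⟨a, ha⟩ ⟨b, hb⟩
    rcases h with h | h <;> cases a <;> cases b <;>
      first
      | rfl
      | (exact absurd ha h)
      | (exact absurd hb h)
  rcases isEmpty_or_nonempty {t // P t} with he | hn
  · simp [Nat.card_of_isEmpty]
  · exact le_of_eq Nat.card_unique

private lemma bcard_eq_zero {P : Bool → Prop} (h1 : ¬ P false) (h2 : ¬ P true) :
    Nat.card {t // P t} = 0 := by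
  have : IsEmpty {t // P t} := ⟨by rintro ⟨a, ha⟩; cases a; exact h1 ha; exact h2 ha⟩
  exact Nat.card_of_isEmpty

private def NormalRow (f : Bool → Bool → ℕ) : Prop :=
  ∃ u v : ℕ, u + v ≤ 1 ∧ f false false ≤ 2 ^ u ∧ f true true ≤ 2 ^ u ∧
    f true false ≤ 2 ^ v ∧ f false true ≤ 2 ^ v

private def SpecialRow (f : Bool → Bool → ℕ) : Prop :=
  (∀ p q, f p q ≤ 2) ∧
    (f false false = 0 ∨ f true true = 0 ∨ f true false = 0 ∨ f false true = 0)

private lemma arith {U V k : ℕ} (h : U + V ≤ k) :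
    2 ^ (U + 1) + 2 ^ (V + 1) ≤ 2 ^ (k + 1) + 2 := by
  have h1 : 1 ≤ 2 ^ U := Nat.one_le_two_pow
  have h2 : 1 ≤ 2 ^ V := Nat.one_le_two_pow
  have h3 : 2 ^ U * 2 ^ V ≤ 2 ^ k := by
    rw [← pow_add]; exact Nat.pow_le_pow_right (by norm_num) h
  have e1 : 2 ^ (U + 1) = 2 * 2 ^ U := by rw [pow_succ]; ring
  have e2 : 2 ^ (V + 1) = 2 * 2 ^ V := by rw [pow_succ]; ring
  have e3 : 2 ^ (k + 1) = 2 * 2 ^ k := by rw [pow_succ]; ring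
  nlinarith [h1, h2, h3]

private lemma sum_le {k : ℕ} (hk : 1 ≤ k) (c : Fin k → Bool → Bool → ℕ)
    (hn : ∀ i : Fin k, i.val < k - 1 → NormalRow (c i))
    (hl : NormalRow (c ⟨k - 1, Nat.sub_lt hk Nat.one_pos⟩) ∨ SpecialRow (c ⟨k - 1, Nat.sub_lt hk Nat.one_pos⟩)) :
    ∑ p : Bool × Bool, ∏ i, c i p.1 p.2 ≤ 2 ^ (k + 1) + 2 := by
  have hsum : ∑ p : Bool × Bool, ∏ i, c i p.1 p.2
      = (∏ i, c i false false) + (∏ i, c i true true)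
        + (∏ i, c i true false) + (∏ i, c i false true) := by
    rw [Fintype.sum_prod_type]
    simp [Fintype.sum_bool]
    ring
  rw [hsum]
  set L : Fin k := ⟨k - 1, by omega⟩ with hLdef
  rcases hl with hNl | hSl
  · have hall : ∀ i, NormalRow (c i) := by
      intro i
      by_cases h : i.val < k - 1
      · exact hn i h
      · have hi : i = L := Fin.ext (by have := i.isLt; simp [hLdef]; omega)
        rw [hi]; exact hNl
    choose u v huv hff htt htf hft using hall
    have h1 : (∏ i, c i false false) ≤ 2 ^ (∑ i, u i) := by
      rw [← Finset.prod_pow_eq_pow_sum]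
      exact Finset.prod_le_prod' (fun i _ => hff i)
    have h2 : (∏ i, c i true true) ≤ 2 ^ (∑ i, u i) := by
      rw [← Finset.prod_pow_eq_pow_sum]
      exact Finset.prod_le_prod' (fun i _ => htt i)
    have h3 : (∏ i, c i true false) ≤ 2 ^ (∑ i, v i) := by
      rw [← Finset.prod_pow_eq_pow_sum]
      exact Finset.prod_le_prod' (fun i _ => htf i)
    have h4 : (∏ i, c i false true) ≤ 2 ^ (∑ i, v i) := by
      rw [← Finset.prod_pow_eq_pow_sum]
      exact Finset.prod_le_prod' (fun i _ => hft i)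
    have hUV : (∑ i, u i) + (∑ i, v i) ≤ k := by
      rw [← Finset.sum_add_distrib]
      calc ∑ i, (u i + v i) ≤ ∑ _i : Fin k, 1 := Finset.sum_le_sum (fun i _ => huv i)
        _ = k := by simp
    have := arith hUV
    have e1 : 2 ^ ((∑ i, u i) + 1) = 2 ^ (∑ i, u i) + 2 ^ (∑ i, u i) := by
      rw [pow_succ]; ring
    have e2 : 2 ^ ((∑ i, v i) + 1) = 2 ^ (∑ i, v i) + 2 ^ (∑ i, v i) := by
      rw [pow_succ]; ring
    omega
  · obtain ⟨hb2, hz⟩ := hSl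
    have hall : ∀ i : Fin k, i ≠ L → NormalRow (c i) := by
      intro i hi
      apply hn
      have h1 : i.val ≠ k - 1 := by
        intro h; exact hi (Fin.ext (by simp [hLdef, h]))
      have := i.isLt
      omega
    set d : Fin k → Bool → Bool → ℕ := fun i p q => if i = L then 1 else c i p q with hd
    have halld : ∀ i, NormalRow (d i) := by
      intro i
      by_cases h : i = L
      · exact ⟨0, 0, by norm_num, by simp [hd, h], by simp [hd, h],
          by simp [hd, h], by simp [hd, h]⟩
      · obtain ⟨u, v, h1, h2, h3, h4, h5⟩ := hall i h
        exact ⟨u, v, h1, by simpa [hd, h] using h2, by simpa [hd, h] using h3,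
          by simpa [hd, h] using h4, by simpa [hd, h] using h5⟩
    choose u v huv hff htt htf hft using halld
    have key : ∀ (p q : Bool) (w : Fin k → ℕ), (∀ i, d i p q ≤ 2 ^ w i) →
        (∏ i, c i p q) ≤ c L p q * 2 ^ (∑ i ∈ Finset.univ.erase L, w i) := by
      intro p q w hw
      rw [← Finset.mul_prod_erase Finset.univ (fun i => c i p q) (Finset.mem_univ L)]
      refine Nat.mul_le_mul le_rfl ?_
      calc ∏ i ∈ Finset.univ.erase L, c i p q
          = ∏ i ∈ Finset.univ.erase L, d i p q :=
            Finset.prod_congr rfl (fun i hi => by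
              simp [hd, Finset.ne_of_mem_erase hi])
        _ ≤ ∏ i ∈ Finset.univ.erase L, 2 ^ w i :=
            Finset.prod_le_prod' (fun i _ => hw i)
        _ = 2 ^ ∑ i ∈ Finset.univ.erase L, w i := Finset.prod_pow_eq_pow_sum _ _ _
    set U := ∑ i ∈ Finset.univ.erase L, u i with hU
    set V := ∑ i ∈ Finset.univ.erase L, v i with hV
    have hUV : U + V ≤ k - 1 := by
      rw [hU, hV, ← Finset.sum_add_distrib]
      calc ∑ i ∈ Finset.univ.erase L, (u i + v i)
          ≤ ∑ _i ∈ Finset.univ.erase L, 1 := Finset.sum_le_sum (fun i _ => huv i)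
        _ = (Finset.univ.erase L).card := by simp
        _ = k - 1 := by
            rw [Finset.card_erase_of_mem (Finset.mem_univ L)]
            simp
    have kff := key false false u hff
    have ktt := key true true u htt
    have ktf := key true false v htf
    have kft := key false true v hft
    have bff : (∏ i, c i false false) ≤ 2 * 2 ^ U := by
      refine le_trans kff (Nat.mul_le_mul (hb2 _ _) le_rfl)
    have btt : (∏ i, c i true true) ≤ 2 * 2 ^ U := by
      refine le_trans ktt (Nat.mul_le_mul (hb2 _ _) le_rfl)
    have btf : (∏ i, c i true false) ≤ 2 * 2 ^ V := by
      refine le_trans ktf (Nat.mul_le_mul (hb2 _ _) le_rfl)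
    have bft : (∏ i, c i false true) ≤ 2 * 2 ^ V := by
      refine le_trans kft (Nat.mul_le_mul (hb2 _ _) le_rfl)
    have eU : 2 ^ (U + 1) = 2 * 2 ^ U := by rw [pow_succ]; ring
    have eV : 2 ^ (V + 1) = 2 * 2 ^ V := by rw [pow_succ]; ring
    have eU2 : 2 ^ (U + 1 + 1) = 2 * 2 ^ (U + 1) := by rw [pow_succ (2) (U+1)]; ring
    have eV2 : 2 ^ (V + 1 + 1) = 2 * 2 ^ (V + 1) := by rw [pow_succ (2) (V+1)]; ring
    rcases hz with hz | hz | hz | hz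
    · have zff : (∏ i, c i false false) = 0 := by
        have := kff; rw [hz] at this; simpa using this
      have := arith (show U + (V + 1) ≤ k by omega)
      omega
    · have ztt : (∏ i, c i true true) = 0 := by
        have := ktt; rw [hz] at this; simpa using this
      have := arith (show U + (V + 1) ≤ k by omega)
      omega
    · have ztf : (∏ i, c i true false) = 0 := by
        have := ktf; rw [hz] at this; simpa using this
      have := arith (show (U + 1) + V ≤ k by omega)
      omega
    · have zft : (∏ i, c i false true) = 0 := by
        have := kft; rw [hz] at this; simpa using this
      have := arith (show (U + 1) + V ≤ k by omega)
      omega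
private def splitEquiv (k : ℕ) : (Fin (k + 2) → Bool) ≃ (Bool × Bool) × (Fin k → Bool) where
  toFun g := ((g ⟨0, by omega⟩, g ⟨1, by omega⟩), fun i => g ⟨i.val + 2, Nat.add_lt_add_right i.isLt 2⟩)
  invFun x := fun j =>
    if h0 : j.val = 0 then x.1.1
    else if h1 : j.val = 1 then x.1.2
    else x.2 ⟨j.val - 2, by have := j.isLt; omega⟩
  left_inv g := by
    funext j
    by_cases h0 : j.val = 0
    · have hj : j = ⟨0, by omega⟩ := Fin.ext h0
      rw [hj]; simp
    · by_cases h1 : j.val = 1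
      · have hj : j = ⟨1, by omega⟩ := Fin.ext h1
        rw [hj]; simp
      · simp only [dif_neg h0, dif_neg h1]
        congr 1
        exact Fin.ext (by simp only [Fin.val_mk]; omega)
  right_inv x := by
    rcases x with ⟨⟨p, q⟩, f⟩
    refine Prod.ext (Prod.ext ?_ ?_) ?_
    · simp
    · simp
    · funext i
      simp only []
      rw [dif_neg (by omega), dif_neg (by omega)]
      congr 1

private lemma mulVec_eq {k : ℕ} (A : Matrix (Fin k) (Fin (k + 2)) ℝ)
    (hzero : ∀ (i : Fin k) (j : Fin (k + 2)), 2 ≤ j.val → j.val ≠ i.val + 2 → A i j = 0)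
    (b : Fin (k + 2) → ℝ) (i : Fin k) :
    A.mulVec b i = A i ⟨0, by omega⟩ * b ⟨0, by omega⟩
      + A i ⟨1, by omega⟩ * b ⟨1, by omega⟩
      + A i ⟨i.val + 2, Nat.add_lt_add_right i.isLt 2⟩ * b ⟨i.val + 2, Nat.add_lt_add_right i.isLt 2⟩ := by
  have hne01 : (⟨0, by omega⟩ : Fin (k + 2)) ≠ ⟨1, by omega⟩ := by
    simp [Fin.ext_iff]
  have hne02 : (⟨0, by omega⟩ : Fin (k + 2)) ≠ ⟨i.val + 2, by omega⟩ := by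
    simp [Fin.ext_iff]
  have hne12 : (⟨1, by omega⟩ : Fin (k + 2)) ≠ ⟨i.val + 2, by omega⟩ := by
    simp [Fin.ext_iff]
  have hset : A.mulVec b i = ∑ j ∈ ({⟨0, by omega⟩, ⟨1, by omega⟩, ⟨i.val + 2, by omega⟩} :
      Finset (Fin (k + 2))), A i j * b j := by
    rw [Matrix.mulVec, dotProduct]
    refine (Finset.sum_subset (Finset.subset_univ _) ?_).symm
    intro j _ hj
    simp only [Finset.mem_insert, Finset.mem_singleton] at hj
    push_neg at hj
    obtain ⟨hj0, hj1, hj2⟩ := hj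
    have hv0 : j.val ≠ 0 := fun h => hj0 (Fin.ext h)
    have hv1 : j.val ≠ 1 := fun h => hj1 (Fin.ext h)
    have hv2 : j.val ≠ i.val + 2 := fun h => hj2 (Fin.ext h)
    rw [hzero i j (by omega) hv2, zero_mul]
  rw [hset, Finset.sum_insert (by simp [Fin.ext_iff]),
    Finset.sum_insert (by simp [Fin.ext_iff]), Finset.sum_singleton]
  ring

theorem omega_card_le_special_k_by_k_add_two
    {k : ℕ} (hk : 1 ≤ k) (A : Matrix (Fin k) (Fin (k + 2)) ℝ)
    (hcol0 : ∀ i, A i ⟨0, by omega⟩ = 1 ∨ A i ⟨0, by omega⟩ = -1)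
    (hcol1 : ∀ i, A i ⟨1, by omega⟩ = 1 ∨ A i ⟨1, by omega⟩ = -1)
    (hdiag : ∀ i : Fin k, i.val < k - 1 →
      A i ⟨i.val + 2, by omega⟩ = 1 ∨ A i ⟨i.val + 2, by omega⟩ = -1)
    (hlast : A ⟨k - 1, by omega⟩ ⟨k + 1, by omega⟩ = 0 ∨
      A ⟨k - 1, by omega⟩ ⟨k + 1, by omega⟩ = 1 ∨
      A ⟨k - 1, by omega⟩ ⟨k + 1, by omega⟩ = -1)
    (hzero : ∀ (i : Fin k) (j : Fin (k + 2)),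
      2 ≤ j.val → j.val ≠ i.val + 2 → A i j = 0) :
    (OmegaM A).ncard ≤ 2 ^ (k + 1) + 2 := by
  classical
  set S : Set (Fin (k + 2) → Bool) :=
    {g | ∀ i : Fin k, RowCond A i (g ⟨0, by omega⟩) (g ⟨1, by omega⟩)
      (g ⟨i.val + 2, by omega⟩)} with hSdef
  -- Ω is the image of S
  have himg : OmegaM A = (fun g : Fin (k + 2) → Bool => bval ∘ g) '' S := by
    ext b
    constructor
    · rintro ⟨hb01, hbm⟩
      set g : Fin (k + 2) → Bool := fun j => if b j = 1 then true else false with hgdef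
      have hg : ∀ j, bval (g j) = b j := by
        intro j; rcases hb01 j with h | h <;> simp [hgdef, bval, h]
      refine ⟨g, ?_, funext hg⟩
      intro i
      have := hbm i
      rw [mulVec_eq A hzero b i] at this
      unfold RowCond
      rw [hg, hg, hg]
      exact this
    · rintro ⟨g, hg, rfl⟩
      constructor
      · intro j; cases h : g j <;> simp [bval, h]
      · intro i
        rw [mulVec_eq A hzero]
        exact hg i
  have hinj : Function.Injective (fun g : Fin (k + 2) → Bool => bval ∘ g) :=
    fun g h e => funext fun j => bval_injective (congrFun e j)
  rw [himg, Set.ncard_image_of_injective _ hinj, ← Nat.card_coe_set_eq]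
  -- split off the first two coordinates
  have e1 : Nat.card S = Nat.card {x : (Bool × Bool) × (Fin k → Bool) //
      ∀ i : Fin k, RowCond A i x.1.1 x.1.2 (x.2 i)} :=
    Nat.card_congr (Equiv.subtypeEquiv (splitEquiv k) (fun g => Iff.rfl))
  have e2 : Nat.card {x : (Bool × Bool) × (Fin k → Bool) //
        ∀ i : Fin k, RowCond A i x.1.1 x.1.2 (x.2 i)}
      = ∑ pq : Bool × Bool,
          Nat.card {f : Fin k → Bool // ∀ i : Fin k, RowCond A i pq.1 pq.2 (f i)} := by
    rw [Nat.card_congr (Equiv.subtypeProdEquivSigmaSubtype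
      (fun (pq : Bool × Bool) (f : Fin k → Bool) => ∀ i : Fin k, RowCond A i pq.1 pq.2 (f i)))]
    rw [Nat.card_eq_fintype_card, Fintype.card_sigma]
    exact Finset.sum_congr rfl fun pq _ => (Nat.card_eq_fintype_card).symm
  have e3 : ∀ pq : Bool × Bool,
      Nat.card {f : Fin k → Bool // ∀ i : Fin k, RowCond A i pq.1 pq.2 (f i)}
        = ∏ i : Fin k, Nat.card {t : Bool // RowCond A i pq.1 pq.2 t} := by
    intro pq
    rw [Nat.card_congr (Equiv.subtypePiEquivPi
      (p := fun (i : Fin k) (t : Bool) => RowCond A i pq.1 pq.2 t)), Nat.card_pi]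
  rw [e1, e2]
  rw [Finset.sum_congr rfl fun pq _ => e3 pq]
  clear_value S
  clear hSdef himg hinj e1 e2 e3 S
  -- now apply the combinatorial bound
  have hnormal : ∀ i : Fin k,
      (A i ⟨i.val + 2, Nat.add_lt_add_right i.isLt 2⟩ = 1 ∨
        A i ⟨i.val + 2, Nat.add_lt_add_right i.isLt 2⟩ = -1) →
      NormalRow (fun p q => Nat.card {t : Bool // RowCond A i p q t}) := by
    intro i hd
    rcases hd with hd | hd
    · refine ⟨1, 0, by norm_num, bcard_le_two _, bcard_le_two _, ?_, ?_⟩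
      · apply bcard_le_one
        rcases hcol0 i with ha | ha
        · right; simp only [RowCond, bval, ha, hd]; norm_num
        · left; simp only [RowCond, bval, ha, hd]; norm_num
      · apply bcard_le_one
        rcases hcol1 i with hb | hb
        · right; simp only [RowCond, bval, hb, hd]; norm_num
        · left; simp only [RowCond, bval, hb, hd]; norm_num
    · refine ⟨0, 1, by norm_num, ?_, ?_, bcard_le_two _, bcard_le_two _⟩
      · apply bcard_le_one
        right; simp only [RowCond, bval, hd]; norm_num
      · apply bcard_le_one
        rcases hcol0 i with ha | ha <;> rcases hcol1 i with hb | hb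
        · left; simp only [RowCond, bval, ha, hb, hd]; norm_num
        · right; simp only [RowCond, bval, ha, hb, hd]; norm_num
        · right; simp only [RowCond, bval, ha, hb, hd]; norm_num
        · left; simp only [RowCond, bval, ha, hb, hd]; norm_num
  have hkk : k - 1 < k := Nat.sub_lt hk Nat.one_pos
  set L : Fin k := ⟨k - 1, hkk⟩ with hLdef
  have hix : (⟨L.val + 2, Nat.add_lt_add_right L.isLt 2⟩ : Fin (k + 2))
      = ⟨k + 1, Nat.lt_succ_self (k + 1)⟩ :=
    Fin.ext (by simp [hLdef]; omega)
  rw [show (⟨k + 1, by omega⟩ : Fin (k+2)) = ⟨k + 1, Nat.lt_succ_self (k + 1)⟩ from rfl,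
    ← hix] at hlast
  have hl : NormalRow (fun p q => Nat.card {t : Bool // RowCond A L p q t})
      ∨ SpecialRow (fun p q => Nat.card {t : Bool // RowCond A L p q t}) := by
    rcases hlast with hd | hd | hd
    · right
      refine ⟨fun p q => bcard_le_two _, ?_⟩
      rcases hcol0 L with ha | ha
      · rcases hcol1 L with hb | hb
        · right; left
          exact bcard_eq_zero (by simp only [RowCond, bval, ha, hb, hd]; norm_num)
            (by simp only [RowCond, bval, ha, hb, hd]; norm_num)
        · right; right; right
          exact bcard_eq_zero (by simp only [RowCond, bval, ha, hb, hd]; norm_num)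
            (by simp only [RowCond, bval, ha, hb, hd]; norm_num)
      · right; right; left
        exact bcard_eq_zero (by simp only [RowCond, bval, ha, hd]; norm_num)
          (by simp only [RowCond, bval, ha, hd]; norm_num)
    · left; exact hnormal L (Or.inl hd)
    · left; exact hnormal L (Or.inr hd)
  exact sum_le hk (fun i p q => Nat.card {t : Bool // RowCond A i p q t})
    (fun i hi => hnormal i (hdiag i hi)) hl
end

section
/- Let k ≥ 1 and let A be a real k×(k+1) matrix such that: every entry in the first column of A lies in {1,−1}; for 1 ≤ i ≤ k the entry in row i and column i+1 lies in {1,−1}; and all other entries in columns 2 through k+1 are 0. Then |Ω(A)| ≤ 2^k + 1. -/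
private lemma two_pow_add_two_pow_le {a b k : ℕ} (h : a + b ≤ k) :
    2 ^ a + 2 ^ b ≤ 2 ^ k + 1 := by
  rcases Nat.eq_zero_or_pos a with ha | ha
  · subst ha
    have : 2 ^ b ≤ 2 ^ k := Nat.pow_le_pow_right (by norm_num) (by omega)
    omega
  rcases Nat.eq_zero_or_pos b with hb | hb
  · subst hb
    have : 2 ^ a ≤ 2 ^ k := Nat.pow_le_pow_right (by norm_num) (by omega)
    omega
  have hx : 2 ≤ 2 ^ a := Nat.one_lt_two_pow_iff.mpr (by omega)
  have hy : 2 ≤ 2 ^ b := Nat.one_lt_two_pow_iff.mpr (by omega)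
  have h1 : 2 ^ a + 2 ^ b ≤ 2 ^ a * 2 ^ b := by nlinarith
  have h2 : 2 ^ a * 2 ^ b ≤ 2 ^ k := by
    rw [← pow_add]; exact Nat.pow_le_pow_right (by norm_num) h
  omega

theorem omega_card_le_special_k_by_k_add_one
    {k : ℕ} (hk : 1 ≤ k) (A : Matrix (Fin k) (Fin (k + 1)) ℝ)
    (hcol0 : ∀ i, A i ⟨0, by omega⟩ = 1 ∨ A i ⟨0, by omega⟩ = -1)
    (hdiag : ∀ i : Fin k,
      A i ⟨i.val + 1, by omega⟩ = 1 ∨ A i ⟨i.val + 1, by omega⟩ = -1)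
    (hzero : ∀ (i : Fin k) (j : Fin (k + 1)),
      1 ≤ j.val → j.val ≠ i.val + 1 → A i j = 0) :
    (OmegaM A).ncard ≤ 2 ^ k + 1 := by
  set e0 : Fin (k + 1) := ⟨0, by omega⟩ with he0
  have ei : Fin k → Fin (k + 1) := fun i => ⟨i.val + 1, by omega⟩
  -- mulVec formula
  have hmv : ∀ (b : Fin (k + 1) → ℝ) (i : Fin k),
      A.mulVec b i = A i e0 * b e0 + A i ⟨i.val + 1, by omega⟩ * b ⟨i.val + 1, by omega⟩ := by
    intro b i
    have h := Finset.sum_eq_add_of_mem (s := Finset.univ) (f := fun j => A i j * b j)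
      e0 ⟨i.val + 1, by omega⟩ (Finset.mem_univ _) (Finset.mem_univ _)
      (by simp [he0, Fin.ext_iff])
      (by
        intro c _ hc
        have h1 : 1 ≤ c.val := by
          rcases Nat.eq_zero_or_pos c.val with h | h
          · exact absurd (Fin.ext h) hc.1
          · exact h
        have h2 : c.val ≠ i.val + 1 := fun h => hc.2 (Fin.ext h)
        simp [hzero i c h1 h2])
    simpa [Matrix.mulVec, dotProduct] using h
  -- split by b e0
  set Ω0 : Set (Fin (k + 1) → ℝ) := {b ∈ OmegaM A | b e0 = 0} with hΩ0
  set Ω1 : Set (Fin (k + 1) → ℝ) := {b ∈ OmegaM A | b e0 = 1} with hΩ1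
  have hsub : OmegaM A ⊆ Ω0 ∪ Ω1 := by
    intro b hb
    rcases hb.1 e0 with h | h
    · exact Or.inl ⟨hb, h⟩
    · exact Or.inr ⟨hb, h⟩
  set S0 : Finset (Fin k) := Finset.univ.filter (fun i => A i ⟨i.val + 1, by omega⟩ = 1) with hS0
  set S1 : Finset (Fin k) := Finset.univ.filter
    (fun i => A i e0 = 1 ∧ A i ⟨i.val + 1, by omega⟩ = -1) with hS1
  -- forced coordinates
  have forced0 : ∀ b ∈ Ω0, ∀ i : Fin k, i ∉ S0 → b ⟨i.val + 1, by omega⟩ = 0 := by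
    intro b hb i hi
    have hd : A i ⟨i.val + 1, by omega⟩ = -1 := by
      rcases hdiag i with h | h
      · exact absurd (by simp [hS0, h]) hi
      · exact h
    have hmvb := hb.1.2 i
    rw [hmv b i, hb.2, hd] at hmvb
    rcases hb.1.1 ⟨i.val + 1, by omega⟩ with h | h
    · exact h
    · rw [h] at hmvb; norm_num at hmvb
  have forced1 : ∀ b ∈ Ω1, ∀ i : Fin k, i ∉ S1 →
      b ⟨i.val + 1, by omega⟩ = if A i e0 = 1 then 0 else 1 := by
    intro b hb i hi
    have hmvb := hb.1.2 i
    rw [hmv b i, hb.2] at hmvb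
    have hbv := hb.1.1 ⟨i.val + 1, by omega⟩
    rcases hcol0 i with h0 | h0
    · have hd : A i ⟨i.val + 1, by omega⟩ = 1 := by
        rcases hdiag i with hd | hd
        · exact hd
        · exact absurd (by simp [hS1, h0, hd]) hi
      rw [h0, hd] at hmvb
      rcases hbv with h | h
      · rw [if_pos h0]; exact h
      · rw [h] at hmvb; norm_num at hmvb
    · rw [if_neg (by rw [h0]; norm_num)]
      rcases hbv with h | h
      · rw [h0, h] at hmvb; norm_num at hmvb
      · exact h
  -- cardinality bounds via injections
  have key : ∀ (Ω' : Set (Fin (k + 1) → ℝ)) (S : Finset (Fin k)) (c : ℝ),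
      (∀ b ∈ Ω', b ∈ OmegaM A) → (∀ b ∈ Ω', b e0 = c) →
      (∀ b ∈ Ω', ∀ b' ∈ Ω', ∀ i : Fin k, i ∉ S →
        b ⟨i.val + 1, by omega⟩ = b' ⟨i.val + 1, by omega⟩) →
      Ω'.ncard ≤ 2 ^ S.card := by
    intro Ω' S c hmem hc hforced
    have hinj : Set.InjOn (fun b => (fun i : {x // x ∈ S} =>
        decide (b (⟨i.1.val + 1, by omega⟩ : Fin (k + 1)) = 1))) Ω' := by
      intro b hb b' hb' heq
      funext j
      rcases j with ⟨jv, hj⟩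
      rcases Nat.eq_zero_or_pos jv with h | h
      · subst h
        have : (⟨0, hj⟩ : Fin (k + 1)) = e0 := rfl
        rw [this, hc b hb, hc b' hb']
      · obtain ⟨m, rfl⟩ := Nat.exists_eq_succ_of_ne_zero (by omega : jv ≠ 0)
        have hm : m < k := by omega
        by_cases hmS : (⟨m, hm⟩ : Fin k) ∈ S
        · have heq2 : b ⟨m + 1, hj⟩ = 1 ↔ b' ⟨m + 1, hj⟩ = 1 := by
            have := congrFun heq ⟨⟨m, hm⟩, hmS⟩
            simpa only [decide_eq_decide] using this
          rcases (hmem b hb).1 ⟨m + 1, hj⟩ with h1 | h1 <;>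
            rcases (hmem b' hb').1 ⟨m + 1, hj⟩ with h2 | h2
          · rw [h1, h2]
          · exact absurd (heq2.mpr h2) (by rw [h1]; norm_num)
          · exact absurd (heq2.mp h1) (by rw [h2]; norm_num)
          · rw [h1, h2]
        · exact hforced b hb b' hb' ⟨m, hm⟩ hmS
    have := Set.ncard_le_ncard_of_injOn _ (fun b _ => Set.mem_univ _) hinj
      (Set.finite_univ (α := {x // x ∈ S} → Bool))
    rw [Set.ncard_univ, Nat.card_eq_fintype_card] at this
    simpa using this
  have hb0 : Ω0.ncard ≤ 2 ^ S0.card := by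
    apply key Ω0 S0 0 (fun b hb => hb.1) (fun b hb => hb.2)
    intro b hb b' hb' i hi
    rw [forced0 b hb i hi, forced0 b' hb' i hi]
  have hb1 : Ω1.ncard ≤ 2 ^ S1.card := by
    apply key Ω1 S1 1 (fun b hb => hb.1) (fun b hb => hb.2)
    intro b hb b' hb' i hi
    rw [forced1 b hb i hi, forced1 b' hb' i hi]
  -- disjointness and final count
  have hdisj : Disjoint S0 S1 := by
    rw [Finset.disjoint_left]
    intro i h0 h1
    simp [hS0] at h0
    simp [hS1] at h1
    rw [h0] at h1
    norm_num at h1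
  have hcards : S0.card + S1.card ≤ k := by
    have := Finset.card_union_of_disjoint hdisj
    have hle : (S0 ∪ S1).card ≤ k := by
      simpa using Finset.card_le_card (Finset.subset_univ (S0 ∪ S1))
    omega
  have hfin : (OmegaM A).Finite := by
    have hsub' : OmegaM A ⊆ Set.pi Set.univ (fun _ : Fin (k + 1) => ({0, 1} : Set ℝ)) := by
      intro b hb j _
      rcases hb.1 j with h | h <;> simp [h]
    exact (Set.Finite.pi (fun _ => (Set.finite_singleton (1 : ℝ)).insert 0)).subset hsub'
  have hfinU : (Ω0 ∪ Ω1).Finite :=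
    Set.Finite.union (hfin.subset (fun b hb => hb.1)) (hfin.subset (fun b hb => hb.1))
  calc (OmegaM A).ncard ≤ (Ω0 ∪ Ω1).ncard := Set.ncard_le_ncard hsub hfinU
    _ ≤ Ω0.ncard + Ω1.ncard := Set.ncard_union_le _ _
    _ ≤ 2 ^ S0.card + 2 ^ S1.card := Nat.add_le_add hb0 hb1
    _ ≤ 2 ^ k + 1 := two_pow_add_two_pow_le hcards
end

section
/- Let k ≥ 2 and b ∈ {0,−1}, and let A₁ be the real k×(k+2) matrix whose first two columns are all-ones, whose rows 1 through k−1 restricted to columns 3 through k+1 form the matrix −I_{k−1} (with the remaining entries of these rows equal to 0), and whose last row equals (1, 1, 0, …, 0, b). Then |Ω(A₁)| = 2^(k+1) + 2. -/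
namespace OmegaAux
noncomputable def toR : Bool → ℝ := fun c => if c then 1 else 0

lemma toR_mem (c : Bool) : toR c = 0 ∨ toR c = 1 := by cases c <;> simp [toR]

lemma toR_injective : Function.Injective toR := by
  intro a b h; cases a <;> cases b <;> simp [toR] at h ⊢

lemma sum_three {n : ℕ} (a b c : Fin n) (hab : a ≠ b) (hac : a ≠ c) (hbc : b ≠ c)
    (f : Fin n → ℝ) (h : ∀ j, j ≠ a → j ≠ b → j ≠ c → f j = 0) :
    ∑ j, f j = f a + f b + f c := by
  have key := Finset.sum_subset (Finset.subset_univ ({a, b, c} : Finset (Fin n)))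
    (fun x _ hx => h x (by simp at hx; tauto) (by simp at hx; tauto) (by simp at hx; tauto))
  rw [← key, Finset.sum_insert (by simp [hab, hac]), Finset.sum_insert (by simp [hbc]),
    Finset.sum_singleton]
  ring

def A1 (k : ℕ) (b : ℝ) : Matrix (Fin k) (Fin (k+2)) ℝ := Matrix.of fun i j =>
  if j.val < 2 then (1 : ℝ)
  else if i.val < k - 1 ∧ j.val = i.val + 2 then -1
  else if i.val = k - 1 ∧ j.val = k + 1 then b
  else 0

lemma A1_mk (k : ℕ) (b : ℝ) (iv jv : ℕ) (hi : iv < k) (hj : jv < k + 2) :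
    A1 k b ⟨iv, hi⟩ ⟨jv, hj⟩ =
      if jv < 2 then 1 else if iv < k - 1 ∧ jv = iv + 2 then -1
      else if iv = k - 1 ∧ jv = k + 1 then b else 0 := rfl

lemma A1_apply' (k : ℕ) (b : ℝ) (i : Fin k) (j : Fin (k+2)) :
    A1 k b i j =
      if j.val < 2 then 1 else if i.val < k - 1 ∧ j.val = i.val + 2 then -1
      else if i.val = k - 1 ∧ j.val = k + 1 then b else 0 := rfl

lemma mulVec_lt {k : ℕ} (b : ℝ) (x : Fin (k+2) → ℝ) (i : Fin k)
    (hi : i.val < k - 1) :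
    (A1 k b).mulVec x i = x 0 + x 1 - x ⟨i.val + 2, by omega⟩ := by
  have hilt := i.isLt
  have h : (A1 k b).mulVec x i = ∑ j, A1 k b i j * x j := rfl
  rw [h, sum_three 0 1 ⟨i.val + 2, by omega⟩ (by simp [Fin.ext_iff])
    (by simp [Fin.ext_iff]) (by simp [Fin.ext_iff])]
  · have e0 : A1 k b i 0 = 1 := by
      rw [A1_apply']; simp
    have e1 : A1 k b i 1 = 1 := by
      rw [A1_apply']; simp
    have e2 : A1 k b i ⟨i.val + 2, by omega⟩ = -1 :=
      (A1_mk k b i.val (i.val + 2) i.isLt (by omega)).trans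
        (by split_ifs <;> first | rfl | omega)
    rw [e0, e1, e2]; ring
  · intro j hj0 hj1 hj2
    have hv0 : j.val ≠ 0 := fun h => hj0 (by simp [Fin.ext_iff, h])
    have hv1 : j.val ≠ 1 := fun h => hj1 (by simp [Fin.ext_iff, h])
    have hv2 : j.val ≠ i.val + 2 := fun h => hj2 (by simp [Fin.ext_iff, h])
    have hz : A1 k b i j = 0 :=
      (A1_mk k b i.val j.val i.isLt j.isLt).trans
        (by split_ifs <;> first | rfl | omega)
    rw [hz, zero_mul]

lemma mulVec_last {k : ℕ} (hk : 2 ≤ k) (b : ℝ) (x : Fin (k+2) → ℝ) :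
    (A1 k b).mulVec x ⟨k - 1, by omega⟩ = x 0 + x 1 + b * x ⟨k + 1, by omega⟩ := by
  have h : (A1 k b).mulVec x ⟨k - 1, by omega⟩ = ∑ j, A1 k b ⟨k - 1, by omega⟩ j * x j := rfl
  rw [h, sum_three 0 1 ⟨k + 1, by omega⟩ (by simp [Fin.ext_iff])
    (by simp [Fin.ext_iff] <;> omega) (by simp [Fin.ext_iff] <;> omega)]
  · have e0 : A1 k b ⟨k - 1, by omega⟩ 0 = 1 := by rw [A1_apply']; simp
    have e1 : A1 k b ⟨k - 1, by omega⟩ 1 = 1 := by rw [A1_apply']; simp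
    have e2 : A1 k b ⟨k - 1, by omega⟩ ⟨k + 1, by omega⟩ = b :=
      (A1_mk k b (k - 1) (k + 1) (by omega) (by omega)).trans
        (by split_ifs <;> first | rfl | omega)
    rw [e0, e1, e2]; ring
  · intro j hj0 hj1 hj2
    have hv0 : j.val ≠ 0 := fun h => hj0 (by simp [Fin.ext_iff, h])
    have hv1 : j.val ≠ 1 := fun h => hj1 (by simp [Fin.ext_iff, h])
    have hv2 : j.val ≠ k + 1 := fun h => hj2 (by simp [Fin.ext_iff, h])
    have hz : A1 k b ⟨k - 1, by omega⟩ j = 0 :=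
      (A1_mk k b (k - 1) j.val (by omega) j.isLt).trans
        (by split_ifs <;> first | rfl | omega)
    rw [hz, zero_mul]
end OmegaAux

namespace OmegaAux2
open OmegaAux

noncomputable def f (k : ℕ) (c : Bool) (g : Fin k → Bool) : Fin (k+2) → ℝ := fun j =>
  if h0 : j.val = 0 then toR c
  else if h1 : j.val = 1 then toR !c
  else toR (g ⟨j.val - 2, by omega⟩)

lemma f_zero (k : ℕ) (c : Bool) (g : Fin k → Bool) : f k c g 0 = toR c := by
  simp [f]

lemma f_one (k : ℕ) (c : Bool) (g : Fin k → Bool) : f k c g 1 = toR !c := by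
  simp [f]

lemma f_mk (k : ℕ) (c : Bool) (g : Fin k → Bool) (jv : ℕ) (h : jv < k + 2) (hj : 2 ≤ jv) :
    f k c g ⟨jv, h⟩ = toR (g ⟨jv - 2, by omega⟩) := by
  show (if h0 : jv = 0 then toR c else if h1 : jv = 1 then toR !c
    else toR (g ⟨jv - 2, by omega⟩)) = _
  rw [dif_neg (by omega), dif_neg (by omega)]

lemma f_mem_01 (k : ℕ) (c : Bool) (g : Fin k → Bool) (j : Fin (k+2)) :
    f k c g j = 0 ∨ f k c g j = 1 := by
  rw [f]; split_ifs <;> exact toR_mem _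

lemma f_inj (k : ℕ) :
    Function.Injective (fun p : Bool × (Fin k → Bool) => f k p.1 p.2) := by
  rintro ⟨c, g⟩ ⟨c', g'⟩ h
  simp only at h
  have hc : c = c' := toR_injective (by
    have := congrFun h 0
    rwa [f_zero, f_zero] at this)
  have hg : g = g' := by
    funext m
    have hm : m.val + 2 < k + 2 := by omega
    have := congrFun h ⟨m.val + 2, hm⟩
    rw [f_mk k c g _ hm (by omega), f_mk k c' g' _ hm (by omega)] at this
    have hmm : (⟨m.val + 2 - 2, by omega⟩ : Fin k) = m := by
      ext; simp
    rw [hmm] at this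
    exact toR_injective this
  rw [hc, hg]

noncomputable def v1 (k : ℕ) (b : ℝ) : Fin (k+2) → ℝ := fun j =>
  if j.val = k + 1 then 1 else -b

lemma f_mem (k : ℕ) (hk : 2 ≤ k) (b : ℝ) (hb : b = 0 ∨ b = -1) (c : Bool) (g : Fin k → Bool) :
    f k c g ∈ OmegaM (A1 k b) := by
  constructor
  · exact f_mem_01 k c g
  · intro i
    have hsum : f k c g 0 + f k c g 1 = 1 := by
      rw [f_zero, f_one]; cases c <;> simp [toR]
    rcases Nat.lt_or_ge i.val (k - 1) with hi | hi
    · rw [mulVec_lt b _ i hi, hsum]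
      rcases f_mem_01 k c g ⟨i.val + 2, by omega⟩ with h | h <;> rw [h] <;> norm_num
    · have hieq : i = ⟨k - 1, by omega⟩ := by
        ext; simp only []; omega
      rw [hieq, mulVec_last hk b, hsum]
      rcases hb with rfl | rfl
      · norm_num
      · rcases f_mem_01 k c g ⟨k + 1, by omega⟩ with h | h <;> rw [h] <;> norm_num

lemma v0_mem (k : ℕ) (b : ℝ) : (fun _ => (0:ℝ)) ∈ OmegaM (A1 k b) := by
  constructor
  · intro j; left; rfl
  · intro i; left
    show ∑ j, A1 k b i j * (0:ℝ) = 0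
    simp

lemma v1_mem (k : ℕ) (hk : 2 ≤ k) (b : ℝ) (hb : b = 0 ∨ b = -1) :
    v1 k b ∈ OmegaM (A1 k b) := by
  have hnb : -b = 0 ∨ -b = 1 := by rcases hb with rfl | rfl <;> norm_num
  have hv0 : v1 k b 0 = -b := by
    simp only [v1, Fin.val_zero]; exact if_neg (by omega)
  have hv1 : v1 k b 1 = -b := by
    simp only [v1, Fin.val_one]; exact if_neg (by omega)
  have hvlast : v1 k b ⟨k + 1, by omega⟩ = 1 := by rw [v1]; simp
  constructor
  · intro j; rw [v1]; split_ifs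
    · right; rfl
    · exact hnb
  · intro i
    rcases Nat.lt_or_ge i.val (k - 1) with hi | hi
    · rw [mulVec_lt b _ i hi, hv0, hv1]
      have : v1 k b ⟨i.val + 2, by omega⟩ = -b := by
        rw [v1]; simp only [Fin.val_mk]; rw [if_neg (by omega)]
      rw [this]
      rcases hnb with h | h <;> rw [h] <;> norm_num
    · have hieq : i = ⟨k - 1, by omega⟩ := by
        ext; simp only []; omega
      rw [hieq, mulVec_last hk b, hv0, hv1, hvlast]
      rcases hb with rfl | rfl <;> norm_num

end OmegaAux2

namespace OmegaAux3
open OmegaAux OmegaAux2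

lemma fin0 {k : ℕ} (h : 0 < k + 2) : (⟨0, h⟩ : Fin (k + 2)) = 0 := by ext; simp
lemma fin1 {k : ℕ} (h : 1 < k + 2) : (⟨1, h⟩ : Fin (k + 2)) = 1 := by ext; simp

lemma f_mk_cases {k : ℕ} (hk : 2 ≤ k) (c : Bool) (g : Fin k → Bool) (jv : ℕ) (h : jv < k + 2) :
    f k c g ⟨jv, h⟩ = if jv = 0 then toR c else if jv = 1 then toR !c
      else toR (g ⟨jv - 2, by omega⟩) := by
  show (if h0 : jv = 0 then toR c else if h1 : jv = 1 then toR !c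
    else toR (g ⟨jv - 2, by omega⟩)) = _
  split_ifs <;> rfl

lemma toR_not (c : Bool) : toR (!c) = 1 - toR c := by cases c <;> simp [toR]

lemma toR_decide (P : Prop) [Decidable P] : toR (decide P) = if P then 1 else 0 := by
  by_cases h : P <;> simp [h, toR]

lemma toR_decide_eq {k : ℕ} (x : Fin (k+2) → ℝ) (j : Fin (k+2)) [Decidable (x j = 1)]
    (hj : x j = 0 ∨ x j = 1) : toR (decide (x j = 1)) = x j := by
  rw [toR_decide]
  rcases hj with h | h
  · rw [if_neg (by rw [h]; norm_num), h]
  · rw [if_pos h, h]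

lemma mem_range_of_ne {k : ℕ} (hk : 2 ≤ k) (x : Fin (k+2) → ℝ)
    (hx1 : ∀ j, x j = 0 ∨ x j = 1) (hne : x 0 ≠ x 1) :
    x ∈ Set.range (fun p : Bool × (Fin k → Bool) => f k p.1 p.2) := by
  classical
  refine ⟨(decide (x 0 = 1), fun m => decide (x ⟨m.val + 2, by omega⟩ = 1)), ?_⟩
  simp only
  funext j
  obtain ⟨jv, hjv⟩ := j
  rw [f_mk_cases hk]
  split_ifs with e0 e1
  · subst e0; rw [fin0 hjv, toR_decide_eq x 0 (hx1 0)]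
  · subst e1; rw [fin1 hjv, toR_not, toR_decide_eq x 0 (hx1 0)]
    rcases hx1 0 with h | h
    · have h1 : x 1 = 1 := (hx1 1).resolve_left (fun h' => hne (h.trans h'.symm))
      rw [h, h1]; norm_num
    · have h1 : x 1 = 0 := (hx1 1).resolve_right (fun h' => hne (h.trans h'.symm))
      rw [h, h1]; norm_num
  · have h2 : 2 ≤ jv := by omega
    have hidx : (⟨jv - 2 + 2, by omega⟩ : Fin (k+2)) = ⟨jv, hjv⟩ := by ext; simp; omega
    simp only []
    rw [hidx, toR_decide_eq x ⟨jv, hjv⟩ (hx1 _)]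

lemma omega_subset {k : ℕ} (hk : 2 ≤ k) (b : ℝ) (hb : b = 0 ∨ b = -1) :
    OmegaM (A1 k b) ⊆
      Set.range (fun p : Bool × (Fin k → Bool) => f k p.1 p.2) ∪
      {(fun _ => (0:ℝ)), v1 k b} := by
  intro x hx
  obtain ⟨hx1, hx2⟩ := hx
  classical
  by_cases hne : x 0 = x 1
  swap
  · exact Or.inl (mem_range_of_ne hk x hx1 hne)
  right
  have hlast := hx2 ⟨k - 1, by omega⟩
  rw [mulVec_last hk b x] at hlast
  rcases hx1 0 with h0 | h0
  · -- x 0 = 0, x 1 = 0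
    have h1 : x 1 = 0 := hne ▸ h0
    rw [h0, h1] at hlast
    have hz : ∀ (jv : ℕ) (hj : jv < k + 2), 2 ≤ jv → jv ≤ k → x ⟨jv, hj⟩ = 0 := by
      intro jv hj h2 hle
      have hrow := hx2 ⟨jv - 2, by omega⟩
      rw [mulVec_lt b x ⟨jv - 2, by omega⟩ (by simp only [Fin.val_mk]; omega)] at hrow
      have hidx : (⟨(⟨jv - 2, by omega⟩ : Fin k).val + 2, by omega⟩ : Fin (k+2)) = ⟨jv, hj⟩ := by
        ext; simp; omega
      rw [hidx, h0, h1] at hrow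
      rcases hx1 ⟨jv, hj⟩ with h | h
      · exact h
      · rw [h] at hrow; norm_num at hrow
    rcases hx1 ⟨k + 1, by omega⟩ with hL | hL
    · -- x = 0
      left
      funext j
      obtain ⟨jv, hjv⟩ := j
      rcases Nat.lt_or_ge jv 2 with hc | hc
      · interval_cases jv
        · rw [fin0 hjv]; exact h0
        · rw [fin1 hjv]; exact h1
      · rcases Nat.lt_or_ge jv (k + 1) with hc2 | hc2
        · exact hz jv hjv hc (by omega)
        · have : jv = k + 1 := by omega
          subst this; exact hL
    · -- x ⟨k+1⟩ = 1, so b = 0 and x = v1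
      right
      have hb0 : b = 0 := by
        rcases hb with rfl | rfl
        · rfl
        · rw [hL] at hlast; norm_num at hlast
      subst hb0
      show x = v1 k 0
      funext j
      obtain ⟨jv, hjv⟩ := j
      rw [v1]
      simp only [Fin.val_mk, neg_zero]
      split_ifs with hc
      · subst hc; exact hL
      · rcases Nat.lt_or_ge jv 2 with h2 | h2
        · interval_cases jv
          · rw [fin0 hjv]; exact h0
          · rw [fin1 hjv]; exact h1
        · exact hz jv hjv h2 (by omega)
  · -- x 0 = 1, x 1 = 1
    have h1 : x 1 = 1 := hne ▸ h0
    rw [h0, h1] at hlast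
    have hz : ∀ (jv : ℕ) (hj : jv < k + 2), 2 ≤ jv → jv ≤ k → x ⟨jv, hj⟩ = 1 := by
      intro jv hj h2 hle
      have hrow := hx2 ⟨jv - 2, by omega⟩
      rw [mulVec_lt b x ⟨jv - 2, by omega⟩ (by simp only [Fin.val_mk]; omega)] at hrow
      have hidx : (⟨(⟨jv - 2, by omega⟩ : Fin k).val + 2, by omega⟩ : Fin (k+2)) = ⟨jv, hj⟩ := by
        ext; simp; omega
      rw [hidx, h0, h1] at hrow
      rcases hx1 ⟨jv, hj⟩ with h | h
      · rw [h] at hrow; norm_num at hrow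
      · exact h
    have hbm : b = -1 := by
      rcases hb with rfl | rfl
      · norm_num at hlast
      · rfl
    subst hbm
    have hL : x ⟨k + 1, by omega⟩ = 1 := by
      rcases hx1 ⟨k + 1, by omega⟩ with h | h
      · rw [h] at hlast; norm_num at hlast
      · exact h
    right
    show x = v1 k (-1)
    funext j
    obtain ⟨jv, hjv⟩ := j
    rw [v1]
    simp only [Fin.val_mk, neg_neg]
    split_ifs with hc
    · subst hc; exact hL
    · rcases Nat.lt_or_ge jv 2 with h2 | h2
      · interval_cases jv
        · rw [fin0 hjv]; exact h0
        · rw [fin1 hjv]; exact h1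
      · exact hz jv hjv h2 (by omega)

lemma omega_eq {k : ℕ} (hk : 2 ≤ k) (b : ℝ) (hb : b = 0 ∨ b = -1) :
    OmegaM (A1 k b) =
      Set.range (fun p : Bool × (Fin k → Bool) => f k p.1 p.2) ∪
      {(fun _ => (0:ℝ)), v1 k b} := by
  apply subset_antisymm (omega_subset hk b hb)
  rintro x (⟨p, rfl⟩ | hx)
  · exact f_mem k hk b hb p.1 p.2
  · rcases hx with rfl | rfl
    · exact v0_mem k b
    · exact v1_mem k hk b hb

lemma not_in_range {k : ℕ} (x : Fin (k+2) → ℝ) (hx : x 0 = x 1) :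
    x ∉ Set.range (fun p : Bool × (Fin k → Bool) => f k p.1 p.2) := by
  rintro ⟨⟨c, g⟩, rfl⟩
  simp only at hx
  rw [f_zero, f_one] at hx
  have := toR_injective hx
  cases c <;> simp at this

lemma v0_ne_v1 {k : ℕ} (hk : 2 ≤ k) (b : ℝ) : (fun _ => (0:ℝ)) ≠ v1 k b := by
  intro h
  have := congrFun h ⟨k + 1, by omega⟩
  rw [v1] at this
  simp only [Fin.val_mk, if_pos rfl] at this
  norm_num at this

end OmegaAux3


theorem omega_card_A1
    {k : ℕ} (hk : 2 ≤ k) (b : ℝ) (hb : b = 0 ∨ b = -1) :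
    (OmegaM (Matrix.of fun (i : Fin k) (j : Fin (k + 2)) =>
      if j.val < 2 then (1 : ℝ)
      else if i.val < k - 1 ∧ j.val = i.val + 2 then -1
      else if i.val = k - 1 ∧ j.val = k + 1 then b
      else 0)).ncard = 2 ^ (k + 1) + 2 := by
  open OmegaAux OmegaAux2 OmegaAux3 in
  have hA : (Matrix.of fun (i : Fin k) (j : Fin (k + 2)) =>
      if j.val < 2 then (1 : ℝ)
      else if i.val < k - 1 ∧ j.val = i.val + 2 then -1
      else if i.val = k - 1 ∧ j.val = k + 1 then b
      else 0) = OmegaAux.A1 k b := rfl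
  rw [hA, OmegaAux3.omega_eq hk b hb]
  have hdisj : Disjoint
      (Set.range (fun p : Bool × (Fin k → Bool) => OmegaAux2.f k p.1 p.2))
      ({(fun _ => (0:ℝ)), OmegaAux2.v1 k b} : Set (Fin (k+2) → ℝ)) := by
    rw [Set.disjoint_right]
    rintro a (rfl | rfl)
    · exact OmegaAux3.not_in_range _ rfl
    · apply OmegaAux3.not_in_range
      rw [OmegaAux2.v1, OmegaAux2.v1]
      simp only [Fin.val_zero, Fin.val_one]
      exact (if_neg (by omega)).trans (if_neg (by omega)).symm
  rw [Set.ncard_union_eq hdisj (Set.finite_range _) (by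
    exact (Set.finite_singleton _).insert _)]
  rw [← Set.image_univ, Set.ncard_image_of_injective _ (OmegaAux2.f_inj k),
    Set.ncard_univ, Nat.card_eq_fintype_card,
    Set.ncard_pair (OmegaAux3.v0_ne_v1 hk b)]
  simp only [Fintype.card_prod, Fintype.card_bool, Fintype.card_fun, Fintype.card_fin]
  rw [pow_succ]
  ring
end

section
/- Let v be a real vector of length ℓ that has some component not belonging to {0,1,−1}. Then |Ω(v)| ≤ 2^(ℓ−1). -/
theorem omega_card_le_of_non_zero_pm_one_entry
    {l : ℕ} (v : Fin l → ℝ)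
    (h : ∃ i, v i ≠ 0 ∧ v i ≠ 1 ∧ v i ≠ -1) :
    (OmegaV v).ncard ≤ 2 ^ (l - 1) := by
  classical
  obtain ⟨i, h0, h1, hm1⟩ := h
  have key : Set.ncard (OmegaV v) ≤ Nat.card ({j : Fin l // j ≠ i} → Bool) := by
    rw [← Nat.card_coe_set_eq]
    apply Nat.card_le_card_of_injective
      (fun (b : OmegaV v) (j : {j : Fin l // j ≠ i}) => decide ((b : Fin l → ℝ) j.1 = 1))
    intro b b' hbb'
    have hag : ∀ j, j ≠ i → (b : Fin l → ℝ) j = (b' : Fin l → ℝ) j := by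
      intro j hj
      have hthis := congrFun hbb' ⟨j, hj⟩
      simp only [decide_eq_decide] at hthis
      rcases b.2.1 j with hb | hb <;> rcases b'.2.1 j with hb' | hb' <;>
        simp [hb, hb'] at hthis ⊢ <;> norm_num at hthis
    have hdiff : (∑ j, v j * (b : Fin l → ℝ) j) - (∑ j, v j * (b' : Fin l → ℝ) j)
        = v i * ((b : Fin l → ℝ) i - (b' : Fin l → ℝ) i) := by
      rw [← Finset.sum_sub_distrib,
        Finset.sum_eq_single i (fun j _ hj => by rw [hag j hj]; ring)
          (fun hi => absurd (Finset.mem_univ i) hi)]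
      ring
    have hi : (b : Fin l → ℝ) i = (b' : Fin l → ℝ) i := by
      rcases b.2.2 with hs | hs <;> rcases b'.2.2 with hs' | hs' <;>
        rcases b.2.1 i with hb | hb <;> rcases b'.2.1 i with hb' | hb' <;>
          rw [hs, hs', hb, hb'] at hdiff <;> rw [hb, hb'] <;>
            first
              | rfl
              | (exfalso; apply h0; linarith)
              | (exfalso; apply h1; linarith)
              | (exfalso; apply hm1; linarith)
    apply Subtype.ext
    funext j
    by_cases hj : j = i
    · rw [hj, hi]
    · exact hag j hj
  calc Set.ncard (OmegaV v) ≤ Nat.card ({j : Fin l // j ≠ i} → Bool) := key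
    _ = 2 ^ (l - 1) := by
        rw [Nat.card_eq_fintype_card, Fintype.card_fun, Fintype.card_bool]
        congr 1
        simp [Fintype.card_subtype_compl]
end

section
/- Let v be a real vector of length ℓ having at least 2 nonzero components. Then |Ω(v)| ≤ (3/4)·2^ℓ, i.e. |Ω(v)| ≤ 3·2^(ℓ−2). -/
private lemma key_arith (s a b : ℝ) (ha : a ≠ 0) (hb : b ≠ 0)
    (h1 : s = 0 ∨ s = 1) (h2 : s + a = 0 ∨ s + a = 1)
    (h3 : s + b = 0 ∨ s + b = 1) (h4 : s + a + b = 0 ∨ s + a + b = 1) : False := by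
  rcases h1 with h1|h1 <;> rcases h2 with h2|h2 <;> rcases h3 with h3|h3 <;>
    rcases h4 with h4|h4 <;>
    first
      | exact ha (by linarith)
      | exact hb (by linarith)
      | linarith

theorem omega_card_le_of_weight_ge_two
    {l : ℕ} (v : Fin l → ℝ) (h : 2 ≤ wt v) :
    (OmegaV v).ncard ≤ 3 * 2 ^ (l - 2) := by
  classical
  obtain ⟨i, j, hi, hj, hij⟩ :=
    (Set.one_lt_ncard_iff (Set.toFinite _)).mp (by exact_mod_cast h)
  simp only [Set.mem_setOf_eq] at hi hj
  -- Boolean encoding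
  set g : (Fin l → Bool) → (Fin l → ℝ) := fun c k => if c k then 1 else 0 with hg
  have hginj : Function.Injective g := by
    intro c c' hcc
    funext k
    have := congrFun hcc k
    simp only [hg] at this
    cases hck : c k <;> cases hck' : c' k <;> simp [hck, hck'] at this ⊢ <;> norm_num at this
  set T : Finset (Fin l → Bool) :=
    Finset.univ.filter (fun c => (∑ k, v k * g c k = 0 ∨ ∑ k, v k * g c k = 1)) with hT
  have hset : OmegaV v = g '' (T : Set (Fin l → Bool)) := by
    ext b
    constructor
    · rintro ⟨hb01, hbs⟩
      refine ⟨fun k => if b k = 1 then true else false, ?_, ?_⟩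
      · have hgb : g (fun k => if b k = 1 then true else false) = b := by
          funext k
          rcases hb01 k with h01 | h01 <;> simp [hg, h01]
        simp only [hT, Finset.coe_filter, Set.mem_setOf_eq, Finset.mem_univ, true_and]
        rw [hgb]; exact hbs
      · funext k
        rcases hb01 k with h01 | h01 <;> simp [hg, h01]
    · rintro ⟨c, hc, rfl⟩
      simp only [hT, Finset.coe_filter, Set.mem_setOf_eq, Finset.mem_univ, true_and] at hc
      exact ⟨fun k => by by_cases hck : c k <;> simp [hg, hck], hc⟩
  rw [hset, Set.ncard_image_of_injective _ hginj, Set.ncard_coe_finset]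
  -- restriction map
  set R : Finset (Fin l) := Finset.univ \ {i, j} with hR
  have hRcard : R.card = l - 2 := by
    rw [hR, Finset.card_sdiff_of_subset (Finset.subset_univ _), Finset.card_univ, Fintype.card_fin,
      Finset.card_pair hij]
  set ψ : (Fin l → Bool) → ({x // x ∈ R} → Bool) := fun c k => c k.1 with hψ
  -- sum decomposition
  have hdecomp : ∀ c : Fin l → Bool,
      ∑ k, v k * g c k = (∑ k ∈ R, v k * g c k) + v i * g c i + v j * g c j := by
    intro c
    have h1 : (∑ k ∈ R, v k * g c k) + ∑ k ∈ ({i, j} : Finset (Fin l)), v k * g c k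
        = ∑ k, v k * g c k := Finset.sum_sdiff (Finset.subset_univ _)
    rw [Finset.sum_pair hij] at h1
    linarith
  -- fibers have at most 3 elements
  have hfiber : ∀ r, (T.filter (fun c => ψ c = r)).card ≤ 3 := by
    intro r
    set F := T.filter (fun c => ψ c = r) with hF
    have hagree : ∀ c ∈ F, ∀ k (hk : k ≠ i ∧ k ≠ j), c k = r ⟨k, by simp [hR, hk.1, hk.2]⟩ := by
      intro c hc k hk
      have := (Finset.mem_filter.mp hc).2
      exact congrFun this ⟨k, by simp [hR, hk.1, hk.2]⟩
    have hinjOn : Set.InjOn (fun c => (c i, c j)) (F : Set (Fin l → Bool)) := by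
      intro c hc c' hc' hcc
      funext k
      by_cases hki : k = i
      · subst hki; exact congrArg Prod.fst hcc
      by_cases hkj : k = j
      · subst hkj; exact congrArg Prod.snd hcc
      · rw [hagree c hc k ⟨hki, hkj⟩, hagree c' hc' k ⟨hki, hkj⟩]
    have hle4 : F.card ≤ 4 := by
      calc F.card ≤ (Finset.univ : Finset (Bool × Bool)).card :=
            Finset.card_le_card_of_injOn _ (fun c _ => Finset.mem_univ _) hinjOn
        _ = 4 := by simp
    by_contra hgt
    have h4 : F.card = 4 := le_antisymm hle4 (by omega)
    have himg : F.image (fun c => (c i, c j)) = Finset.univ := by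
      apply Finset.eq_univ_of_card
      rw [Finset.card_image_of_injOn hinjOn, h4]; simp
    have hget : ∀ p : Bool × Bool, ∃ c ∈ F, c i = p.1 ∧ c j = p.2 := by
      intro p
      have : p ∈ F.image (fun c => (c i, c j)) := himg ▸ Finset.mem_univ p
      obtain ⟨c, hc, hcp⟩ := Finset.mem_image.mp this
      exact ⟨c, hc, by rw [← hcp], by rw [← hcp]⟩
    obtain ⟨cff, hcff, hcffi, hcffj⟩ := hget (false, false)
    obtain ⟨ctf, hctf, hctfi, hctfj⟩ := hget (true, false)
    obtain ⟨cft, hcft, hcfti, hcftj⟩ := hget (false, true)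
    obtain ⟨ctt, hctt, hctti, hcttj⟩ := hget (true, true)
    set s : ℝ := ∑ k ∈ R, v k * g cff k with hs
    have hsum : ∀ c ∈ F, ∑ k ∈ R, v k * g c k = s := by
      intro c hc
      apply Finset.sum_congr rfl
      intro k hk
      have hk' : k ≠ i ∧ k ≠ j := by
        simp only [hR, Finset.mem_sdiff, Finset.mem_insert, Finset.mem_singleton] at hk
        exact ⟨fun h => hk.2 (Or.inl h), fun h => hk.2 (Or.inr h)⟩
      have hck : c k = cff k := (hagree c hc k hk').trans (hagree cff hcff k hk').symm
      simp only [hg, hck]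
    have hmem : ∀ c ∈ F, (∑ k, v k * g c k = 0 ∨ ∑ k, v k * g c k = 1) := by
      intro c hc
      exact (Finset.mem_filter.mp (Finset.mem_filter.mp hc).1).2
    have e1 := hmem cff hcff
    have e2 := hmem ctf hctf
    have e3 := hmem cft hcft
    have e4 := hmem ctt hctt
    rw [hdecomp, hsum cff hcff] at e1
    rw [hdecomp, hsum ctf hctf] at e2
    rw [hdecomp, hsum cft hcft] at e3
    rw [hdecomp, hsum ctt hctt] at e4
    simp only [hg, hcffi, hcffj, hctfi, hctfj, hcfti, hcftj, hctti, hcttj] at e1 e2 e3 e4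
    simp only [if_true, if_false, Bool.false_eq_true, mul_one, mul_zero, add_zero] at e1 e2 e3 e4
    exact key_arith s (v i) (v j) hi hj e1 e2 e3 e4
  -- final count
  calc T.card = ∑ r ∈ T.image ψ, (T.filter (fun c => ψ c = r)).card :=
        Finset.card_eq_sum_card_fiberwise (fun c hc => Finset.mem_image_of_mem _ hc)
    _ ≤ ∑ _r ∈ T.image ψ, 3 := Finset.sum_le_sum (fun r _ => hfiber r)
    _ = (T.image ψ).card * 3 := by rw [Finset.sum_const, smul_eq_mul]
    _ ≤ Fintype.card ({x // x ∈ R} → Bool) * 3 := by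
        exact Nat.mul_le_mul_right 3 (Finset.card_le_univ _)
    _ = 2 ^ (l - 2) * 3 := by
        rw [Fintype.card_fun, Fintype.card_coe, hRcard]; norm_num
    _ = 3 * 2 ^ (l - 2) := Nat.mul_comm _ _
end

section
/- Let M be a symmetric real n×n matrix and let J denote the n×n all-ones matrix. Then rank(M + J) = rank(M) + 1 if and only if the all-ones vector 𝟏 of length n does not belong to the row space of M. -/
open Matrix Submodule

private noncomputable def sumF (n : ℕ) : (Fin n → ℝ) →ₗ[ℝ] ℝ where
  toFun x := ∑ i, x i
  map_add' x y := by simp [Finset.sum_add_distrib]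
  map_smul' c x := by simp [Finset.mul_sum]

private lemma key_mem_range {n : ℕ} (M : Matrix (Fin n) (Fin n) ℝ) (hM : M.IsSymm)
    (h : ∀ x, M.mulVec x = 0 → ∑ i, x i = 0) :
    (fun _ => (1 : ℝ)) ∈ LinearMap.range M.mulVecLin := by
  set L := M.mulVecLin with hLdef
  have hle : LinearMap.ker L ≤ LinearMap.ker (sumF n) := by
    intro x hx
    simp only [LinearMap.mem_ker, hLdef, mulVecLin_apply] at hx ⊢
    exact h x hx
  set h₀ : ((Fin n → ℝ) ⧸ LinearMap.ker L) →ₗ[ℝ] ℝ := (LinearMap.ker L).liftQ (sumF n) hle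
    with h₀def
  set e := L.quotKerEquivRange with hedef
  set h₁ : LinearMap.range L →ₗ[ℝ] ℝ := h₀ ∘ₗ (e.symm : LinearMap.range L →ₗ[ℝ] _) with h₁def
  obtain ⟨h₂, hh₂⟩ := h₁.exists_extend
  have key : ∀ x, h₂ (M.mulVec x) = ∑ i, x i := by
    intro x
    have hmem : M.mulVec x ∈ LinearMap.range L := ⟨x, by simp [hLdef]⟩
    have h3 : h₂ (M.mulVec x) = h₁ ⟨M.mulVec x, hmem⟩ := by
      rw [← hh₂]; rfl
    have he : e (Submodule.Quotient.mk x) = ⟨M.mulVec x, hmem⟩ := by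
      rw [hedef]
      exact Subtype.ext ((L.quotKerEquivRange_apply_mk x).trans (by simp [hLdef]))
    have h4 : e.symm ⟨M.mulVec x, hmem⟩ = Submodule.Quotient.mk x := by
      rw [← he, LinearEquiv.symm_apply_apply]
    rw [h3, h₁def]
    simp only [LinearMap.comp_apply, LinearEquiv.coe_coe, h4, h₀def, Submodule.liftQ_apply]
    rfl
  set w : Fin n → ℝ := fun j => h₂ (fun k => if j = k then 1 else 0) with hw
  refine ⟨w, ?_⟩
  have hrep : ∀ y, h₂ y = y ⬝ᵥ w := by
    intro y
    rw [LinearMap.pi_apply_eq_sum_univ h₂ y]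
    simp [dotProduct, hw, smul_eq_mul]
  rw [hLdef, mulVecLin_apply]
  apply dotProduct_eq
  intro u
  have schain : M.mulVec w ⬝ᵥ u = M.mulVec u ⬝ᵥ w := by
    rw [dotProduct_comm, Matrix.dotProduct_mulVec, ← Matrix.mulVec_transpose, hM.eq]
  rw [schain, ← hrep, key]
  simp [dotProduct]

theorem rank_add_allOnes_eq_rank_add_one_iff
    {n : ℕ} (M : Matrix (Fin n) (Fin n) ℝ) (hM : M.IsSymm) :
    (M + Matrix.of fun _ _ => (1 : ℝ)).rank = M.rank + 1 ↔
      (fun _ => (1 : ℝ)) ∉ Submodule.span ℝ (Set.range fun i => M i) := by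
  have hspan : Submodule.span ℝ (Set.range fun i => M i) = LinearMap.range M.mulVecLin := by
    rw [Matrix.range_mulVecLin]
    congr 2
    funext j i
    show M j i = M i j
    exact hM.apply i j
  rw [hspan]
  set J : Matrix (Fin n) (Fin n) ℝ := Matrix.of fun _ _ => (1 : ℝ) with hJdef
  have hmv : ∀ x : Fin n → ℝ, (M + J).mulVec x = M.mulVec x + (∑ i, x i) • (fun _ => (1 : ℝ)) := by
    intro x
    funext i
    simp [Matrix.add_mulVec, Matrix.mulVec, dotProduct, hJdef, add_mul,
      Finset.sum_add_distrib]
  constructor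
  · -- → : contrapositive
    intro hrank hmem
    have hle : LinearMap.range (M + J).mulVecLin ≤ LinearMap.range M.mulVecLin := by
      rintro y ⟨x, rfl⟩
      rw [mulVecLin_apply, hmv x]
      exact Submodule.add_mem _ ⟨x, rfl⟩ (Submodule.smul_mem _ _ hmem)
    have : (M + J).rank ≤ M.rank := Submodule.finrank_mono hle
    omega
  · intro h1
    -- exists z in ker with sum ≠ 0
    obtain ⟨z, hz, hzs⟩ : ∃ z, M.mulVec z = 0 ∧ ∑ i, z i ≠ 0 := by
      by_contra hc
      push_neg at hc
      exact h1 (key_mem_range M hM hc)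
    have hn : Nonempty (Fin n) := by
      by_contra he
      exact hzs (by simp [Finset.univ_eq_empty_iff.2 (not_nonempty_iff.mp he)])
    -- ker (M+J) ≤ ker M, strictly
    have hker_le : LinearMap.ker (M + J).mulVecLin ≤ LinearMap.ker M.mulVecLin := by
      intro x hx
      simp only [LinearMap.mem_ker, mulVecLin_apply] at hx ⊢
      rw [hmv x] at hx
      have hx' : M.mulVec x = -((∑ i, x i) • fun _ => (1 : ℝ)) :=
        eq_neg_of_add_eq_zero_left hx
      by_cases hs : (∑ i, x i) = 0
      · rw [hx', hs]; simp
      · exfalso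
        apply h1
        refine ⟨(-(∑ i, x i)⁻¹) • x, ?_⟩
        rw [mulVecLin_apply, Matrix.mulVec_smul, hx']
        funext j
        simp [hs]
    have hz_ker : z ∈ LinearMap.ker M.mulVecLin := by
      simp [LinearMap.mem_ker, mulVecLin_apply, hz]
    have hz_not : z ∉ LinearMap.ker (M + J).mulVecLin := by
      intro hzk
      simp only [LinearMap.mem_ker, mulVecLin_apply] at hzk
      rw [hmv z, hz, zero_add] at hzk
      have := congrFun hzk hn.some
      simp at this
      exact hzs this
    have hlt : LinearMap.ker (M + J).mulVecLin < LinearMap.ker M.mulVecLin :=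
      lt_of_le_of_ne hker_le (fun he => hz_not (he ▸ hz_ker))
    have hdim : Module.finrank ℝ (LinearMap.ker (M + J).mulVecLin)
        < Module.finrank ℝ (LinearMap.ker M.mulVecLin) :=
      Submodule.finrank_lt_finrank_of_lt hlt
    have hrn1 := LinearMap.finrank_range_add_finrank_ker (M + J).mulVecLin
    have hrn2 := LinearMap.finrank_range_add_finrank_ker M.mulVecLin
    simp only [Module.finrank_fintype_fun_eq_card, Fintype.card_fin] at hrn1 hrn2
    -- lower bound: rank (M+J) ≥ rank M + 1
    have hge : M.rank + 1 ≤ (M + J).rank := by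
      unfold Matrix.rank
      omega
    -- upper bound
    have hle2 : (M + J).rank ≤ M.rank + 1 := by
      have hsub : LinearMap.range (M + J).mulVecLin ≤
          LinearMap.range M.mulVecLin ⊔ (Submodule.span ℝ {fun _ => (1 : ℝ)}) := by
        rintro y ⟨x, rfl⟩
        rw [mulVecLin_apply, hmv x]
        exact Submodule.add_mem _ (Submodule.mem_sup_left ⟨x, rfl⟩)
          (Submodule.mem_sup_right (Submodule.smul_mem _ _ (Submodule.mem_span_singleton_self _)))
      have h1' : Module.finrank ℝ (Submodule.span ℝ {fun _ => (1 : ℝ)} :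
          Submodule ℝ (Fin n → ℝ)) ≤ 1 := by
        rcases eq_or_ne (fun _ => (1 : ℝ) : Fin n → ℝ) 0 with h0 | h0
        · rw [h0, Submodule.span_zero_singleton]
          simp [finrank_bot]
        · rw [show ({fun _ => (1:ℝ)} : Set (Fin n → ℝ)) = {(fun _ => (1:ℝ) : Fin n → ℝ)} from rfl]
          exact le_of_eq (finrank_span_singleton h0)
      have := Submodule.finrank_mono hsub
      have hsup := Submodule.finrank_sup_add_finrank_inf_eq
        (LinearMap.range M.mulVecLin) (Submodule.span ℝ {fun _ => (1 : ℝ)})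
      unfold Matrix.rank
      omega
    omega
end

section
/- For ℓ ≥ 1, let ℬ'_ℓ be the bipartite graph whose vertex set is {1,…,ℓ} ∪ (𝒫({1,…,ℓ}) \ {∅}), where i ∈ {1,…,ℓ} is adjacent to S ∈ 𝒫({1,…,ℓ}) \ {∅} if and only if i ∈ S. Then ℬ'_ℓ is a reduced graph of order 2^ℓ + ℓ − 1 whose adjacency matrix has rank 2ℓ over the reals. -/
/-- The bipartite graph `ℬ'_ℓ` on `{1,…,ℓ} ⊕ (𝒫({1,…,ℓ}) \ {∅})`, where `i` is
adjacent to `S` if and only if `i ∈ S`. -/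
def BGraph' (l : ℕ) : SimpleGraph (Fin l ⊕ {S : Finset (Fin l) // S.Nonempty}) where
  Adj x y :=
    (∃ (i : Fin l) (S : {S : Finset (Fin l) // S.Nonempty}),
      x = Sum.inl i ∧ y = Sum.inr S ∧ i ∈ S.1) ∨
    (∃ (i : Fin l) (S : {S : Finset (Fin l) // S.Nonempty}),
      x = Sum.inr S ∧ y = Sum.inl i ∧ i ∈ S.1)
  symm := by
    constructor
    rintro x y (⟨i, S, rfl, rfl, h⟩ | ⟨i, S, rfl, rfl, h⟩)
    · exact Or.inr ⟨i, S, rfl, rfl, h⟩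
    · exact Or.inl ⟨i, S, rfl, rfl, h⟩
  loopless := by
    constructor
    rintro x (⟨i, S, rfl, h, -⟩ | ⟨i, S, rfl, h, -⟩) <;> simp at h

open scoped Classical
open Matrix

variable {l : ℕ}

lemma adj_inl_inr (i : Fin l) (S : {S : Finset (Fin l) // S.Nonempty}) :
    (BGraph' l).Adj (Sum.inl i) (Sum.inr S) ↔ i ∈ S.1 := by
  simp [BGraph', SimpleGraph.Adj]

lemma adj_inr_inl (i : Fin l) (S : {S : Finset (Fin l) // S.Nonempty}) :
    (BGraph' l).Adj (Sum.inr S) (Sum.inl i) ↔ i ∈ S.1 := by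
  simp [BGraph', SimpleGraph.Adj]

lemma adj_inl_inl (i j : Fin l) :
    ¬ (BGraph' l).Adj (Sum.inl i) (Sum.inl j) := by
  simp [BGraph', SimpleGraph.Adj]

lemma adj_inr_inr (S T : {S : Finset (Fin l) // S.Nonempty}) :
    ¬ (BGraph' l).Adj (Sum.inr S) (Sum.inr T) := by
  simp [BGraph', SimpleGraph.Adj]

noncomputable def phiB (l : ℕ) : ((Fin l → ℝ) × (Fin l → ℝ)) →ₗ[ℝ]
    ((Fin l ⊕ {S : Finset (Fin l) // S.Nonempty}) → ℝ) where
  toFun p := Sum.elim p.2 (fun S => ∑ i ∈ S.1, p.1 i)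
  map_add' p q := by funext x; cases x <;> simp [Finset.sum_add_distrib]
  map_smul' c p := by funext x; cases x <;> simp [Finset.mul_sum]

lemma mulVec_inl (v : (Fin l ⊕ {S : Finset (Fin l) // S.Nonempty}) → ℝ) (i : Fin l) :
    ((BGraph' l).adjMatrix ℝ *ᵥ v) (Sum.inl i)
      = ∑ S : {S : Finset (Fin l) // S.Nonempty}, if i ∈ S.1 then v (Sum.inr S) else 0 := by
  simp [Matrix.mulVec, dotProduct, Fintype.sum_sum_type,
    adj_inl_inl, adj_inl_inr, ite_mul]

lemma mulVec_inr (v : (Fin l ⊕ {S : Finset (Fin l) // S.Nonempty}) → ℝ)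
    (S : {S : Finset (Fin l) // S.Nonempty}) :
    ((BGraph' l).adjMatrix ℝ *ᵥ v) (Sum.inr S) = ∑ i ∈ S.1, v (Sum.inl i) := by
  simp [Matrix.mulVec, dotProduct, Fintype.sum_sum_type,
    adj_inr_inr, adj_inr_inl, ite_mul, Finset.sum_ite_mem]

lemma range_eq :
    LinearMap.range ((BGraph' l).adjMatrix ℝ).mulVecLin = LinearMap.range (phiB l) := by
  apply le_antisymm
  · rintro _ ⟨v, rfl⟩
    refine ⟨(fun i => v (Sum.inl i), fun i => ((BGraph' l).adjMatrix ℝ *ᵥ v) (Sum.inl i)), ?_⟩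
    funext x
    cases x with
    | inl i => rfl
    | inr S => simpa [phiB] using (mulVec_inr v S).symm
  · rintro _ ⟨⟨x, y⟩, rfl⟩
    set v : (Fin l ⊕ {S : Finset (Fin l) // S.Nonempty}) → ℝ :=
      Sum.elim x (fun S => if h : ∃ i, S.1 = {i} then y h.choose else 0) with hv
    refine ⟨v, ?_⟩
    funext z
    cases z with
    | inl i =>
      rw [Matrix.mulVecLin_apply, mulVec_inl]
      have h0 : ∀ S : {S : Finset (Fin l) // S.Nonempty},
          S ≠ ⟨{i}, Finset.singleton_nonempty i⟩ →
          (if i ∈ S.1 then v (Sum.inr S) else 0) = 0 := by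
        intro S hS
        by_cases hi : i ∈ S.1
        · simp only [hi, if_true, hv, Sum.elim_inr]
          split
          · next h =>
            exfalso
            have hc := h.choose_spec
            rw [hc, Finset.mem_singleton] at hi
            exact hS (Subtype.ext (by rw [hc, hi]))
          · rfl
        · simp [hi]
      rw [Fintype.sum_eq_single _ h0]
      have : (⟨{i}, Finset.singleton_nonempty i⟩ : {S : Finset (Fin l) // S.Nonempty}).1 = {i} := rfl
      simp only [this, Finset.mem_singleton_self, if_true, hv, Sum.elim_inr]
      have hex : ∃ j, ({i} : Finset (Fin l)) = {j} := ⟨i, rfl⟩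
      rw [dif_pos hex]
      have : hex.choose = i := by
        have := hex.choose_spec
        exact (Finset.singleton_injective this.symm)
      rw [this]
      rfl
    | inr S =>
      rw [Matrix.mulVecLin_apply, mulVec_inr]
      simp [phiB, hv]

lemma phiB_inj : Function.Injective (phiB l) := by
  rw [← LinearMap.ker_eq_bot]
  ext ⟨x, y⟩
  simp only [LinearMap.mem_ker, Submodule.mem_bot, Prod.mk_eq_zero]
  constructor
  · intro h
    constructor
    · funext i
      have := congrFun h (Sum.inr ⟨{i}, Finset.singleton_nonempty i⟩)
      simpa [phiB] using this
    · funext i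
      have := congrFun h (Sum.inl i)
      simpa [phiB] using this
  · rintro ⟨rfl, rfl⟩
    simp only [phiB]
    ext z
    cases z <;> simp

open scoped Classical in
theorem BGraph'_reduced_card_rank (l : ℕ) (hl : 1 ≤ l) :
    (∀ v, ∃ w, (BGraph' l).Adj v w) ∧
    (∀ u v, (BGraph' l).neighborSet u = (BGraph' l).neighborSet v → u = v) ∧
    Fintype.card (Fin l ⊕ {S : Finset (Fin l) // S.Nonempty}) = 2 ^ l + l - 1 ∧
    ((BGraph' l).adjMatrix ℝ).rank = 2 * l := by
  refine ⟨?_, ?_, ?_, ?_⟩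
  · rintro (i | S)
    · exact ⟨Sum.inr ⟨{i}, Finset.singleton_nonempty i⟩,
        (adj_inl_inr i _).mpr (Finset.mem_singleton_self i)⟩
    · obtain ⟨i, hi⟩ := S.2
      exact ⟨Sum.inl i, (adj_inr_inl i S).mpr hi⟩
  · rintro (i | S) (j | T) h
    · have := Set.ext_iff.mp h (Sum.inr ⟨{i}, Finset.singleton_nonempty i⟩)
      simp only [SimpleGraph.mem_neighborSet, adj_inl_inr, Finset.mem_singleton] at this
      exact congrArg Sum.inl ((this.mp trivial).symm)
    · have := Set.ext_iff.mp h (Sum.inr ⟨{i}, Finset.singleton_nonempty i⟩)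
      simp only [SimpleGraph.mem_neighborSet, adj_inl_inr] at this
      exact absurd (this.mp (Finset.mem_singleton_self i)) (adj_inr_inr T _)
    · have := Set.ext_iff.mp h (Sum.inr ⟨{j}, Finset.singleton_nonempty j⟩)
      simp only [SimpleGraph.mem_neighborSet, adj_inl_inr] at this
      exact absurd (this.mpr (Finset.mem_singleton_self j)) (adj_inr_inr S _)
    · refine congrArg Sum.inr (Subtype.ext (Finset.ext fun i => ?_))
      have := Set.ext_iff.mp h (Sum.inl i)
      simpa only [SimpleGraph.mem_neighborSet, adj_inr_inl] using this
  · rw [Fintype.card_sum, Fintype.card_fin]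
    have h1 : Fintype.card {S : Finset (Fin l) // S.Nonempty} = 2 ^ l - 1 := by
      have e : {S : Finset (Fin l) // S.Nonempty} ≃ {S : Finset (Fin l) // ¬ S = ∅} :=
        Equiv.subtypeEquivRight fun S => Finset.nonempty_iff_ne_empty
      rw [Fintype.card_congr e, Fintype.card_subtype_compl, Fintype.card_subtype_eq,
        Fintype.card_finset, Fintype.card_fin]
    rw [h1]
    have : 1 ≤ 2 ^ l := Nat.one_le_two_pow
    omega
  · rw [Matrix.rank, range_eq, LinearMap.finrank_range_of_inj phiB_inj]
    simp [Module.finrank_prod]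
    ring
end

section
/- For ℓ ≥ 1, let 𝒟_ℓ be the bipartite graph with parts {1,1',…,ℓ,ℓ'} and 𝒫({1,…,ℓ}), where S ∈ 𝒫({1,…,ℓ}) is adjacent to i if and only if i ∈ S and adjacent to j' if and only if j ∉ S. Then the complement of 𝒟_ℓ is a coreduced cobipartite graph of order 2^ℓ + 2ℓ with rank(A + I) = 2ℓ + 2 over the reals, where A is its adjacency matrix. -/
/-- The bipartite graph `𝒟_ℓ` with parts `{1,…,ℓ} ⊕ {1',…,ℓ'}` (unprimed = left
copy, primed = right copy) and `𝒫({1,…,ℓ})`, where `S` is adjacent to `i` iff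
`i ∈ S` and to `j'` iff `j ∉ S`. -/
def DGraph (l : ℕ) : SimpleGraph ((Fin l ⊕ Fin l) ⊕ Finset (Fin l)) where
  Adj x y :=
    (∃ (i : Fin l) (S : Finset (Fin l)),
      x = Sum.inl (Sum.inl i) ∧ y = Sum.inr S ∧ i ∈ S) ∨
    (∃ (i : Fin l) (S : Finset (Fin l)),
      x = Sum.inr S ∧ y = Sum.inl (Sum.inl i) ∧ i ∈ S) ∨
    (∃ (j : Fin l) (S : Finset (Fin l)),
      x = Sum.inl (Sum.inr j) ∧ y = Sum.inr S ∧ j ∉ S) ∨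
    (∃ (j : Fin l) (S : Finset (Fin l)),
      x = Sum.inr S ∧ y = Sum.inl (Sum.inr j) ∧ j ∉ S)
  symm := by
    constructor
    rintro x y (⟨i, S, rfl, rfl, h⟩ | ⟨i, S, rfl, rfl, h⟩ |
      ⟨j, S, rfl, rfl, h⟩ | ⟨j, S, rfl, rfl, h⟩)
    · exact Or.inr (Or.inl ⟨i, S, rfl, rfl, h⟩)
    · exact Or.inl ⟨i, S, rfl, rfl, h⟩
    · exact Or.inr (Or.inr (Or.inr ⟨j, S, rfl, rfl, h⟩))
    · exact Or.inr (Or.inr (Or.inl ⟨j, S, rfl, rfl, h⟩))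
  loopless := by
    constructor
    rintro x (⟨i, S, rfl, h, -⟩ | ⟨i, S, rfl, h, -⟩ |
      ⟨j, S, rfl, h, -⟩ | ⟨j, S, rfl, h, -⟩) <;> simp at h

section Aux

open scoped Classical

variable {l : ℕ}

lemma dg_adj_def (x y : (Fin l ⊕ Fin l) ⊕ Finset (Fin l)) : (DGraph l).Adj x y ↔
    (∃ (i : Fin l) (S : Finset (Fin l)),
      x = Sum.inl (Sum.inl i) ∧ y = Sum.inr S ∧ i ∈ S) ∨
    (∃ (i : Fin l) (S : Finset (Fin l)),
      x = Sum.inr S ∧ y = Sum.inl (Sum.inl i) ∧ i ∈ S) ∨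
    (∃ (j : Fin l) (S : Finset (Fin l)),
      x = Sum.inl (Sum.inr j) ∧ y = Sum.inr S ∧ j ∉ S) ∨
    (∃ (j : Fin l) (S : Finset (Fin l)),
      x = Sum.inr S ∧ y = Sum.inl (Sum.inr j) ∧ j ∉ S) := Iff.rfl

@[simp] lemma dg_ll (a b : Fin l ⊕ Fin l) : ¬ (DGraph l).Adj (Sum.inl a) (Sum.inl b) := by
  simp [dg_adj_def]

@[simp] lemma dg_rr (S T : Finset (Fin l)) : ¬ (DGraph l).Adj (Sum.inr S) (Sum.inr T) := by
  simp [dg_adj_def]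

@[simp] lemma dg_is (i : Fin l) (S : Finset (Fin l)) :
    (DGraph l).Adj (Sum.inl (Sum.inl i)) (Sum.inr S) ↔ i ∈ S := by simp [dg_adj_def]

@[simp] lemma dg_si (i : Fin l) (S : Finset (Fin l)) :
    (DGraph l).Adj (Sum.inr S) (Sum.inl (Sum.inl i)) ↔ i ∈ S := by simp [dg_adj_def]

@[simp] lemma dg_js (j : Fin l) (S : Finset (Fin l)) :
    (DGraph l).Adj (Sum.inl (Sum.inr j)) (Sum.inr S) ↔ j ∉ S := by simp [dg_adj_def]

@[simp] lemma dg_sj (j : Fin l) (S : Finset (Fin l)) :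
    (DGraph l).Adj (Sum.inr S) (Sum.inl (Sum.inr j)) ↔ j ∉ S := by simp [dg_adj_def]

/-- The index map selecting the `2l+2` distinguished columns. -/
def gmap (l : ℕ) (hl : 0 < l) :
    (Unit ⊕ Fin l) ⊕ (Unit ⊕ Fin l) → (Fin l ⊕ Fin l) ⊕ Finset (Fin l)
  | Sum.inl (Sum.inl _) => Sum.inl (Sum.inl ⟨0, hl⟩)
  | Sum.inl (Sum.inr i) => Sum.inl (Sum.inr i)
  | Sum.inr (Sum.inl _) => Sum.inr ∅
  | Sum.inr (Sum.inr i) => Sum.inr {i}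

/-- The distinguished columns of `A((𝒟_ℓ)ᶜ) + I`. -/
noncomputable def colfun (l : ℕ) (hl : 0 < l) (k : (Unit ⊕ Fin l) ⊕ (Unit ⊕ Fin l)) :
    ((Fin l ⊕ Fin l) ⊕ Finset (Fin l)) → ℝ :=
  fun x => if (DGraph l).Adj x (gmap l hl k) then 0 else 1

lemma dg_entry (x y : (Fin l ⊕ Fin l) ⊕ Finset (Fin l)) :
    ((DGraph l)ᶜ.adjMatrix ℝ + 1) x y = if (DGraph l).Adj x y then 0 else 1 := by
  by_cases hxy : x = y
  · subst hxy
    simp [Matrix.add_apply, Matrix.one_apply]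
  · by_cases h : (DGraph l).Adj x y <;>
      simp [Matrix.add_apply, Matrix.one_apply, hxy, SimpleGraph.compl_adj, h, Ne.symm hxy]

lemma colfun_li (l : ℕ) (hl : 0 < l) : LinearIndependent ℝ (colfun l hl) := by
  rw [Fintype.linearIndependent_iff]
  intro c hc
  have E : ∀ x, (∑ k, c k • colfun l hl k) x = 0 := fun x => congrFun hc x
  have E1 := E (Sum.inr ∅)
  simp [Fintype.sum_sum_type, colfun, gmap, Finset.sum_apply] at E1
  have E2 := fun j : Fin l => E (Sum.inr {j})
  simp [Fintype.sum_sum_type, colfun, gmap, Finset.sum_apply] at E2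
  have E3 := fun j : Fin l => E (Sum.inl (Sum.inr j))
  simp [Fintype.sum_sum_type, colfun, gmap, Finset.sum_apply] at E3
  have E4 := E (Sum.inl (Sum.inl ⟨0, hl⟩))
  simp [Fintype.sum_sum_type, colfun, gmap, Finset.sum_apply] at E4
  set z : Fin l := ⟨0, hl⟩ with hz
  set c1 := c (Sum.inl (Sum.inl PUnit.unit)) with hc1
  have ha : ∀ j, c (Sum.inl (Sum.inr j)) = if z = j then c1 else 0 := by
    intro j
    have h2 := E2 j
    by_cases h : z = j <;> simp [h] at h2 ⊢ <;> linarith [E1]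
  have hSa : ∑ x : Fin l, c (Sum.inl (Sum.inr x)) = c1 := by
    simp [ha]
  have hb : ∀ j, c (Sum.inr (Sum.inr j)) = -(2 * c1) := by
    intro j
    have h3 := E3 j
    rw [hSa] at h3
    linarith
  have hSb : ∑ x : Fin l, c (Sum.inr (Sum.inr x)) = (l : ℝ) * -(2 * c1) := by
    simp [hb, Finset.sum_const, Finset.card_univ, mul_comm]
  have hSb' : ∑ x : Fin l, (if z = x then (0:ℝ) else c (Sum.inr (Sum.inr x)))
      = (l : ℝ) * -(2 * c1) + 2 * c1 := by
    have h : ∀ x : Fin l, (if z = x then (0:ℝ) else c (Sum.inr (Sum.inr x)))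
        = c (Sum.inr (Sum.inr x)) - (if z = x then c (Sum.inr (Sum.inr x)) else 0) := by
      intro x; split <;> ring
    rw [Finset.sum_congr rfl (fun x _ => h x), Finset.sum_sub_distrib, hSb,
      Finset.sum_ite_eq, if_pos (Finset.mem_univ z), hb]
    ring
  rw [hSb] at E1
  rw [hSa, hSb'] at E4
  have hc1z : c1 = 0 := by linarith
  intro k
  rcases k with (u | j) | (u | j)
  · cases u; exact hc1z
  · rw [ha, hc1z]; simp
  · cases u; rw [hc1z] at E1; simpa using E1
  · rw [hb, hc1z]; ring

lemma cols_mem (l : ℕ) (hl : 0 < l) (y : (Fin l ⊕ Fin l) ⊕ Finset (Fin l)) :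
    (fun x => if (DGraph l).Adj x y then (0:ℝ) else 1) ∈
      Submodule.span ℝ (Set.range (colfun l hl)) := by
  have mem : ∀ k, colfun l hl k ∈ Submodule.span ℝ (Set.range (colfun l hl)) :=
    fun k => Submodule.subset_span ⟨k, rfl⟩
  rcases y with (j | j) | S
  · have heq : (fun x => if (DGraph l).Adj x (Sum.inl (Sum.inl j)) then (0:ℝ) else 1) =
        colfun l hl (Sum.inl (Sum.inl ())) + colfun l hl (Sum.inl (Sum.inr ⟨0, hl⟩))
          - colfun l hl (Sum.inl (Sum.inr j)) := by
      funext x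
      rcases x with a | T
      · simp [colfun, gmap]
      · simp only [colfun, gmap, Pi.add_apply, Pi.sub_apply, dg_si, dg_sj, not_not]
        by_cases h1 : (⟨0, hl⟩ : Fin l) ∈ T <;> by_cases h2 : j ∈ T <;> simp [h1, h2]
    rw [heq]
    exact Submodule.sub_mem _ (Submodule.add_mem _ (mem _) (mem _)) (mem _)
  · exact mem (Sum.inl (Sum.inr j))
  · have heq : (fun x => if (DGraph l).Adj x (Sum.inr S) then (0:ℝ) else 1) =
        (1 - (S.card : ℝ)) • colfun l hl (Sum.inr (Sum.inl ()))
          + ∑ i ∈ S, colfun l hl (Sum.inr (Sum.inr i)) := by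
      funext x
      rcases x with (j | j) | T
      · simp only [colfun, gmap, Pi.add_apply, Pi.smul_apply, Finset.sum_apply, dg_is,
          Finset.notMem_empty, if_false, Finset.mem_singleton, smul_eq_mul, mul_one]
        have hsum : ∑ i ∈ S, (if j = i then (0:ℝ) else 1)
            = (S.card : ℝ) - (if j ∈ S then 1 else 0) := by
          have h : ∀ i ∈ S, (if j = i then (0:ℝ) else 1)
              = 1 - (if j = i then 1 else 0) := by intro i _; split <;> ring
          rw [Finset.sum_congr rfl h, Finset.sum_sub_distrib, Finset.sum_const,
            Finset.sum_ite_eq]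
          simp
        rw [hsum]
        by_cases h : j ∈ S <;> simp [h]
      · simp only [colfun, gmap, Pi.add_apply, Pi.smul_apply, Finset.sum_apply, dg_js,
          Finset.notMem_empty, not_false_iff, if_true, Finset.mem_singleton, smul_eq_mul,
          mul_zero, zero_add, not_not]
        have hsum : ∑ i ∈ S, (if j ∈ ({i} : Finset (Fin l)) then (1:ℝ) else 0)
            = if j ∈ S then 1 else 0 := by
          simp only [Finset.mem_singleton]
          rw [Finset.sum_ite_eq]
        by_cases h : j ∈ S <;> simp [h]
      · simp [colfun, gmap, mul_one]
    rw [heq]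
    exact Submodule.add_mem _ (Submodule.smul_mem _ _ (mem _))
      (Submodule.sum_mem _ (fun i _ => mem _))

end Aux

open Matrix

open scoped Classical in
theorem DGraph_compl_coreduced_cobipartite_card_corank (l : ℕ) (hl : 1 ≤ l) :
    (∀ u v, (DGraph l)ᶜ.neighborSet u ∪ {u} = (DGraph l)ᶜ.neighborSet v ∪ {v} →
      u = v) ∧
    ((DGraph l)ᶜ)ᶜ.Colorable 2 ∧
    Fintype.card ((Fin l ⊕ Fin l) ⊕ Finset (Fin l)) = 2 ^ l + 2 * l ∧
    ((DGraph l)ᶜ.adjMatrix ℝ + 1).rank = 2 * l + 2 := by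
  refine ⟨?_, ?_, ?_, ?_⟩
  · -- coreduced
    intro u v h
    by_contra hne
    have h' : ∀ w, (w = u ∨ (¬u = w ∧ ¬(DGraph l).Adj u w)) ↔
        (w = v ∨ (¬v = w ∧ ¬(DGraph l).Adj v w)) := by
      intro w
      have := Set.ext_iff.mp h w
      simpa [SimpleGraph.mem_neighborSet, SimpleGraph.compl_adj] using this
    have nadj : ¬ (DGraph l).Adj u v := by
      have hv := (h' v).mpr (Or.inl rfl)
      rcases hv with heq | ⟨-, hn⟩
      · exact absurd heq.symm hne
      · exact hn
    have key : ∀ w, w ≠ u → w ≠ v → ((DGraph l).Adj u w ↔ (DGraph l).Adj v w) := by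
      intro w hwu hwv
      have hw := h' w
      simp only [hwu, hwv, Ne.symm hwu, Ne.symm hwv, false_or, not_false_iff, true_and] at hw
      exact not_iff_not.mp hw
    rcases u with (i | i) | S <;> rcases v with (j | j) | T
    · have hij : i ≠ j := fun e => hne (by rw [e])
      have hk := key (Sum.inr {i}) (by simp) (by simp)
      simp [hij.symm] at hk
    · have hk := key (Sum.inr Finset.univ) (by simp) (by simp)
      simp at hk
    · by_cases hiT : i ∈ T
      · exact nadj (by simp [hiT])
      · have hk := key (Sum.inl (Sum.inr i)) (by simp) (by simp)
        simp [hiT] at hk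
    · have hk := key (Sum.inr Finset.univ) (by simp) (by simp)
      simp at hk
    · have hij : i ≠ j := fun e => hne (by rw [e])
      have hk := key (Sum.inr {i}) (by simp) (by simp)
      simp [hij, hij.symm] at hk
    · by_cases hiT : i ∈ T
      · have hk := key (Sum.inl (Sum.inl i)) (by simp) (by simp)
        simp [hiT] at hk
      · exact nadj (by simp [hiT])
    · by_cases hjS : j ∈ S
      · exact nadj (by simp [hjS])
      · have hk := key (Sum.inl (Sum.inr j)) (by simp) (by simp)
        simp [hjS] at hk
    · by_cases hjS : j ∈ S
      · have hk := key (Sum.inl (Sum.inl j)) (by simp) (by simp)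
        simp [hjS] at hk
      · exact nadj (by simp [hjS])
    · have hST : S ≠ T := fun e => hne (by rw [e])
      obtain ⟨a, ha⟩ : ∃ a, ¬ (a ∈ S ↔ a ∈ T) := by
        by_contra hcon
        push_neg at hcon
        exact hST (Finset.ext fun a => (hcon a))
      have hk := key (Sum.inl (Sum.inl a)) (by simp) (by simp)
      simp only [dg_si] at hk
      exact ha hk
  · -- cobipartite
    rw [compl_compl]
    refine ⟨SimpleGraph.Coloring.mk (Sum.elim (fun _ => 0) (fun _ => 1)) ?_⟩
    rintro x y (⟨i, S, rfl, rfl, -⟩ | ⟨i, S, rfl, rfl, -⟩ |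
      ⟨j, S, rfl, rfl, -⟩ | ⟨j, S, rfl, rfl, -⟩) <;> simp
  · -- cardinality
    simp only [Fintype.card_sum, Fintype.card_fin, Fintype.card_finset, Fintype.card_fin]
    omega
  · -- rank
    have hl' : 0 < l := hl
    have hT : ∀ y, ((DGraph l)ᶜ.adjMatrix ℝ + 1)ᵀ y
        = fun x => if (DGraph l).Adj x y then (0:ℝ) else 1 :=
      fun y => funext fun x => dg_entry x y
    have hspan : Submodule.span ℝ (Set.range ((DGraph l)ᶜ.adjMatrix ℝ + 1)ᵀ)
        = Submodule.span ℝ (Set.range (colfun l hl')) := by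
      apply le_antisymm
      · rw [Submodule.span_le]
        rintro _ ⟨y, rfl⟩
        rw [hT y]
        exact cols_mem l hl' y
      · rw [Submodule.span_le]
        rintro _ ⟨k, rfl⟩
        have hk : colfun l hl' k = ((DGraph l)ᶜ.adjMatrix ℝ + 1)ᵀ (gmap l hl' k) := by
          rw [hT]; rfl
        rw [hk]
        exact Submodule.subset_span ⟨_, rfl⟩
    rw [Matrix.rank_eq_finrank_span_cols,
      show Set.range ((DGraph l)ᶜ.adjMatrix ℝ + 1).col
        = Set.range ((DGraph l)ᶜ.adjMatrix ℝ + 1)ᵀ from rfl, hspan,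
      finrank_span_eq_card (colfun_li l hl')]
    simp only [Fintype.card_sum, Fintype.card_fin, Fintype.card_unit]
    omega
end

section
/- For ℓ ≥ 1, let ℬ_ℓ be the bipartite graph with parts {1,…,ℓ} and 𝒫({1,…,ℓ}), where i is adjacent to S if and only if i ∈ S. Then the complement of ℬ_ℓ is a coreduced cobipartite graph of order 2^ℓ + ℓ with rank(A + I) = 2ℓ + 1 over the reals, where A is its adjacency matrix. -/
/-- The bipartite graph `ℬ_ℓ` with parts `{1,…,ℓ}` and `𝒫({1,…,ℓ})`, where `i`
is adjacent to `S` if and only if `i ∈ S`. -/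
def BGraph (l : ℕ) : SimpleGraph (Fin l ⊕ Finset (Fin l)) where
  Adj x y :=
    (∃ (i : Fin l) (S : Finset (Fin l)), x = Sum.inl i ∧ y = Sum.inr S ∧ i ∈ S) ∨
    (∃ (i : Fin l) (S : Finset (Fin l)), x = Sum.inr S ∧ y = Sum.inl i ∧ i ∈ S)
  symm := by
    constructor
    rintro x y (⟨i, S, rfl, rfl, h⟩ | ⟨i, S, rfl, rfl, h⟩)
    · exact Or.inr ⟨i, S, rfl, rfl, h⟩
    · exact Or.inl ⟨i, S, rfl, rfl, h⟩
  loopless := by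
    constructor
    rintro x (⟨i, S, rfl, h, -⟩ | ⟨i, S, rfl, h, -⟩) <;> simp at h

namespace BGraphAux

open scoped Classical

variable (l : ℕ)

/-- Abbreviation for the vertex type. -/
abbrev α (l : ℕ) := Fin l ⊕ Finset (Fin l)

/-- The matrix `A + I` for the complement of `BGraph l`. -/
noncomputable def M : Matrix (α l) (α l) ℝ := (BGraph l)ᶜ.adjMatrix ℝ + 1

lemma adj_ll (i j : Fin l) : ¬ (BGraph l).Adj (Sum.inl i) (Sum.inl j) := by
  rintro (⟨a, S, h, h', -⟩ | ⟨a, S, h, h', -⟩) <;> simp_all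

lemma adj_rr (S T : Finset (Fin l)) : ¬ (BGraph l).Adj (Sum.inr S) (Sum.inr T) := by
  rintro (⟨a, S', h, h', -⟩ | ⟨a, S', h, h', -⟩) <;> simp_all

lemma adj_lr (i : Fin l) (S : Finset (Fin l)) :
    (BGraph l).Adj (Sum.inl i) (Sum.inr S) ↔ i ∈ S := by
  constructor
  · rintro (⟨a, S', h, h', hm⟩ | ⟨a, S', h, h', hm⟩) <;> simp_all
  · exact fun h => Or.inl ⟨i, S, rfl, rfl, h⟩

lemma adj_rl (i : Fin l) (S : Finset (Fin l)) :
    (BGraph l).Adj (Sum.inr S) (Sum.inl i) ↔ i ∈ S := by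
  rw [SimpleGraph.adj_comm]; exact adj_lr l i S

lemma M_ll (i j : Fin l) : M l (Sum.inl i) (Sum.inl j) = 1 := by
  by_cases h : i = j <;>
    simp [M, Matrix.add_apply, Matrix.one_apply, SimpleGraph.compl_adj, adj_ll, h]

lemma M_rr (S T : Finset (Fin l)) : M l (Sum.inr S) (Sum.inr T) = 1 := by
  by_cases h : S = T <;>
    simp [M, Matrix.add_apply, Matrix.one_apply, SimpleGraph.compl_adj, adj_rr, h]

lemma M_lr (i : Fin l) (S : Finset (Fin l)) :
    M l (Sum.inl i) (Sum.inr S) = if i ∈ S then 0 else 1 := by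
  by_cases h : i ∈ S <;>
    simp [M, Matrix.add_apply, Matrix.one_apply, SimpleGraph.compl_adj, adj_lr, h]

lemma M_rl (i : Fin l) (S : Finset (Fin l)) :
    M l (Sum.inr S) (Sum.inl i) = if i ∈ S then 0 else 1 := by
  by_cases h : i ∈ S <;>
    simp [M, Matrix.add_apply, Matrix.one_apply, SimpleGraph.compl_adj, adj_rl, h]

open Matrix in
lemma M_symm : (M l)ᵀ = M l := by
  ext x y
  cases x <;> cases y <;>
    simp [Matrix.transpose_apply, M_ll, M_rr, M_lr, M_rl]

/-- Standard basis vector supported on `Sum.inl j`. -/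
noncomputable def u (j : Fin l) : α l → ℝ := fun x => if x = Sum.inl j then 1 else 0

/-- Indicator of membership of `i`, supported on the right part. -/
noncomputable def w (i : Fin l) : α l → ℝ :=
  Sum.elim 0 (fun S => if i ∈ S then 1 else 0)

/-- All-ones on the right part. -/
noncomputable def f : α l → ℝ := Sum.elim 0 1

/-- The spanning family of size `2l + 1`. -/
noncomputable def g : Fin l ⊕ (Fin l ⊕ Unit) → (α l → ℝ) :=
  Sum.elim (u l) (Sum.elim (w l) (fun _ => f l))

lemma row_inl (i : Fin l) :
    M l (Sum.inl i) = (∑ j, u l j) + f l - w l i := by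
  funext x
  cases x with
  | inl k =>
      simp [M_ll, u, w, f, Finset.sum_apply, Finset.sum_ite_eq]
  | inr S =>
      by_cases h : i ∈ S <;>
        simp [M_lr, u, w, f, Finset.sum_apply, h]

lemma row_inr (S : Finset (Fin l)) :
    M l (Sum.inr S) = (∑ j ∈ Sᶜ, u l j) + f l := by
  funext x
  cases x with
  | inl k =>
      by_cases h : k ∈ S <;>
        simp [M_rl, u, f, Finset.sum_apply, Finset.sum_ite_eq, h]
  | inr T =>
      simp [M_rr, u, f, Finset.sum_apply]

lemma f_eq : f l = M l (Sum.inr Finset.univ) := by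
  funext x
  cases x with
  | inl k => simp [M_rl, f]
  | inr T => simp [M_rr, f]

lemma u_eq (j : Fin l) : u l j = M l (Sum.inr ∅) - M l (Sum.inr {j}) := by
  funext x
  cases x with
  | inl k =>
      by_cases h : k = j <;>
        simp [M_rl, u, h, Finset.mem_singleton]
  | inr T =>
      simp [M_rr, u]

lemma key : Submodule.span ℝ (Set.range (M l)) = Submodule.span ℝ (Set.range (g l)) := by
  apply le_antisymm
  · rw [Submodule.span_le]
    rintro _ ⟨y, rfl⟩
    cases y with
    | inl i =>
        rw [row_inl]
        refine sub_mem (add_mem (Submodule.sum_mem _ fun j _ => ?_) ?_) ?_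
        · exact Submodule.subset_span ⟨Sum.inl j, rfl⟩
        · exact Submodule.subset_span ⟨Sum.inr (Sum.inr ()), rfl⟩
        · exact Submodule.subset_span ⟨Sum.inr (Sum.inl i), rfl⟩
    | inr S =>
        rw [row_inr]
        refine add_mem (Submodule.sum_mem _ fun j _ => ?_) ?_
        · exact Submodule.subset_span ⟨Sum.inl j, rfl⟩
        · exact Submodule.subset_span ⟨Sum.inr (Sum.inr ()), rfl⟩
  · rw [Submodule.span_le]
    have hu : ∀ j, u l j ∈ Submodule.span ℝ (Set.range (M l)) := fun j => by
      rw [u_eq]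
      exact sub_mem (Submodule.subset_span ⟨_, rfl⟩) (Submodule.subset_span ⟨_, rfl⟩)
    have hf : f l ∈ Submodule.span ℝ (Set.range (M l)) := by
      rw [f_eq]
      exact Submodule.subset_span ⟨_, rfl⟩
    rintro _ ⟨k, rfl⟩
    rcases k with j | k
    · exact hu j
    rcases k with i | _
    · have : g l (Sum.inr (Sum.inl i)) = (∑ j, u l j) + f l - M l (Sum.inl i) := by
        show w l i = _
        rw [row_inl]; ring
      rw [this]
      exact sub_mem (add_mem (Submodule.sum_mem _ fun j _ => hu j) hf)
        (Submodule.subset_span ⟨_, rfl⟩)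
    · exact hf

lemma gli : LinearIndependent ℝ (g l) := by
  rw [Fintype.linearIndependent_iff]
  intro c h
  have hval : ∀ x, (∑ k, c k * g l k x) = 0 := by
    intro x
    have := congrFun h x
    simpa [Finset.sum_apply] using this
  have hf0 : c (Sum.inr (Sum.inr ())) = 0 := by
    have := hval (Sum.inr ∅)
    simpa [g, u, w, f, Fintype.sum_sum_type] using this
  have hu0 : ∀ j, c (Sum.inl j) = 0 := by
    intro j
    have := hval (Sum.inl j)
    simpa [g, u, w, f, Fintype.sum_sum_type, Finset.sum_ite_eq] using this
  have hw0 : ∀ i, c (Sum.inr (Sum.inl i)) = 0 := by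
    intro i
    have := hval (Sum.inr {i})
    simpa [g, u, w, f, Fintype.sum_sum_type, Finset.sum_ite_eq, hf0,
      Finset.mem_singleton] using this
  rintro (j | i | ⟨⟩)
  · exact hu0 j
  · exact hw0 i
  · exact hf0

lemma rank_M : (M l).rank = 2 * l + 1 := by
  rw [Matrix.rank_eq_finrank_span_cols, Matrix.col, M_symm, key, finrank_span_eq_card (gli l)]
  simp [Fintype.card_sum]
  omega

end BGraphAux

open scoped Classical in
theorem BGraph_compl_coreduced_cobipartite_card_corank (l : ℕ) (hl : 1 ≤ l) :
    (∀ u v, (BGraph l)ᶜ.neighborSet u ∪ {u} = (BGraph l)ᶜ.neighborSet v ∪ {v} →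
      u = v) ∧
    ((BGraph l)ᶜ)ᶜ.Colorable 2 ∧
    Fintype.card (Fin l ⊕ Finset (Fin l)) = 2 ^ l + l ∧
    ((BGraph l)ᶜ.adjMatrix ℝ + 1).rank = 2 * l + 1 := by
  refine ⟨?_, ?_, ?_, ?_⟩
  · -- coreduced
    intro u v h
    have hmem : ∀ x, x ∈ (BGraph l)ᶜ.neighborSet u ∪ {u} ↔
        x ∈ (BGraph l)ᶜ.neighborSet v ∪ {v} := fun x => by rw [h]
    simp only [Set.mem_union, SimpleGraph.mem_neighborSet, Set.mem_singleton_iff,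
      SimpleGraph.compl_adj] at hmem
    by_contra hne
    rcases u with i | S <;> rcases v with j | T
    · -- inl i, inl j with i ≠ j; test x = inr {j}
      have hij : i ≠ j := fun h => hne (by rw [h])
      have hx := (hmem (Sum.inr ({j} : Finset (Fin l)))).mp
        (Or.inl ⟨by simp, by rw [BGraphAux.adj_lr]; simp [hij]⟩)
      rcases hx with ⟨-, hadj⟩ | hx
      · exact hadj ((BGraphAux.adj_lr l j {j}).mpr (Finset.mem_singleton_self j))
      · simp at hx
    · -- inl i, inr T; test x = inr (insert i T)
      have hx := (hmem (Sum.inr (insert i T))).mpr ?_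
      · rcases hx with ⟨-, hadj⟩ | hx
        · exact hadj ((BGraphAux.adj_lr l i _).mpr (Finset.mem_insert_self i T))
        · simp at hx
      · by_cases hiT : i ∈ T
        · exact Or.inr (by rw [Finset.insert_eq_self.mpr hiT])
        · refine Or.inl ⟨?_, BGraphAux.adj_rr l T _⟩
          simp only [ne_eq, Sum.inr.injEq]
          exact fun h => hiT (h ▸ Finset.mem_insert_self i T)
    · -- inr S, inl j; test x = inr (insert j S)
      have hx := (hmem (Sum.inr (insert j S))).mp ?_
      · rcases hx with ⟨-, hadj⟩ | hx
        · exact hadj ((BGraphAux.adj_lr l j _).mpr (Finset.mem_insert_self j S))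
        · simp at hx
      · by_cases hjS : j ∈ S
        · exact Or.inr (by rw [Finset.insert_eq_self.mpr hjS])
        · refine Or.inl ⟨?_, BGraphAux.adj_rr l S _⟩
          simp only [ne_eq, Sum.inr.injEq]
          exact fun h => hjS (h ▸ Finset.mem_insert_self j S)
    · -- inr S, inr T with S ≠ T
      have hST : S ≠ T := fun h => hne (by rw [h])
      obtain ⟨i, hi⟩ : ∃ i, ¬(i ∈ S ↔ i ∈ T) := by
        by_contra hall
        push_neg at hall
        exact hST (Finset.ext hall)
      have := hmem (Sum.inl i)
      simp only [BGraphAux.adj_rl] at this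
      simp at this
      tauto
  · -- cobipartite
    rw [compl_compl]
    exact ⟨⟨Sum.elim (fun _ => 0) (fun _ => 1), by
      rintro x y (⟨i, S, rfl, rfl, -⟩ | ⟨i, S, rfl, rfl, -⟩) <;> simp⟩⟩
  · simp [Fintype.card_sum, add_comm]
  · exact BGraphAux.rank_M l
end
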